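/- arXiv:1308.5206 — 9 statements merged into one kernel-verified Lean document; each statement's English description precedes it below -/
import Mathlib

section
/- Let X be a finite set and let T be a set of cyclic triples [a,b,c] of distinct elements of X (where [a,b,c]=[b,c,a]=[c,a,b]). Then there exists a cyclic ordering C of X such that T is exactly the set of cyclic triples induced by C if and only if (1) for all distinct a,b,c, exactly one of [a,b,c] and [c,b,a] lies in T, and (2) if [a,b,c] ∈ T and [a,c,d] ∈ T then [a,b,d] ∈ T. -/
open Finset

/-- `u^C` for the cyclic ordering of `X` given by a bijection `C : X ≃ ZMod |X|`
(cyclic orderings are considered up to rotation; this encoding is rotation-invariant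
since only differences of positions are used).
`uC C x y z = 1` iff `x,y,z` are distinct and appear in this clockwise cyclic order in `C`. -/
def uC {X : Type*} [Fintype X] [DecidableEq X] (C : X ≃ ZMod (Fintype.card X))
    (x y z : X) : ZMod 2 :=
  if x ≠ y ∧ y ≠ z ∧ x ≠ z ∧ (C y - C x).val < (C z - C x).val then 1 else 0

/-- A vector `u ∈ GF(2)^{X³}` is cyclic if it is `u^C` for some cyclic ordering `C` of `X`. -/
def IsCyclicVec {X : Type*} [Fintype X] [DecidableEq X] (u : X → X → X → ZMod 2) : Prop :=
  ∃ C : X ≃ ZMod (Fintype.card X), u = uC C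

/-- Membership in the affine space `𝒰^X ⊆ GF(2)^{X³}`, given by the four (affine) linear
conditions (0)–(3). -/
def memU {X : Type*} (u : X → X → X → ZMod 2) : Prop :=
  (∀ x y, u x x y = 0) ∧
  (∀ x y z, u x y z = u y z x) ∧
  (∀ x y z, x ≠ y → y ≠ z → x ≠ z → u x y z + u y x z = 1) ∧
  (∀ t x y z, t ≠ x → t ≠ y → t ≠ z → x ≠ y → x ≠ z → y ≠ z →
    u t x y + u t x z + u t y z + u x y z = 0)

/-- The all-distinct indicator vector `1_X`. -/
def oneX {X : Type*} [DecidableEq X] (x y z : X) : ZMod 2 :=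
  if x ≠ y ∧ y ≠ z ∧ x ≠ z then 1 else 0

/-- `v^Y(x,y,z) = 1` iff `x,y,z` are distinct and `|Y ∩ {x,y,z}| ≥ 2`. -/
def vY {X : Type*} [DecidableEq X] (Y : Finset X) (x y z : X) : ZMod 2 :=
  if (x ≠ y ∧ y ≠ z ∧ x ≠ z) ∧
      ((x ∈ Y ∧ y ∈ Y) ∨ (x ∈ Y ∧ z ∈ Y) ∨ (y ∈ Y ∧ z ∈ Y)) then 1 else 0

/- ----------------- auxiliary lemmas ----------------- -/

lemma uC_eq_one_iff {X : Type*} [Fintype X] [DecidableEq X] (C : X ≃ ZMod (Fintype.card X))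
    (x y z : X) : uC C x y z = 1 ↔
      x ≠ y ∧ y ≠ z ∧ x ≠ z ∧ (C y - C x).val < (C z - C x).val := by
  unfold uC
  by_cases h : x ≠ y ∧ y ≠ z ∧ x ≠ z ∧ (C y - C x).val < (C z - C x).val
  · simp [h]
  · simp only [h, if_false, iff_false]
    exact fun h0 => absurd h0.symm one_ne_zero

lemma val_sub_pos {n : ℕ} [NeZero n] {a b : ZMod n} (h : a ≠ b) : 0 < (b - a).val := by
  rcases Nat.eq_zero_or_pos (b - a).val with h0 | h0
  · exact absurd (sub_eq_zero.mp ((ZMod.val_eq_zero _).mp h0)) h.symm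
  · exact h0

lemma val_sub_rev {n : ℕ} [NeZero n] {a b : ZMod n} (h : a ≠ b) :
    (b - a).val = n - (a - b).val := by
  rw [show b - a = -(a - b) by ring, ZMod.neg_val, if_neg (sub_ne_zero.mpr h)]

lemma key_sum {n : ℕ} [NeZero n] {i j k : ZMod n} (hij : i ≠ j) (hjk : j ≠ k) (hik : i ≠ k) :
    ((j - i).val < (k - i).val ↔ (j - i).val + (k - j).val + (i - k).val = n) ∧
      ((j - i).val + (k - j).val + (i - k).val = n ∨
        (j - i).val + (k - j).val + (i - k).val = 2 * n) := by
  have hx0 : 0 < (j - i).val := val_sub_pos hij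
  have hy0 : 0 < (k - j).val := val_sub_pos hjk
  have hz0 : 0 < (i - k).val := val_sub_pos hik.symm
  have hx1 : (j - i).val < n := ZMod.val_lt _
  have hy1 : (k - j).val < n := ZMod.val_lt _
  have hz1 : (i - k).val < n := ZMod.val_lt _
  have hs1 : (k - i).val < n := ZMod.val_lt _
  have hs0 : 0 < (k - i).val := val_sub_pos hik
  have hz : (i - k).val = n - (k - i).val := val_sub_rev hik.symm
  have hs : (k - i).val = ((j - i).val + (k - j).val) % n := by
    rw [show k - i = (j - i) + (k - j) by ring, ZMod.val_add]
  rcases lt_or_ge ((j - i).val + (k - j).val) n with h | h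
  · rw [Nat.mod_eq_of_lt h] at hs
    omega
  · rw [Nat.mod_eq_sub_mod h, Nat.mod_eq_of_lt (by omega)] at hs
    omega

/-- The relation "between `a0` (taken as origin) `x` comes before `y`". -/
def cr {X : Type*} (T : Set (X × X × X)) (a0 : X) (x y : X) : Prop :=
  (x = a0 ∧ y ≠ a0) ∨ (x ≠ a0 ∧ y ≠ a0 ∧ (a0, x, y) ∈ T)

/-- Characterization of sets of cyclic triples induced by a cyclic ordering
(Theorem 1 of the paper). `T` is a rotation-closed set of triples of distinct elements. -/
theorem stmt0 {X : Type*} [Fintype X] [DecidableEq X] [Nonempty X]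
    (T : Set (X × X × X))
    (hdist : ∀ a b c : X, (a, b, c) ∈ T → a ≠ b ∧ b ≠ c ∧ a ≠ c)
    (hrot : ∀ a b c : X, (a, b, c) ∈ T ↔ (b, c, a) ∈ T) :
    (∃ C : X ≃ ZMod (Fintype.card X), ∀ a b c : X, (a, b, c) ∈ T ↔ uC C a b c = 1) ↔
      ((∀ a b c : X, a ≠ b → b ≠ c → a ≠ c → ((a, b, c) ∈ T ↔ (c, b, a) ∉ T)) ∧
        (∀ a b c d : X, (a, b, c) ∈ T → (a, c, d) ∈ T → (a, b, d) ∈ T)) := by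
  classical
  haveI : NeZero (Fintype.card X) := ⟨Fintype.card_ne_zero⟩
  constructor
  · rintro ⟨C, hC⟩
    constructor
    · intro a b c hab hbc hac
      rw [hC a b c, hC c b a, uC_eq_one_iff, uC_eq_one_iff]
      have hij : C a ≠ C b := fun h => hab (C.injective h)
      have hjk : C b ≠ C c := fun h => hbc (C.injective h)
      have hik : C a ≠ C c := fun h => hac (C.injective h)
      obtain ⟨k1, k2⟩ := key_sum hij hjk hik
      obtain ⟨k3, -⟩ := key_sum hjk.symm hij.symm hik.symm
      have e1 : (C b - C c).val = Fintype.card X - (C c - C b).val := val_sub_rev hjk.symm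
      have e2 : (C a - C b).val = Fintype.card X - (C b - C a).val := val_sub_rev hij.symm
      have e3 : (C c - C a).val = Fintype.card X - (C a - C c).val := val_sub_rev hik
      have b1 : 0 < (C b - C a).val := val_sub_pos hij
      have b2 : 0 < (C c - C b).val := val_sub_pos hjk
      have b3 : 0 < (C a - C c).val := val_sub_pos hik.symm
      have c1 : (C b - C a).val < Fintype.card X := ZMod.val_lt _
      have c2 : (C c - C b).val < Fintype.card X := ZMod.val_lt _
      have c3 : (C a - C c).val < Fintype.card X := ZMod.val_lt _
      constructor
      · rintro ⟨-, -, -, hlt⟩ ⟨-, -, -, hlt'⟩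
        rw [k1] at hlt
        rw [k3, e1, e2, e3] at hlt'
        omega
      · intro hne
        refine ⟨hab, hbc, hac, ?_⟩
        rw [k1]
        rcases k2 with h | h
        · exact h
        · exact absurd ⟨hbc.symm, hab.symm, hac.symm, by rw [k3, e1, e2, e3]; omega⟩ hne
    · intro a b c d h1 h2
      rw [hC, uC_eq_one_iff] at h1 h2
      rw [hC, uC_eq_one_iff]
      obtain ⟨hab, hbc, hac, l1⟩ := h1
      obtain ⟨hac', hcd, had, l2⟩ := h2
      refine ⟨hab, fun hbd => ?_, had, lt_trans l1 l2⟩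
      subst hbd
      exact lt_irrefl _ (lt_trans l1 l2)
  · rintro ⟨hone, htrans2⟩
    obtain ⟨a0⟩ : Nonempty X := inferInstance
    have hrot2 : ∀ a b c : X, (a, b, c) ∈ T → (c, a, b) ∈ T :=
      fun a b c h => (hrot b c a).mp ((hrot a b c).mp h)
    -- `cr T a0` is a strict total order
    have hirr : ∀ x, ¬ cr T a0 x x := by
      rintro x (⟨h1, h2⟩ | ⟨h1, h2, h3⟩)
      · exact h2 h1
      · exact (hdist _ _ _ h3).2.1 rfl
    have htr : ∀ x y z, cr T a0 x y → cr T a0 y z → cr T a0 x z := by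
      rintro x y z (⟨rfl, hy⟩ | ⟨hx, hy, hxy⟩) (⟨hy', hz⟩ | ⟨hy', hz, hyz⟩)
      · exact absurd hy' hy
      · exact Or.inl ⟨rfl, hz⟩
      · exact absurd hy' hy
      · exact Or.inr ⟨hx, hz, htrans2 a0 x y z hxy hyz⟩
    have htri : ∀ x y : X, cr T a0 x y ∨ x = y ∨ cr T a0 y x := by
      intro x y
      by_cases hxy : x = y
      · exact Or.inr (Or.inl hxy)
      by_cases hx : x = a0
      · subst hx; exact Or.inl (Or.inl ⟨rfl, Ne.symm hxy⟩)
      by_cases hy : y = a0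
      · subst hy; exact Or.inr (Or.inr (Or.inl ⟨rfl, hx⟩))
      by_cases hT : (a0, x, y) ∈ T
      · exact Or.inl (Or.inr ⟨hx, hy, hT⟩)
      · refine Or.inr (Or.inr (Or.inr ⟨hy, hx, ?_⟩))
        have h2 : (y, x, a0) ∈ T :=
          not_not.mp (fun hn => hT ((hone a0 x y (Ne.symm hx) hxy (Ne.symm hy)).mpr hn))
        exact hrot2 y x a0 h2
    letI : DecidableRel (cr T a0) := fun _ _ => Classical.dec _
    haveI hSTO : IsStrictTotalOrder X (cr T a0) :=
      { trichotomous := fun a b h1 h2 => (htri a b).elim (fun h => absurd h h1) (fun h => h.elim id (fun h => absurd h h2)), irrefl := hirr, trans := htr }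
    letI : LinearOrder X := linearOrderOfSTO (cr T a0)
    have hlt : ∀ x y : X, x < y ↔ cr T a0 x y := fun _ _ => Iff.rfl
    let e := monoEquivOfFin X rfl
    -- the equivalence Fin n ≃ ZMod n
    let z : Fin (Fintype.card X) ≃ ZMod (Fintype.card X) :=
      { toFun := fun i => (i.val : ZMod (Fintype.card X))
        invFun := fun a => ⟨a.val, a.val_lt⟩
        left_inv := fun i => by
          ext
          simp [ZMod.val_natCast_of_lt i.isLt]
        right_inv := fun a => by simp }
    let C : X ≃ ZMod (Fintype.card X) := e.symm.toEquiv.trans z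
    have hCx : ∀ x : X, C x = (((e.symm x : Fin (Fintype.card X)) : ℕ) : ZMod (Fintype.card X)) :=
      fun _ => rfl
    have hP : ∀ x y : X, ((e.symm x : Fin (Fintype.card X)) : ℕ) < (e.symm y : Fin (Fintype.card X)) ↔
        cr T a0 x y := by
      intro x y
      rw [← Fin.lt_def, OrderIso.lt_iff_lt]
      exact hlt x y
    have hPinj : ∀ x y : X, x ≠ y →
        ((e.symm x : Fin (Fintype.card X)) : ℕ) ≠ (e.symm y : Fin (Fintype.card X)) := by
      intro x y h he
      exact h (e.symm.injective (Fin.ext he))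
    -- increasing chains are in T
    have hchain : ∀ a b c : X, cr T a0 a b → cr T a0 b c → (a, b, c) ∈ T := by
      rintro a b c (⟨rfl, hb⟩ | ⟨ha, hb, hT1⟩) (⟨hb', hc⟩ | ⟨hb', hc, hT2⟩)
      · exact absurd hb' hb
      · exact hT2
      · exact absurd hb' hb
      · have h1 : (b, c, a0) ∈ T := (hrot a0 b c).mp hT2
        have h2 : (b, a0, a) ∈ T := hrot2 a0 a b hT1
        have h3 : (b, c, a) ∈ T := htrans2 b c a0 a h1 h2
        exact hrot2 b c a h3
    -- arithmetic lemma on Fin/ZMod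
    have hsub : ∀ p q : Fin (Fintype.card X),
        (((q : ℕ) : ZMod (Fintype.card X)) - ((p : ℕ) : ZMod (Fintype.card X))).val =
          (Fintype.card X + q - p) % Fintype.card X := by
      intro p q
      have h1 : (p : ℕ) ≤ Fintype.card X + q := le_trans p.isLt.le (Nat.le_add_right _ _)
      have h2 : (((Fintype.card X + q - p : ℕ)) : ZMod (Fintype.card X)) =
          ((q : ℕ) : ZMod (Fintype.card X)) - ((p : ℕ) : ZMod (Fintype.card X)) := by
        rw [Nat.cast_sub h1, Nat.cast_add, ZMod.natCast_self, zero_add]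
      rw [← h2, ZMod.val_natCast]
    have hmod : ∀ p q : ℕ, p < Fintype.card X → q < Fintype.card X → p ≠ q →
        ((Fintype.card X + q - p) % Fintype.card X =
          if p < q then q - p else Fintype.card X + q - p) := by
      intro p q hp hq hpq
      split
      · next h =>
        rw [Nat.mod_eq_sub_mod (by omega),
          show Fintype.card X + q - p - Fintype.card X = q - p by omega,
          Nat.mod_eq_of_lt (by omega)]
      · next h => rw [Nat.mod_eq_of_lt (by omega)]
    have harith : ∀ i j k : Fin (Fintype.card X), (i : ℕ) ≠ j → (j : ℕ) ≠ k → (i : ℕ) ≠ k →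
        ((((j : ℕ) : ZMod (Fintype.card X)) - ((i : ℕ) : ZMod (Fintype.card X))).val <
            (((k : ℕ) : ZMod (Fintype.card X)) - ((i : ℕ) : ZMod (Fintype.card X))).val ↔
          (((i : ℕ) < j ∧ (j : ℕ) < k) ∨ ((j : ℕ) < k ∧ (k : ℕ) < i) ∨
            ((k : ℕ) < i ∧ (i : ℕ) < j))) := by
      intro i j k hij hjk hik
      have hi := i.isLt
      have hj := j.isLt
      have hk := k.isLt
      rw [hsub i j, hsub i k, hmod i j hi hj hij, hmod i k hi hk hik]
      split <;> split <;> omega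
    -- T is characterized by cyclic position order
    have hTcyc : ∀ a b c : X, a ≠ b → b ≠ c → a ≠ c → ((a, b, c) ∈ T ↔
        ((((e.symm a : Fin (Fintype.card X)) : ℕ) < (e.symm b : Fin (Fintype.card X)) ∧
            ((e.symm b : Fin (Fintype.card X)) : ℕ) < (e.symm c : Fin (Fintype.card X))) ∨
          (((e.symm b : Fin (Fintype.card X)) : ℕ) < (e.symm c : Fin (Fintype.card X)) ∧
            ((e.symm c : Fin (Fintype.card X)) : ℕ) < (e.symm a : Fin (Fintype.card X))) ∨
          (((e.symm c : Fin (Fintype.card X)) : ℕ) < (e.symm a : Fin (Fintype.card X)) ∧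
            ((e.symm a : Fin (Fintype.card X)) : ℕ) < (e.symm b : Fin (Fintype.card X))))) := by
      intro a b c hab hbc hac
      have k2 : ∀ x y z : X,
          ((((e.symm x : Fin (Fintype.card X)) : ℕ) < (e.symm y : Fin (Fintype.card X)) ∧
              ((e.symm y : Fin (Fintype.card X)) : ℕ) < (e.symm z : Fin (Fintype.card X))) ∨
            (((e.symm y : Fin (Fintype.card X)) : ℕ) < (e.symm z : Fin (Fintype.card X)) ∧
              ((e.symm z : Fin (Fintype.card X)) : ℕ) < (e.symm x : Fin (Fintype.card X))) ∨
            (((e.symm z : Fin (Fintype.card X)) : ℕ) < (e.symm x : Fin (Fintype.card X)) ∧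
              ((e.symm x : Fin (Fintype.card X)) : ℕ) < (e.symm y : Fin (Fintype.card X))))
          → (x, y, z) ∈ T := by
        rintro x y z (⟨h1, h2⟩ | ⟨h1, h2⟩ | ⟨h1, h2⟩)
        · exact hchain x y z ((hP x y).mp h1) ((hP y z).mp h2)
        · exact hrot2 y z x (hchain y z x ((hP y z).mp h1) ((hP z x).mp h2))
        · exact (hrot z x y).mp (hchain z x y ((hP z x).mp h1) ((hP x y).mp h2))
      constructor
      · intro hT
        by_contra hc
        have d1 := hPinj a b hab
        have d2 := hPinj b c hbc
        have d3 := hPinj a c hac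
        have hacb : (a, c, b) ∈ T := by
          apply k2 a c b
          omega
        exact (hone a b c hab hbc hac).mp hT ((hrot a c b).mp hacb)
      · exact k2 a b c
    refine ⟨C, fun a b c => ?_⟩
    by_cases h : a ≠ b ∧ b ≠ c ∧ a ≠ c
    · obtain ⟨hab, hbc, hac⟩ := h
      rw [uC_eq_one_iff, hTcyc a b c hab hbc hac, hCx a, hCx b, hCx c]
      rw [harith (e.symm a) (e.symm b) (e.symm c) (hPinj a b hab) (hPinj b c hbc)
        (hPinj a c hac)]
      constructor
      · exact fun hcyc => ⟨hab, hbc, hac, hcyc⟩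
      · exact fun ⟨_, _, _, hcyc⟩ => hcyc
    · constructor
      · intro hT
        exact absurd (hdist a b c hT) h
      · intro hu
        obtain ⟨h1, h2, h3, -⟩ := (uC_eq_one_iff C a b c).mp hu
        exact absurd ⟨h1, h2, h3⟩ h
end

section
/- Let X be a finite set with at least 4 elements containing four fixed distinct elements t,x,y,z, and let Z = {t,x,y,z}. The set of vectors in GF(2)^{Z³} of the form u^C for some cyclic ordering C of Z has exactly 6 elements, and it equals exactly the set of vectors u in the 3-dimensional affine space 𝒰^Z (defined by equations (0)-(3) below) that additionally satisfy u(t,x,y)·u(t,y,z) + u(t,x,z)·u(x,y,z) = 0. -/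
open Finset

set_option linter.unusedSectionVars false
set_option linter.unusedVariables false
set_option maxHeartbeats 8000000

section
variable {Z : Type*} [Fintype Z] [DecidableEq Z]


lemma hall_aux {t x y z : Z}
    (hcard : Fintype.card Z = 4)
    (htx : t ≠ x) (hty : t ≠ y) (htz : t ≠ z)
    (hxy : x ≠ y) (hxz : x ≠ z) (hyz : y ≠ z) :
    ∀ a : Z, a = t ∨ a = x ∨ a = y ∨ a = z := by
  intro a
  have h : ({t, x, y, z} : Finset Z) = Finset.univ := by
    apply Finset.eq_univ_of_card
    rw [hcard]
    rw [Finset.card_insert_of_notMem (by simp [htx, hty, htz]),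
        Finset.card_insert_of_notMem (by simp [hxy, hxz]),
        Finset.card_insert_of_notMem (by simp [hyz]),
        Finset.card_singleton]
  have := Finset.mem_univ a
  rw [← h] at this
  simpa using this

lemma castmod (hcard : Fintype.card Z = 4) (m : ℕ) :
    ((m : ZMod (Fintype.card Z))) = ((m % 4 : ℕ) : ZMod (Fintype.card Z)) := by
  have h4 : ((4 : ℕ) : ZMod (Fintype.card Z)) = 0 := by
    rw [← hcard]; exact ZMod.natCast_self _
  have h4' : (4 : ZMod (Fintype.card Z)) = 0 := by exact_mod_cast h4
  conv_lhs => rw [← Nat.mod_add_div m 4]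
  push_cast
  rw [h4']
  ring

lemma valnum (hcard : Fintype.card Z = 4) (k : ℕ) (hk : k < 4) :
    ((k : ZMod (Fintype.card Z))).val = k :=
  ZMod.val_cast_of_lt (by omega)

lemma castne (hcard : Fintype.card Z = 4) {i j : ℕ} (hi : i < 4) (hj : j < 4) (hij : i ≠ j) :
    ((i : ZMod (Fintype.card Z))) ≠ ((j : ZMod (Fintype.card Z))) := by
  intro e
  apply hij
  rw [← valnum hcard i hi, ← valnum hcard j hj, e]

lemma subval (hcard : Fintype.card Z = 4) (i j : ℕ) (hi : i < 4) (hj : j < 4) :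
    (((j : ZMod (Fintype.card Z))) - ((i : ZMod (Fintype.card Z)))).val = (4 + j - i) % 4 := by
  have h4 : ((4 : ℕ) : ZMod (Fintype.card Z)) = 0 := by
    rw [← hcard]; exact ZMod.natCast_self _
  have e : ((j : ZMod (Fintype.card Z))) - i = (((4 + j - i) % 4 : ℕ) : ZMod (Fintype.card Z)) := by
    rw [← castmod hcard]
    have : (((4 + j - i : ℕ)) : ZMod (Fintype.card Z)) = ((4:ℕ) : ZMod (Fintype.card Z)) + j - i := by
      rw [Nat.cast_sub (by omega : i ≤ 4 + j)]
      push_cast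
      norm_cast
    rw [this, h4]; ring
  rw [e, valnum hcard _ (by omega)]

lemma val0 (hcard : Fintype.card Z = 4) : (0 : ZMod (Fintype.card Z)).val = 0 := by
  rw [← Nat.cast_zero]; exact valnum hcard 0 (by norm_num)
lemma val1 (hcard : Fintype.card Z = 4) : (1 : ZMod (Fintype.card Z)).val = 1 := by
  rw [← Nat.cast_one]; exact valnum hcard 1 (by norm_num)
lemma val2 (hcard : Fintype.card Z = 4) : (2 : ZMod (Fintype.card Z)).val = 2 := by
  rw [← Nat.cast_ofNat]; exact valnum hcard 2 (by norm_num)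
lemma val3 (hcard : Fintype.card Z = 4) : (3 : ZMod (Fintype.card Z)).val = 3 := by
  rw [← Nat.cast_ofNat]; exact valnum hcard 3 (by norm_num)

/-- Cyclic ordering `t, a, b, c` (positions 0,1,2,3). -/
def mkC (hcard : Fintype.card Z = 4) (t a b c : Z)
    (hall' : ∀ w : Z, w = t ∨ w = a ∨ w = b ∨ w = c)
    (hta : t ≠ a) (htb : t ≠ b) (htc : t ≠ c)
    (hab : a ≠ b) (hac : a ≠ c) (hbc : b ≠ c) : Z ≃ ZMod (Fintype.card Z) where
  toFun w := ((if w = t then 0 else if w = a then 1 else if w = b then 2 else 3 : ℕ)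
      : ZMod (Fintype.card Z))
  invFun v := if v.val = 0 then t else if v.val = 1 then a else if v.val = 2 then b else c
  left_inv := by
    intro w
    rcases hall' w with rfl | rfl | rfl | rfl <;>
      simp [hta.symm, htb.symm, htc.symm, hab.symm, hac.symm, hbc.symm,
        val0 hcard, val1 hcard, val2 hcard, val3 hcard]
  right_inv := by
    intro v
    haveI : NeZero (Fintype.card Z) := ⟨by omega⟩
    have hv : v = ((v.val : ℕ) : ZMod (Fintype.card Z)) := (ZMod.natCast_rightInverse v).symm
    have hlt : v.val < 4 := by have := ZMod.val_lt v; omega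
    have h4 : v.val = 0 ∨ v.val = 1 ∨ v.val = 2 ∨ v.val = 3 := by omega
    rcases h4 with h | h | h | h <;>
      rw [hv, h] <;>
      simp [hta.symm, htb.symm, htc.symm, hab.symm, hac.symm, hbc.symm,
        val0 hcard, val1 hcard, val2 hcard, val3 hcard, hta, htb, htc, hab, hac, hbc]



/-- reconstruction of a `memU` vector from its four bits in frame `(t,x,y,z)` -/
def recon (t x y z : Z) (b1 b2 b3 b4 : ZMod 2) : Z → Z → Z → ZMod 2 := fun a b c =>
  if (a=t∧b=x∧c=y)∨(a=x∧b=y∧c=t)∨(a=y∧b=t∧c=x) then b1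
  else if (a=t∧b=y∧c=x)∨(a=y∧b=x∧c=t)∨(a=x∧b=t∧c=y) then 1+b1
  else if (a=t∧b=x∧c=z)∨(a=x∧b=z∧c=t)∨(a=z∧b=t∧c=x) then b2
  else if (a=t∧b=z∧c=x)∨(a=z∧b=x∧c=t)∨(a=x∧b=t∧c=z) then 1+b2
  else if (a=t∧b=y∧c=z)∨(a=y∧b=z∧c=t)∨(a=z∧b=t∧c=y) then b3
  else if (a=t∧b=z∧c=y)∨(a=z∧b=y∧c=t)∨(a=y∧b=t∧c=z) then 1+b3
  else if (a=x∧b=y∧c=z)∨(a=y∧b=z∧c=x)∨(a=z∧b=x∧c=y) then b4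
  else if (a=x∧b=z∧c=y)∨(a=z∧b=y∧c=x)∨(a=y∧b=x∧c=z) then 1+b4
  else 0



lemma neg1 (hcard : Fintype.card Z = 4) : (-1 : ZMod (Fintype.card Z)) = 3 := by
  have h4 : ((4:ℕ) : ZMod (Fintype.card Z)) = 0 := by rw [← hcard]; exact ZMod.natCast_self _
  have h4' : (4 : ZMod (Fintype.card Z)) = 0 := by exact_mod_cast h4
  linear_combination -h4'

lemma neg2 (hcard : Fintype.card Z = 4) : (-2 : ZMod (Fintype.card Z)) = 2 := by
  have h4 : ((4:ℕ) : ZMod (Fintype.card Z)) = 0 := by rw [← hcard]; exact ZMod.natCast_self _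
  have h4' : (4 : ZMod (Fintype.card Z)) = 0 := by exact_mod_cast h4
  linear_combination -h4'

lemma neg3 (hcard : Fintype.card Z = 4) : (-3 : ZMod (Fintype.card Z)) = 1 := by
  have h4 : ((4:ℕ) : ZMod (Fintype.card Z)) = 0 := by rw [← hcard]; exact ZMod.natCast_self _
  have h4' : (4 : ZMod (Fintype.card Z)) = 0 := by exact_mod_cast h4
  linear_combination -h4'

lemma sv' (hcard : Fintype.card Z = 4) (i j : ℕ) (hi : i < 4) (hj : j < 4) :
    (((j : ZMod (Fintype.card Z))) - ((i : ZMod (Fintype.card Z)))).val = (4 + j - i) % 4 :=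
  subval hcard i j hi hj

lemma sv12 (hcard : Fintype.card Z = 4) : ((2 - 1 : ZMod (Fintype.card Z))).val = 1 := by
  rw [show (2 - 1 : ZMod (Fintype.card Z)) = 1 from by ring]
  exact val1 hcard

lemma sv21 (hcard : Fintype.card Z = 4) : ((1 - 2 : ZMod (Fintype.card Z))).val = 3 := by
  rw [show (1 - 2 : ZMod (Fintype.card Z)) = -1 from by ring]; rw [neg1 hcard]
  exact val3 hcard

lemma sv13 (hcard : Fintype.card Z = 4) : ((3 - 1 : ZMod (Fintype.card Z))).val = 2 := by
  rw [show (3 - 1 : ZMod (Fintype.card Z)) = 2 from by ring]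
  exact val2 hcard

lemma sv31 (hcard : Fintype.card Z = 4) : ((1 - 3 : ZMod (Fintype.card Z))).val = 2 := by
  rw [show (1 - 3 : ZMod (Fintype.card Z)) = -2 from by ring]; rw [neg2 hcard]
  exact val2 hcard

lemma sv23 (hcard : Fintype.card Z = 4) : ((3 - 2 : ZMod (Fintype.card Z))).val = 1 := by
  rw [show (3 - 2 : ZMod (Fintype.card Z)) = 1 from by ring]
  exact val1 hcard

lemma sv32 (hcard : Fintype.card Z = 4) : ((2 - 3 : ZMod (Fintype.card Z))).val = 3 := by
  rw [show (2 - 3 : ZMod (Fintype.card Z)) = -1 from by ring]; rw [neg1 hcard]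
  exact val3 hcard

lemma uC_mkC (hcard : Fintype.card Z = 4) (t a b c : Z)
    (hall' : ∀ w : Z, w = t ∨ w = a ∨ w = b ∨ w = c)
    (hta : t ≠ a) (htb : t ≠ b) (htc : t ≠ c)
    (hab : a ≠ b) (hac : a ≠ c) (hbc : b ≠ c) :
    uC (mkC hcard t a b c hall' hta htb htc hab hac hbc) = recon t a b c 1 1 1 1 := by
  funext p q r
  rcases hall' p with rfl | rfl | rfl | rfl <;>
    rcases hall' q with rfl | rfl | rfl | rfl <;>
      rcases hall' r with rfl | rfl | rfl | rfl <;>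
        simp [uC, mkC, recon, hta, htb, htc, hab, hac, hbc,
          hta.symm, htb.symm, htc.symm, hab.symm, hac.symm, hbc.symm,
          val1 hcard, val2 hcard, val3 hcard, neg1 hcard, neg2 hcard, neg3 hcard,
          sv12 hcard, sv21 hcard, sv13 hcard, sv31 hcard, sv23 hcard, sv32 hcard,
          (by decide : (1 + 1 : ZMod 2) = 0)]


lemma flipbit (a b : ZMod 2) (h : a + b = 1) : b = 1 + a := by revert a b; decide

lemma bit01 (b : ZMod 2) : b = 0 ∨ b = 1 := by revert b; decide

lemma recon_txy (t x y z : Z) (b1 b2 b3 b4 : ZMod 2)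
    (htx : t ≠ x) (hty : t ≠ y) (htz : t ≠ z)
    (hxy : x ≠ y) (hxz : x ≠ z) (hyz : y ≠ z) :
    recon t x y z b1 b2 b3 b4 t x y = b1 := by
  simp [recon, htx, hty, htz, hxy, hxz, hyz,
    htx.symm, hty.symm, htz.symm, hxy.symm, hxz.symm, hyz.symm]

lemma recon_txz (t x y z : Z) (b1 b2 b3 b4 : ZMod 2)
    (htx : t ≠ x) (hty : t ≠ y) (htz : t ≠ z)
    (hxy : x ≠ y) (hxz : x ≠ z) (hyz : y ≠ z) :
    recon t x y z b1 b2 b3 b4 t x z = b2 := by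
  simp [recon, htx, hty, htz, hxy, hxz, hyz,
    htx.symm, hty.symm, htz.symm, hxy.symm, hxz.symm, hyz.symm]

lemma recon_tyz (t x y z : Z) (b1 b2 b3 b4 : ZMod 2)
    (htx : t ≠ x) (hty : t ≠ y) (htz : t ≠ z)
    (hxy : x ≠ y) (hxz : x ≠ z) (hyz : y ≠ z) :
    recon t x y z b1 b2 b3 b4 t y z = b3 := by
  simp [recon, htx, hty, htz, hxy, hxz, hyz,
    htx.symm, hty.symm, htz.symm, hxy.symm, hxz.symm, hyz.symm]

lemma recon_xyz (t x y z : Z) (b1 b2 b3 b4 : ZMod 2)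
    (htx : t ≠ x) (hty : t ≠ y) (htz : t ≠ z)
    (hxy : x ≠ y) (hxz : x ≠ z) (hyz : y ≠ z) :
    recon t x y z b1 b2 b3 b4 x y z = b4 := by
  simp [recon, htx, hty, htz, hxy, hxz, hyz,
    htx.symm, hty.symm, htz.symm, hxy.symm, hxz.symm, hyz.symm]

/-- a `memU` vector is determined by its four bits -/
lemma memU_det {u : Z → Z → Z → ZMod 2} (hm : memU u) {t x y z : Z}
    (hall : ∀ a : Z, a = t ∨ a = x ∨ a = y ∨ a = z)
    (htx : t ≠ x) (hty : t ≠ y) (htz : t ≠ z)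
    (hxy : x ≠ y) (hxz : x ≠ z) (hyz : y ≠ z) :
    u = recon t x y z (u t x y) (u t x z) (u t y z) (u x y z) := by
  obtain ⟨h0, h1, h2, h3⟩ := hm
  have rep0 : ∀ a b c : Z, a = b ∨ b = c ∨ a = c → u a b c = 0 := by
    rintro a b c (rfl | rfl | rfl)
    · exact h0 a c
    · rw [h1]; exact h0 b a
    · rw [h1, h1]; exact h0 a b
  have E1a : u x y t = u t x y := by rw [h1 x y t, h1 y t x]
  have E1b : u y t x = u t x y := by rw [h1 y t x]
  have O1a : u x t y = 1 + u t x y := flipbit _ _ (h2 t x y htx hxy hty)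
  have O1b : u t y x = 1 + u t x y := by rw [h1 t y x, h1 y x t]; exact O1a
  have O1c : u y x t = 1 + u t x y := by rw [h1 y x t]; exact O1a
  have E2a : u x z t = u t x z := by rw [h1 x z t, h1 z t x]
  have E2b : u z t x = u t x z := by rw [h1 z t x]
  have O2a : u x t z = 1 + u t x z := flipbit _ _ (h2 t x z htx hxz htz)
  have O2b : u t z x = 1 + u t x z := by rw [h1 t z x, h1 z x t]; exact O2a
  have O2c : u z x t = 1 + u t x z := by rw [h1 z x t]; exact O2a
  have E3a : u y z t = u t y z := by rw [h1 y z t, h1 z t y]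
  have E3b : u z t y = u t y z := by rw [h1 z t y]
  have O3a : u y t z = 1 + u t y z := flipbit _ _ (h2 t y z hty hyz htz)
  have O3b : u t z y = 1 + u t y z := by rw [h1 t z y, h1 z y t]; exact O3a
  have O3c : u z y t = 1 + u t y z := by rw [h1 z y t]; exact O3a
  have E4a : u y z x = u x y z := by rw [h1 y z x, h1 z x y]
  have E4b : u z x y = u x y z := by rw [h1 z x y]
  have O4a : u y x z = 1 + u x y z := flipbit _ _ (h2 x y z hxy hyz hxz)
  have O4b : u x z y = 1 + u x y z := by rw [h1 x z y, h1 z y x]; exact O4a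
  have O4c : u z y x = 1 + u x y z := by rw [h1 z y x]; exact O4a
  have rep1 : ∀ a b : Z, u a b a = 0 := fun a b => rep0 a b a (by tauto)
  have rep2 : ∀ a b : Z, u a b b = 0 := fun a b => rep0 a b b (by tauto)
  funext p q r
  rcases hall p with rfl | rfl | rfl | rfl <;>
    rcases hall q with rfl | rfl | rfl | rfl <;>
      rcases hall r with rfl | rfl | rfl | rfl <;>
        simp [recon, htx, hty, htz, hxy, hxz, hyz,
          htx.symm, hty.symm, htz.symm, hxy.symm, hxz.symm, hyz.symm,
          h0, rep1, rep2,
          E1a, E1b, O1a, O1b, O1c, E2a, E2b, O2a, O2b, O2c,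
          E3a, E3b, O3a, O3b, O3c, E4a, E4b, O4a, O4b, O4c]

lemma memU_recon {t x y z : Z}
    (hall : ∀ a : Z, a = t ∨ a = x ∨ a = y ∨ a = z)
    (htx : t ≠ x) (hty : t ≠ y) (htz : t ≠ z)
    (hxy : x ≠ y) (hxz : x ≠ z) (hyz : y ≠ z)
    (b1 b2 b3 b4 : ZMod 2) (hsum : b1 + b2 + b3 + b4 = 0) :
    memU (recon t x y z b1 b2 b3 b4) := by
  refine ⟨?_, ?_, ?_, ?_⟩
  · intro a b
    rcases hall a with rfl | rfl | rfl | rfl <;>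
      rcases hall b with rfl | rfl | rfl | rfl <;>
        simp [recon, htx, hty, htz, hxy, hxz, hyz,
          htx.symm, hty.symm, htz.symm, hxy.symm, hxz.symm, hyz.symm]
  · intro a b c
    rcases hall a with rfl | rfl | rfl | rfl <;>
      rcases hall b with rfl | rfl | rfl | rfl <;>
        rcases hall c with rfl | rfl | rfl | rfl <;>
          simp [recon, htx, hty, htz, hxy, hxz, hyz,
            htx.symm, hty.symm, htz.symm, hxy.symm, hxz.symm, hyz.symm]
  · intro a b c hab hbc hac
    rcases hall a with rfl | rfl | rfl | rfl <;>
      rcases hall b with rfl | rfl | rfl | rfl <;>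
        rcases hall c with rfl | rfl | rfl | rfl <;>
          first
            | exact absurd rfl hab
            | exact absurd rfl hbc
            | exact absurd rfl hac
            | (simp [recon, htx, hty, htz, hxy, hxz, hyz,
                htx.symm, hty.symm, htz.symm, hxy.symm, hxz.symm, hyz.symm];
               revert b1 b2 b3 b4; decide)
  · intro a b c d hab hac had hbc hbd hcd
    rcases hall a with rfl | rfl | rfl | rfl <;>
      rcases hall b with rfl | rfl | rfl | rfl <;>
        rcases hall c with rfl | rfl | rfl | rfl <;>
          rcases hall d with rfl | rfl | rfl | rfl <;>
            first
              | exact absurd rfl hab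
              | exact absurd rfl hac
              | exact absurd rfl had
              | exact absurd rfl hbc
              | exact absurd rfl hbd
              | exact absurd rfl hcd
              | (simp [recon, htx, hty, htz, hxy, hxz, hyz,
                  htx.symm, hty.symm, htz.symm, hxy.symm, hxz.symm, hyz.symm];
                 revert hsum; revert b1 b2 b3 b4; decide)


lemma uCl_xyz (hcard : Fintype.card Z = 4) (t x y z : Z)
    (hallp : ∀ w : Z, w = t ∨ w = x ∨ w = y ∨ w = z)
    (n1 : t ≠ x) (n2 : t ≠ y) (n3 : t ≠ z)
    (n4 : x ≠ y) (n5 : x ≠ z) (n6 : y ≠ z) :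
    uC (mkC hcard t x y z hallp n1 n2 n3 n4 n5 n6) = recon t x y z 1 1 1 1 := by
  funext p q r
  rcases hallp p with rfl | rfl | rfl | rfl <;>
    rcases hallp q with rfl | rfl | rfl | rfl <;>
      rcases hallp r with rfl | rfl | rfl | rfl <;>
        simp [uC, mkC, recon, n1, n2, n3, n4, n5, n6,
          n1.symm, n2.symm, n3.symm, n4.symm, n5.symm, n6.symm,
          val1 hcard, val2 hcard, val3 hcard, neg1 hcard, neg2 hcard, neg3 hcard,
          sv12 hcard, sv21 hcard, sv13 hcard, sv31 hcard, sv23 hcard, sv32 hcard,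
          (by decide : (1 + 1 : ZMod 2) = 0)]

lemma uCl_xzy (hcard : Fintype.card Z = 4) (t x y z : Z)
    (hallp : ∀ w : Z, w = t ∨ w = x ∨ w = z ∨ w = y)
    (n1 : t ≠ x) (n2 : t ≠ z) (n3 : t ≠ y)
    (n4 : x ≠ z) (n5 : x ≠ y) (n6 : z ≠ y) :
    uC (mkC hcard t x z y hallp n1 n2 n3 n4 n5 n6) = recon t x y z 1 1 0 0 := by
  funext p q r
  rcases hallp p with rfl | rfl | rfl | rfl <;>
    rcases hallp q with rfl | rfl | rfl | rfl <;>
      rcases hallp r with rfl | rfl | rfl | rfl <;>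
        simp [uC, mkC, recon, n1, n2, n3, n4, n5, n6,
          n1.symm, n2.symm, n3.symm, n4.symm, n5.symm, n6.symm,
          val1 hcard, val2 hcard, val3 hcard, neg1 hcard, neg2 hcard, neg3 hcard,
          sv12 hcard, sv21 hcard, sv13 hcard, sv31 hcard, sv23 hcard, sv32 hcard,
          (by decide : (1 + 1 : ZMod 2) = 0)]

lemma uCl_yxz (hcard : Fintype.card Z = 4) (t x y z : Z)
    (hallp : ∀ w : Z, w = t ∨ w = y ∨ w = x ∨ w = z)
    (n1 : t ≠ y) (n2 : t ≠ x) (n3 : t ≠ z)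
    (n4 : y ≠ x) (n5 : y ≠ z) (n6 : x ≠ z) :
    uC (mkC hcard t y x z hallp n1 n2 n3 n4 n5 n6) = recon t x y z 0 1 1 0 := by
  funext p q r
  rcases hallp p with rfl | rfl | rfl | rfl <;>
    rcases hallp q with rfl | rfl | rfl | rfl <;>
      rcases hallp r with rfl | rfl | rfl | rfl <;>
        simp [uC, mkC, recon, n1, n2, n3, n4, n5, n6,
          n1.symm, n2.symm, n3.symm, n4.symm, n5.symm, n6.symm,
          val1 hcard, val2 hcard, val3 hcard, neg1 hcard, neg2 hcard, neg3 hcard,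
          sv12 hcard, sv21 hcard, sv13 hcard, sv31 hcard, sv23 hcard, sv32 hcard,
          (by decide : (1 + 1 : ZMod 2) = 0)]

lemma uCl_yzx (hcard : Fintype.card Z = 4) (t x y z : Z)
    (hallp : ∀ w : Z, w = t ∨ w = y ∨ w = z ∨ w = x)
    (n1 : t ≠ y) (n2 : t ≠ z) (n3 : t ≠ x)
    (n4 : y ≠ z) (n5 : y ≠ x) (n6 : z ≠ x) :
    uC (mkC hcard t y z x hallp n1 n2 n3 n4 n5 n6) = recon t x y z 0 0 1 1 := by
  funext p q r
  rcases hallp p with rfl | rfl | rfl | rfl <;>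
    rcases hallp q with rfl | rfl | rfl | rfl <;>
      rcases hallp r with rfl | rfl | rfl | rfl <;>
        simp [uC, mkC, recon, n1, n2, n3, n4, n5, n6,
          n1.symm, n2.symm, n3.symm, n4.symm, n5.symm, n6.symm,
          val1 hcard, val2 hcard, val3 hcard, neg1 hcard, neg2 hcard, neg3 hcard,
          sv12 hcard, sv21 hcard, sv13 hcard, sv31 hcard, sv23 hcard, sv32 hcard,
          (by decide : (1 + 1 : ZMod 2) = 0)]

lemma uCl_zxy (hcard : Fintype.card Z = 4) (t x y z : Z)
    (hallp : ∀ w : Z, w = t ∨ w = z ∨ w = x ∨ w = y)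
    (n1 : t ≠ z) (n2 : t ≠ x) (n3 : t ≠ y)
    (n4 : z ≠ x) (n5 : z ≠ y) (n6 : x ≠ y) :
    uC (mkC hcard t z x y hallp n1 n2 n3 n4 n5 n6) = recon t x y z 1 0 0 1 := by
  funext p q r
  rcases hallp p with rfl | rfl | rfl | rfl <;>
    rcases hallp q with rfl | rfl | rfl | rfl <;>
      rcases hallp r with rfl | rfl | rfl | rfl <;>
        simp [uC, mkC, recon, n1, n2, n3, n4, n5, n6,
          n1.symm, n2.symm, n3.symm, n4.symm, n5.symm, n6.symm,
          val1 hcard, val2 hcard, val3 hcard, neg1 hcard, neg2 hcard, neg3 hcard,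
          sv12 hcard, sv21 hcard, sv13 hcard, sv31 hcard, sv23 hcard, sv32 hcard,
          (by decide : (1 + 1 : ZMod 2) = 0)]

lemma uCl_zyx (hcard : Fintype.card Z = 4) (t x y z : Z)
    (hallp : ∀ w : Z, w = t ∨ w = z ∨ w = y ∨ w = x)
    (n1 : t ≠ z) (n2 : t ≠ y) (n3 : t ≠ x)
    (n4 : z ≠ y) (n5 : z ≠ x) (n6 : y ≠ x) :
    uC (mkC hcard t z y x hallp n1 n2 n3 n4 n5 n6) = recon t x y z 0 0 0 0 := by
  funext p q r
  rcases hallp p with rfl | rfl | rfl | rfl <;>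
    rcases hallp q with rfl | rfl | rfl | rfl <;>
      rcases hallp r with rfl | rfl | rfl | rfl <;>
        simp [uC, mkC, recon, n1, n2, n3, n4, n5, n6,
          n1.symm, n2.symm, n3.symm, n4.symm, n5.symm, n6.symm,
          val1 hcard, val2 hcard, val3 hcard, neg1 hcard, neg2 hcard, neg3 hcard,
          sv12 hcard, sv21 hcard, sv13 hcard, sv31 hcard, sv23 hcard, sv32 hcard,
          (by decide : (1 + 1 : ZMod 2) = 0)]


lemma uC_rot (C : Z ≃ ZMod (Fintype.card Z)) (r : ZMod (Fintype.card Z)) :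
    uC (C.trans (Equiv.addRight r)) = uC C := by
  funext p q s
  simp [uC, Equiv.trans_apply, Equiv.coe_addRight, add_sub_add_right_eq_sub]

lemma classify (hcard : Fintype.card Z = 4) (t x y z : Z)
    (hall : ∀ a : Z, a = t ∨ a = x ∨ a = y ∨ a = z)
    (htx : t ≠ x) (hty : t ≠ y) (htz : t ≠ z)
    (hxy : x ≠ y) (hxz : x ≠ z) (hyz : y ≠ z) (u : Z → Z → Z → ZMod 2) :
    IsCyclicVec u ↔
      (u = recon t x y z 1 1 1 1 ∨ u = recon t x y z 1 1 0 0 ∨ u = recon t x y z 0 1 1 0 ∨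
       u = recon t x y z 0 0 1 1 ∨ u = recon t x y z 1 0 0 1 ∨ u = recon t x y z 0 0 0 0) := by
  haveI : NeZero (Fintype.card Z) := ⟨by omega⟩
  have hp_xzy : ∀ w : Z, w = t ∨ w = x ∨ w = z ∨ w = y := fun w => by have := hall w; tauto
  have hp_yxz : ∀ w : Z, w = t ∨ w = y ∨ w = x ∨ w = z := fun w => by have := hall w; tauto
  have hp_yzx : ∀ w : Z, w = t ∨ w = y ∨ w = z ∨ w = x := fun w => by have := hall w; tauto
  have hp_zxy : ∀ w : Z, w = t ∨ w = z ∨ w = x ∨ w = y := fun w => by have := hall w; tauto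
  have hp_zyx : ∀ w : Z, w = t ∨ w = z ∨ w = y ∨ w = x := fun w => by have := hall w; tauto
  constructor
  · rintro ⟨C, rfl⟩
    set C' : Z ≃ ZMod (Fintype.card Z) := C.trans (Equiv.addRight (-C t)) with hC'
    have hrot : uC C = uC C' := (uC_rot C (-C t)).symm
    have hC't : C' t = 0 := by simp [hC', Equiv.trans_apply, Equiv.coe_addRight]
    have hne0 : ∀ w : Z, w ≠ t → C' w ≠ 0 := by
      intro w hw e
      exact hw (C'.injective (by rw [e, hC't]))
    have hvlt : ∀ w : Z, (C' w).val < 4 := by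
      intro w; have := ZMod.val_lt (C' w); omega
    have hvne : ∀ v w : Z, v ≠ w → (C' v).val ≠ (C' w).val := by
      intro v w hvw e
      exact hvw (C'.injective (ZMod.val_injective _ e))
    have hcast : ∀ w : Z, C' w = (((C' w).val : ℕ) : ZMod (Fintype.card Z)) :=
      fun w => (ZMod.natCast_rightInverse (C' w)).symm
    have hx0 : (C' x).val ≠ 0 := fun e => hne0 x htx.symm ((ZMod.val_eq_zero _).mp e)
    have hy0 : (C' y).val ≠ 0 := fun e => hne0 y hty.symm ((ZMod.val_eq_zero _).mp e)
    have hz0 : (C' z).val ≠ 0 := fun e => hne0 z htz.symm ((ZMod.val_eq_zero _).mp e)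
    have hcase : ((C' x).val = 1 ∧ (C' y).val = 2 ∧ (C' z).val = 3) ∨
        ((C' x).val = 1 ∧ (C' y).val = 3 ∧ (C' z).val = 2) ∨
        ((C' x).val = 2 ∧ (C' y).val = 1 ∧ (C' z).val = 3) ∨
        ((C' x).val = 3 ∧ (C' y).val = 1 ∧ (C' z).val = 2) ∨
        ((C' x).val = 2 ∧ (C' y).val = 3 ∧ (C' z).val = 1) ∨
        ((C' x).val = 3 ∧ (C' y).val = 2 ∧ (C' z).val = 1) := by
      have h1 := hvlt x; have h2 := hvlt y; have h3 := hvlt z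
      have h4 := hvne x y hxy; have h5 := hvne x z hxz; have h6 := hvne y z hyz
      omega
    rcases hcase with ⟨e1, e2, e3⟩ | ⟨e1, e2, e3⟩ | ⟨e1, e2, e3⟩ | ⟨e1, e2, e3⟩ |
        ⟨e1, e2, e3⟩ | ⟨e1, e2, e3⟩
    · refine Or.inl ?_
      have hCeq : C' = mkC hcard t x y z
          hall
          htx hty htz hxy hxz hyz := by
        apply Equiv.ext
        intro w
        rcases hall w with rfl | rfl | rfl | rfl
        · rw [hC't]; simp [mkC]
        · rw [hcast w, e1]; simp [mkC, htx, hty, htz, hxy, hxz, hyz, htx.symm, hty.symm, htz.symm, hxy.symm, hxz.symm, hyz.symm]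
        · rw [hcast w, e2]; simp [mkC, htx, hty, htz, hxy, hxz, hyz, htx.symm, hty.symm, htz.symm, hxy.symm, hxz.symm, hyz.symm]
        · rw [hcast w, e3]; simp [mkC, htx, hty, htz, hxy, hxz, hyz, htx.symm, hty.symm, htz.symm, hxy.symm, hxz.symm, hyz.symm]
      rw [hrot, hCeq]
      exact uCl_xyz hcard t x y z _ htx hty htz hxy hxz hyz
    · refine Or.inr (Or.inl ?_)
      have hCeq : C' = mkC hcard t x z y
          hp_xzy
          htx htz hty hxz hxy hyz.symm := by
        apply Equiv.ext
        intro w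
        rcases hall w with rfl | rfl | rfl | rfl
        · rw [hC't]; simp [mkC]
        · rw [hcast w, e1]; simp [mkC, htx, hty, htz, hxy, hxz, hyz, htx.symm, hty.symm, htz.symm, hxy.symm, hxz.symm, hyz.symm]
        · rw [hcast w, e2]; simp [mkC, htx, hty, htz, hxy, hxz, hyz, htx.symm, hty.symm, htz.symm, hxy.symm, hxz.symm, hyz.symm]
        · rw [hcast w, e3]; simp [mkC, htx, hty, htz, hxy, hxz, hyz, htx.symm, hty.symm, htz.symm, hxy.symm, hxz.symm, hyz.symm]
      rw [hrot, hCeq]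
      exact uCl_xzy hcard t x y z _ htx htz hty hxz hxy hyz.symm
    · refine Or.inr (Or.inr (Or.inl ?_))
      have hCeq : C' = mkC hcard t y x z
          hp_yxz
          hty htx htz hxy.symm hyz hxz := by
        apply Equiv.ext
        intro w
        rcases hall w with rfl | rfl | rfl | rfl
        · rw [hC't]; simp [mkC]
        · rw [hcast w, e1]; simp [mkC, htx, hty, htz, hxy, hxz, hyz, htx.symm, hty.symm, htz.symm, hxy.symm, hxz.symm, hyz.symm]
        · rw [hcast w, e2]; simp [mkC, htx, hty, htz, hxy, hxz, hyz, htx.symm, hty.symm, htz.symm, hxy.symm, hxz.symm, hyz.symm]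
        · rw [hcast w, e3]; simp [mkC, htx, hty, htz, hxy, hxz, hyz, htx.symm, hty.symm, htz.symm, hxy.symm, hxz.symm, hyz.symm]
      rw [hrot, hCeq]
      exact uCl_yxz hcard t x y z _ hty htx htz hxy.symm hyz hxz
    · refine Or.inr (Or.inr (Or.inr (Or.inl ?_)))
      have hCeq : C' = mkC hcard t y z x
          hp_yzx
          hty htz htx hyz hxy.symm hxz.symm := by
        apply Equiv.ext
        intro w
        rcases hall w with rfl | rfl | rfl | rfl
        · rw [hC't]; simp [mkC]
        · rw [hcast w, e1]; simp [mkC, htx, hty, htz, hxy, hxz, hyz, htx.symm, hty.symm, htz.symm, hxy.symm, hxz.symm, hyz.symm]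
        · rw [hcast w, e2]; simp [mkC, htx, hty, htz, hxy, hxz, hyz, htx.symm, hty.symm, htz.symm, hxy.symm, hxz.symm, hyz.symm]
        · rw [hcast w, e3]; simp [mkC, htx, hty, htz, hxy, hxz, hyz, htx.symm, hty.symm, htz.symm, hxy.symm, hxz.symm, hyz.symm]
      rw [hrot, hCeq]
      exact uCl_yzx hcard t x y z _ hty htz htx hyz hxy.symm hxz.symm
    · refine Or.inr (Or.inr (Or.inr (Or.inr (Or.inl ?_))))
      have hCeq : C' = mkC hcard t z x y
          hp_zxy
          htz htx hty hxz.symm hyz.symm hxy := by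
        apply Equiv.ext
        intro w
        rcases hall w with rfl | rfl | rfl | rfl
        · rw [hC't]; simp [mkC]
        · rw [hcast w, e1]; simp [mkC, htx, hty, htz, hxy, hxz, hyz, htx.symm, hty.symm, htz.symm, hxy.symm, hxz.symm, hyz.symm]
        · rw [hcast w, e2]; simp [mkC, htx, hty, htz, hxy, hxz, hyz, htx.symm, hty.symm, htz.symm, hxy.symm, hxz.symm, hyz.symm]
        · rw [hcast w, e3]; simp [mkC, htx, hty, htz, hxy, hxz, hyz, htx.symm, hty.symm, htz.symm, hxy.symm, hxz.symm, hyz.symm]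
      rw [hrot, hCeq]
      exact uCl_zxy hcard t x y z _ htz htx hty hxz.symm hyz.symm hxy
    · refine Or.inr (Or.inr (Or.inr (Or.inr (Or.inr ?_))))
      have hCeq : C' = mkC hcard t z y x
          hp_zyx
          htz hty htx hyz.symm hxz.symm hxy.symm := by
        apply Equiv.ext
        intro w
        rcases hall w with rfl | rfl | rfl | rfl
        · rw [hC't]; simp [mkC]
        · rw [hcast w, e1]; simp [mkC, htx, hty, htz, hxy, hxz, hyz, htx.symm, hty.symm, htz.symm, hxy.symm, hxz.symm, hyz.symm]
        · rw [hcast w, e2]; simp [mkC, htx, hty, htz, hxy, hxz, hyz, htx.symm, hty.symm, htz.symm, hxy.symm, hxz.symm, hyz.symm]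
        · rw [hcast w, e3]; simp [mkC, htx, hty, htz, hxy, hxz, hyz, htx.symm, hty.symm, htz.symm, hxy.symm, hxz.symm, hyz.symm]
      rw [hrot, hCeq]
      exact uCl_zyx hcard t x y z _ htz hty htx hyz.symm hxz.symm hxy.symm
  · intro h
    rcases h with rfl | rfl | rfl | rfl | rfl | rfl
    · exact ⟨_, (uCl_xyz hcard t x y z
        hall
        htx hty htz hxy hxz hyz).symm⟩
    · exact ⟨_, (uCl_xzy hcard t x y z
        hp_xzy
        htx htz hty hxz hxy hyz.symm).symm⟩
    · exact ⟨_, (uCl_yxz hcard t x y z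
        hp_yxz
        hty htx htz hxy.symm hyz hxz).symm⟩
    · exact ⟨_, (uCl_yzx hcard t x y z
        hp_yzx
        hty htz htx hyz hxy.symm hxz.symm).symm⟩
    · exact ⟨_, (uCl_zxy hcard t x y z
        hp_zxy
        htz htx hty hxz.symm hyz.symm hxy).symm⟩
    · exact ⟨_, (uCl_zyx hcard t x y z
        hp_zyx
        htz hty htx hyz.symm hxz.symm hxy.symm).symm⟩


lemma recon_inj {t x y z : Z}
    (htx : t ≠ x) (hty : t ≠ y) (htz : t ≠ z)
    (hxy : x ≠ y) (hxz : x ≠ z) (hyz : y ≠ z)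
    {b1 b2 b3 b4 c1 c2 c3 c4 : ZMod 2}
    (h : recon t x y z b1 b2 b3 b4 = recon t x y z c1 c2 c3 c4) :
    b1 = c1 ∧ b2 = c2 ∧ b3 = c3 ∧ b4 = c4 := by
  refine ⟨?_, ?_, ?_, ?_⟩
  · have e := congrFun (congrFun (congrFun h t) x) y
    rwa [recon_txy t x y z _ _ _ _ htx hty htz hxy hxz hyz,
      recon_txy t x y z _ _ _ _ htx hty htz hxy hxz hyz] at e
  · have e := congrFun (congrFun (congrFun h t) x) z
    rwa [recon_txz t x y z _ _ _ _ htx hty htz hxy hxz hyz,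
      recon_txz t x y z _ _ _ _ htx hty htz hxy hxz hyz] at e
  · have e := congrFun (congrFun (congrFun h t) y) z
    rwa [recon_tyz t x y z _ _ _ _ htx hty htz hxy hxz hyz,
      recon_tyz t x y z _ _ _ _ htx hty htz hxy hxz hyz] at e
  · have e := congrFun (congrFun (congrFun h x) y) z
    rwa [recon_xyz t x y z _ _ _ _ htx hty htz hxy hxz hyz,
      recon_xyz t x y z _ _ _ _ htx hty htz hxy hxz hyz] at e

lemma recon_ne {t x y z : Z}
    (htx : t ≠ x) (hty : t ≠ y) (htz : t ≠ z)
    (hxy : x ≠ y) (hxz : x ≠ z) (hyz : y ≠ z)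
    {b1 b2 b3 b4 c1 c2 c3 c4 : ZMod 2}
    (hne : ¬(b1 = c1 ∧ b2 = c2 ∧ b3 = c3 ∧ b4 = c4)) :
    recon t x y z b1 b2 b3 b4 ≠ recon t x y z c1 c2 c3 c4 :=
  fun h => hne (recon_inj htx hty htz hxy hxz hyz h)

end

/-- On a 4-element set `Z = {t,x,y,z}` there are exactly 6 cyclic vectors, and they are
exactly the vectors of `𝒰^Z` satisfying the quadratic condition. -/
theorem stmt2 {Z : Type*} [Fintype Z] [DecidableEq Z] (t x y z : Z)
    (hcard : Fintype.card Z = 4)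
    (htx : t ≠ x) (hty : t ≠ y) (htz : t ≠ z)
    (hxy : x ≠ y) (hxz : x ≠ z) (hyz : y ≠ z) :
    {u : Z → Z → Z → ZMod 2 | IsCyclicVec u}.ncard = 6 ∧
    {u : Z → Z → Z → ZMod 2 | IsCyclicVec u} =
      {u : Z → Z → Z → ZMod 2 | memU u ∧ u t x y * u t y z + u t x z * u x y z = 0} := by
  have hall := hall_aux hcard htx hty htz hxy hxz hyz
  set g1 := recon t x y z 1 1 1 1 with hg1
  set g2 := recon t x y z 1 1 0 0 with hg2
  set g3 := recon t x y z 0 1 1 0 with hg3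
  set g4 := recon t x y z 0 0 1 1 with hg4
  set g5 := recon t x y z 1 0 0 1 with hg5
  set g6 := recon t x y z 0 0 0 0 with hg6
  have hset : {u : Z → Z → Z → ZMod 2 | IsCyclicVec u} =
      ({g1, g2, g3, g4, g5, g6} : Set (Z → Z → Z → ZMod 2)) := by
    ext u
    simp only [Set.mem_setOf_eq, Set.mem_insert_iff, Set.mem_singleton_iff]
    exact classify hcard t x y z hall htx hty htz hxy hxz hyz u
  constructor
  · rw [hset]
    have n12 : g1 ≠ g2 := recon_ne htx hty htz hxy hxz hyz (by decide)
    have n13 : g1 ≠ g3 := recon_ne htx hty htz hxy hxz hyz (by decide)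
    have n14 : g1 ≠ g4 := recon_ne htx hty htz hxy hxz hyz (by decide)
    have n15 : g1 ≠ g5 := recon_ne htx hty htz hxy hxz hyz (by decide)
    have n16 : g1 ≠ g6 := recon_ne htx hty htz hxy hxz hyz (by decide)
    have n23 : g2 ≠ g3 := recon_ne htx hty htz hxy hxz hyz (by decide)
    have n24 : g2 ≠ g4 := recon_ne htx hty htz hxy hxz hyz (by decide)
    have n25 : g2 ≠ g5 := recon_ne htx hty htz hxy hxz hyz (by decide)
    have n26 : g2 ≠ g6 := recon_ne htx hty htz hxy hxz hyz (by decide)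
    have n34 : g3 ≠ g4 := recon_ne htx hty htz hxy hxz hyz (by decide)
    have n35 : g3 ≠ g5 := recon_ne htx hty htz hxy hxz hyz (by decide)
    have n36 : g3 ≠ g6 := recon_ne htx hty htz hxy hxz hyz (by decide)
    have n45 : g4 ≠ g5 := recon_ne htx hty htz hxy hxz hyz (by decide)
    have n46 : g4 ≠ g6 := recon_ne htx hty htz hxy hxz hyz (by decide)
    have n56 : g5 ≠ g6 := recon_ne htx hty htz hxy hxz hyz (by decide)
    rw [Set.ncard_insert_of_notMem (by simp [n12, n13, n14, n15, n16]) (Set.toFinite _),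
        Set.ncard_insert_of_notMem (by simp [n23, n24, n25, n26]) (Set.toFinite _),
        Set.ncard_insert_of_notMem (by simp [n34, n35, n36]) (Set.toFinite _),
        Set.ncard_insert_of_notMem (by simp [n45, n46]) (Set.toFinite _),
        Set.ncard_insert_of_notMem (by simp [n56]) (Set.toFinite _),
        Set.ncard_singleton]
  · ext u
    simp only [Set.mem_setOf_eq]
    constructor
    · intro hu
      rcases (classify hcard t x y z hall htx hty htz hxy hxz hyz u).mp hu with
          rfl | rfl | rfl | rfl | rfl | rfl <;>
        exact ⟨memU_recon hall htx hty htz hxy hxz hyz _ _ _ _ (by decide),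
          by rw [recon_txy t x y z _ _ _ _ htx hty htz hxy hxz hyz,
                 recon_tyz t x y z _ _ _ _ htx hty htz hxy hxz hyz,
                 recon_txz t x y z _ _ _ _ htx hty htz hxy hxz hyz,
                 recon_xyz t x y z _ _ _ _ htx hty htz hxy hxz hyz]; decide⟩
    · rintro ⟨hm, hq⟩
      have hu := memU_det hm hall htx hty htz hxy hxz hyz
      have hsum := hm.2.2.2 t x y z htx hty htz hxy hxz hyz
      apply (classify hcard t x y z hall htx hty htz hxy hxz hyz u).mpr
      rcases bit01 (u t x y) with h1 | h1 <;>
        rcases bit01 (u t x z) with h2 | h2 <;>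
          rcases bit01 (u t y z) with h3 | h3 <;>
            rcases bit01 (u x y z) with h4 | h4 <;>
              rw [h1, h2, h3, h4] at hu hsum hq <;>
                first
                  | exact absurd hsum (by decide)
                  | exact absurd hq (by decide)
                  | tauto
end

section
/- Let X be a finite set and let u ∈ 𝒰^X (i.e., u satisfies the four linear conditions defining 𝒰^X). Then u is cyclic (i.e., u = u^C for some cyclic ordering C of X) if and only if u(t,x,y)·u(t,y,z) + u(t,x,z)·u(x,y,z) = 0 for all t,x,y,z ∈ X. -/
open Finset

private lemma modHelp (n a b : ℕ) (ha : a < n) (hb : b < n) :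
    (b + n - a) % n = if a ≤ b then b - a else b + n - a := by
  split_ifs with h
  · have h2 : b + n - a = (b - a) + n := by omega
    rw [h2, Nat.add_mod_right, Nat.mod_eq_of_lt (by omega)]
  · exact Nat.mod_eq_of_lt (by omega)

private lemma valSub {n : ℕ} [NeZero n] (α β : ZMod n) :
    (β - α).val = (β.val + n - α.val) % n := by
  by_cases h : α = 0
  · subst h
    simp only [sub_zero, ZMod.val_zero, Nat.sub_zero, Nat.add_mod_right]
    exact (Nat.mod_eq_of_lt (ZMod.val_lt β)).symm
  · rw [sub_eq_add_neg, ZMod.val_add, ZMod.neg_val, if_neg h]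
    congr 1
    have := ZMod.val_lt α
    omega

private lemma keyFwd (n p q r : ℕ) (hp : p < n) (hq : q < n) (hr : r < n) :
    ((¬p = 0 ∧ ¬p = q ∧ ¬q = 0 ∧ p < q) ∧ (¬q = 0 ∧ ¬q = r ∧ ¬r = 0 ∧ q < r)) ↔
    ((¬p = 0 ∧ ¬p = r ∧ ¬r = 0 ∧ p < r) ∧
      (¬p = q ∧ ¬q = r ∧ ¬p = r ∧ (q + n - p) % n < (r + n - p) % n)) := by
  rw [modHelp n p q hp hq, modHelp n p r hp hr]
  split_ifs <;> omega

private lemma iteMulIte (P Q : Prop) [Decidable P] [Decidable Q] :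
    (if P then (1 : ZMod 2) else 0) * (if Q then 1 else 0) = if P ∧ Q then 1 else 0 := by
  by_cases hP : P <;> by_cases hQ : Q <;> simp [hP, hQ]

private lemma uC_quad {X : Type*} [Fintype X] [DecidableEq X] [Nonempty X]
    (C : X ≃ ZMod (Fintype.card X)) (t x y z : X) :
    uC C t x y * uC C t y z + uC C t x z * uC C x y z = 0 := by
  haveI : NeZero (Fintype.card X) := ⟨Fintype.card_ne_zero⟩
  have hvlt : ∀ α : ZMod (Fintype.card X), α.val < Fintype.card X := fun α => ZMod.val_lt α
  have heq : ∀ a b : X, a = b ↔ (C a - C t).val = (C b - C t).val := by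
    intro a b
    constructor
    · rintro rfl; rfl
    · intro h
      exact C.injective (sub_left_inj.mp (ZMod.val_injective _ h))
  have hz : ∀ a : X, t = a ↔ (C a - C t).val = 0 := by
    intro a
    constructor
    · rintro rfl; simp
    · intro h
      have h2 : C a - C t = 0 := (ZMod.val_eq_zero _).mp h
      exact (C.injective (sub_eq_zero.mp h2)).symm
  have hsub : ∀ a b : X,
      (C b - C a).val = ((C b - C t).val + Fintype.card X - (C a - C t).val) % Fintype.card X := by
    intro a b
    have h : C b - C a = (C b - C t) - (C a - C t) := by ring
    rw [h, valSub]
  simp only [uC]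
  rw [iteMulIte, iteMulIte]
  have key : ((t ≠ x ∧ x ≠ y ∧ t ≠ y ∧ (C x - C t).val < (C y - C t).val) ∧
      (t ≠ y ∧ y ≠ z ∧ t ≠ z ∧ (C y - C t).val < (C z - C t).val)) ↔
      ((t ≠ x ∧ x ≠ z ∧ t ≠ z ∧ (C x - C t).val < (C z - C t).val) ∧
      (x ≠ y ∧ y ≠ z ∧ x ≠ z ∧ (C y - C x).val < (C z - C x).val)) := by
    rw [hsub x y, hsub x z]
    simp only [ne_eq, hz x, hz y, hz z, heq x y, heq y z, heq x z]
    exact keyFwd (Fintype.card X) _ _ _ (hvlt _) (hvlt _) (hvlt _)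
  by_cases h : ((t ≠ x ∧ x ≠ y ∧ t ≠ y ∧ (C x - C t).val < (C y - C t).val) ∧
      (t ≠ y ∧ y ≠ z ∧ t ≠ z ∧ (C y - C t).val < (C z - C t).val))
  · rw [if_pos h, if_pos (key.mp h)]; decide
  · rw [if_neg h, if_neg (fun hh => h (key.mpr hh))]; decide

section Backward

variable {X : Type*} [Fintype X] [DecidableEq X] [Nonempty X]

private lemma bwd (u : X → X → X → ZMod 2) (hu : memU u)
    (hQ : ∀ t x y z : X, u t x y * u t y z + u t x z * u x y z = 0) :
    IsCyclicVec u := by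
  classical
  obtain ⟨hu0, hu1, hu2, hu3⟩ := hu
  haveI : NeZero (Fintype.card X) := ⟨Fintype.card_ne_zero⟩
  have t := Classical.arbitrary X
  -- ZMod 2 facts
  have z01 : ∀ a : ZMod 2, a = 0 ∨ a = 1 := by decide
  have zmul : ∀ a b : ZMod 2, a * b = 1 → a = 1 := by decide
  have zfact : ∀ p q r s : ZMod 2, p + q + r + s = 0 → s = p + q + r := by decide
  -- repeats vanish
  have hrep1 : ∀ a b : X, u a b a = 0 := by
    intro a b; rw [hu1 a b a, hu1 b a a]; exact hu0 a b
  have hrep2 : ∀ a b : X, u a b b = 0 := by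
    intro a b; rw [hu1 a b b]; exact hu0 b a
  -- the strict order on X with t least
  set lt' : X → X → Prop := fun a b => (a = t ∧ b ≠ t) ∨ (a ≠ t ∧ b ≠ t ∧ u t a b = 1) with hlt'
  have hirr : ∀ a : X, ¬ lt' a a := by
    intro a h
    rcases h with ⟨h1, h2⟩ | ⟨h1, h2, h3⟩
    · exact h2 h1
    · rw [hu1 t a a, hu0 a t] at h3
      exact absurd h3 (by decide)
  have htr : ∀ a b c : X, lt' a b → lt' b c → lt' a c := by
    intro a b c hab hbc
    have hcnt : c ≠ t := by rcases hbc with ⟨_, h⟩ | ⟨_, h, _⟩ <;> exact h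
    rcases hab with ⟨ha, hb⟩ | ⟨ha, hb, hab1⟩
    · exact Or.inl ⟨ha, hcnt⟩
    · rcases hbc with ⟨hb', _⟩ | ⟨_, _, hbc1⟩
      · exact absurd hb' hb
      · refine Or.inr ⟨ha, hcnt, ?_⟩
        have h4 := hQ t a b c
        rw [hab1, hbc1] at h4
        have h5 : u t a c * u a b c = 1 := by
          rcases z01 (u t a c * u a b c) with h | h
          · rw [h] at h4; exact absurd h4 (by decide)
          · exact h
        exact zmul _ _ h5
  have htot : ∀ a b : X, a ≠ b → lt' a b ∨ lt' b a := by
    intro a b hab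
    by_cases ha : a = t
    · subst ha; exact Or.inl (Or.inl ⟨rfl, fun h => hab h.symm⟩)
    · by_cases hb : b = t
      · subst hb; exact Or.inr (Or.inl ⟨rfl, ha⟩)
      · rcases z01 (u t a b) with h | h
        · right
          refine Or.inr ⟨hb, ha, ?_⟩
          have h2 := hu2 t a b (fun hh => ha hh.symm) hab (fun hh => hb hh.symm)
          rw [hu1 a t b] at h2
          rwa [h, zero_add] at h2
        · exact Or.inl (Or.inr ⟨ha, hb, h⟩)
  -- rank
  set rank : X → ℕ := fun a => (univ.filter (fun b => lt' b a)).card with hrank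
  have hranklt : ∀ a b : X, lt' a b → rank a < rank b := by
    intro a b h
    apply Finset.card_lt_card
    rw [Finset.ssubset_iff_of_subset]
    · refine ⟨a, Finset.mem_filter.mpr ⟨Finset.mem_univ a, h⟩, ?_⟩
      intro hmem
      exact hirr a (Finset.mem_filter.mp hmem).2
    · intro c hc
      simp only [Finset.mem_filter, Finset.mem_univ, true_and] at hc ⊢
      exact htr c a b hc h
  have hrankt : rank t = 0 := by
    rw [hrank]
    simp only [Finset.card_eq_zero, Finset.filter_eq_empty_iff]
    intro b _
    intro h
    rcases h with ⟨_, h2⟩ | ⟨_, h2, _⟩ <;> exact h2 rfl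
  have hrankpos : ∀ a : X, a ≠ t → 1 ≤ rank a := by
    intro a ha
    have hmem : t ∈ univ.filter (fun b => lt' b a) :=
      Finset.mem_filter.mpr ⟨Finset.mem_univ t, Or.inl ⟨rfl, ha⟩⟩
    exact Finset.card_pos.mpr ⟨t, hmem⟩
  have hranklt_n : ∀ a : X, rank a < Fintype.card X := by
    intro a
    have hsub2 : univ.filter (fun b => lt' b a) ⊆ univ.erase a := by
      intro c hc
      have hc2 := (Finset.mem_filter.mp hc).2
      refine Finset.mem_erase.mpr ⟨?_, Finset.mem_univ c⟩
      intro h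
      exact hirr a (h ▸ hc2)
    have h2 : rank a ≤ (univ.erase a).card := Finset.card_le_card hsub2
    rw [Finset.card_erase_of_mem (Finset.mem_univ a), Finset.card_univ] at h2
    have h3 : 0 < Fintype.card X := Fintype.card_pos
    omega
  have hrinj : ∀ a b : X, rank a = rank b → a = b := by
    intro a b h
    by_contra hab
    rcases htot a b hab with h1 | h1
    · exact absurd h (Nat.ne_of_lt (hranklt a b h1))
    · exact absurd h.symm (Nat.ne_of_lt (hranklt b a h1))
  have hiff : ∀ a b : X, a ≠ b → (lt' a b ↔ rank a < rank b) := by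
    intro a b hab
    constructor
    · exact hranklt a b
    · intro h
      rcases htot a b hab with h1 | h1
      · exact h1
      · exact absurd (hranklt b a h1) (by omega)
  -- the equivalence
  have hbij : Function.Bijective (fun a : X => ((rank a : ℕ) : ZMod (Fintype.card X))) := by
    rw [Fintype.bijective_iff_injective_and_card]
    constructor
    · intro a b h
      apply hrinj
      have h2 : ((rank a : ℕ) : ZMod (Fintype.card X)).val
          = ((rank b : ℕ) : ZMod (Fintype.card X)).val := congrArg ZMod.val h
      rwa [ZMod.val_cast_of_lt (hranklt_n a), ZMod.val_cast_of_lt (hranklt_n b)] at h2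
    · rw [ZMod.card]
  refine ⟨Equiv.ofBijective _ hbij, ?_⟩
  have hCval : ∀ a : X, ((Equiv.ofBijective _ hbij) a).val = rank a :=
    fun a => ZMod.val_cast_of_lt (hranklt_n a)
  have hsub : ∀ a b : X,
      ((Equiv.ofBijective _ hbij) b - (Equiv.ofBijective _ hbij) a).val
        = (rank b + Fintype.card X - rank a) % Fintype.card X := by
    intro a b
    rw [valSub, hCval, hCval]
  -- u t · · as rank comparison
  have hmain : ∀ a b : X, a ≠ t → b ≠ t → a ≠ b → (u t a b = 1 ↔ rank a < rank b) := by
    intro a b ha hb hab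
    rw [← hiff a b hab]
    constructor
    · intro h; exact Or.inr ⟨ha, hb, h⟩
    · rintro (⟨h1, _⟩ | ⟨_, _, h⟩)
      · exact absurd h1 ha
      · exact h
  have ind : ∀ (v : ZMod 2) (P : Prop) [Decidable P], (v = 1 ↔ P) → v = if P then 1 else 0 := by
    intro v P _ h
    by_cases hp : P
    · rw [if_pos hp, h.mpr hp]
    · rw [if_neg hp]
      rcases z01 v with e | e
      · exact e
      · exact absurd (h.mp e) hp
  -- main extensionality
  funext x y z
  simp only [uC]
  by_cases hxy : x = y
  · subst hxy; rw [if_neg (fun h => h.1 rfl)]; exact hu0 x z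
  by_cases hyz : y = z
  · subst hyz; rw [if_neg (fun h => h.2.1 rfl)]; exact hrep2 x y
  by_cases hxz : x = z
  · subst hxz; rw [if_neg (fun h => h.2.2.1 rfl)]; exact hrep1 x y
  rw [hsub x y, hsub x z]
  have hcng : (x ≠ y ∧ y ≠ z ∧ x ≠ z ∧
      ((rank y + Fintype.card X - rank x) % Fintype.card X
        < (rank z + Fintype.card X - rank x) % Fintype.card X)) ↔
      ((rank y + Fintype.card X - rank x) % Fintype.card X
        < (rank z + Fintype.card X - rank x) % Fintype.card X) := by
    constructor
    · exact fun h => h.2.2.2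
    · exact fun h => ⟨hxy, hyz, hxz, h⟩
  rw [if_congr hcng rfl rfl]
  by_cases hxt : x = t
  · subst hxt
    rw [hrankt]
    have e1 : ∀ m : ℕ, m < Fintype.card X → (m + Fintype.card X - 0) % Fintype.card X = m := by
      intro m hm
      rw [Nat.sub_zero, Nat.add_mod_right, Nat.mod_eq_of_lt hm]
    rw [e1 (rank y) (hranklt_n y), e1 (rank z) (hranklt_n z)]
    exact ind _ _ (hmain y z (fun h => hxy h.symm) (fun h => hxz h.symm) hyz)
  by_cases hyt : y = t
  · subst hyt
    rw [hrankt]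
    have hx1 : 1 ≤ rank x := hrankpos x hxt
    have hz1 : 1 ≤ rank z := hrankpos z (fun h => hyz h.symm)
    have hne : rank x ≠ rank z := fun h => hxz (hrinj _ _ h)
    have e2 : (0 + Fintype.card X - rank x) % Fintype.card X
        < (rank z + Fintype.card X - rank x) % Fintype.card X ↔ rank z < rank x := by
      have hcard : 0 < Fintype.card X := Fintype.card_pos
      have hb1 := hranklt_n x
      have hb2 := hranklt_n z
      rw [modHelp (Fintype.card X) (rank x) 0 (hranklt_n x) hcard,
        modHelp (Fintype.card X) (rank x) (rank z) (hranklt_n x) (hranklt_n z)]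
      split_ifs <;> omega
    have h2 := hu2 y x z (fun h => hxt h.symm) hxz (fun h => hyz h)
    have h3 := hmain x z hxt (fun h => hyz h.symm) hxz
    have hiff2 : u x y z = 1 ↔ rank z < rank x := by
      constructor
      · intro h
        rw [h] at h2
        have h4 : u y x z = 0 := by
          rcases z01 (u y x z) with e | e
          · exact e
          · rw [e] at h2; exact absurd h2 (by decide)
        have h5 : ¬ rank x < rank z := fun hh => by
          rw [h3.mpr hh] at h4; exact absurd h4 (by decide)
        omega
      · intro h
        have h4 : u y x z = 0 := by
          rcases z01 (u y x z) with e | e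
          · exact e
          · exact absurd (h3.mp e) (by omega)
        rw [h4, zero_add] at h2
        exact h2
    exact ind _ _ (hiff2.trans e2.symm)
  by_cases hzt : z = t
  · subst hzt
    rw [hrankt]
    have hx1 : 1 ≤ rank x := hrankpos x hxt
    have hy1 : 1 ≤ rank y := hrankpos y hyt
    have hne : rank x ≠ rank y := fun h => hxy (hrinj _ _ h)
    have e3 : (rank y + Fintype.card X - rank x) % Fintype.card X
        < (0 + Fintype.card X - rank x) % Fintype.card X ↔ rank x < rank y := by
      have hcard : 0 < Fintype.card X := Fintype.card_pos
      have hb1 := hranklt_n x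
      have hb2 := hranklt_n y
      rw [modHelp (Fintype.card X) (rank x) 0 (hranklt_n x) hcard,
        modHelp (Fintype.card X) (rank x) (rank y) (hranklt_n x) (hranklt_n y)]
      split_ifs <;> omega
    rw [hu1 x y z, hu1 y z x]
    exact ind _ _ ((hmain x y hxt hyt hxy).trans e3.symm)
  · -- none is t
    have hx1 : 1 ≤ rank x := hrankpos x hxt
    have hy1 : 1 ≤ rank y := hrankpos y hyt
    have hz1 : 1 ≤ rank z := hrankpos z hzt
    have hnxy : rank x ≠ rank y := fun h => hxy (hrinj _ _ h)
    have hnyz : rank y ≠ rank z := fun h => hyz (hrinj _ _ h)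
    have hnxz : rank x ≠ rank z := fun h => hxz (hrinj _ _ h)
    have h1 := hmain x y hxt hyt hxy
    have h2 := hmain x z hxt hzt hxz
    have h3 := hmain y z hyt hzt hyz
    have hsum : u x y z = u t x y + u t x z + u t y z :=
      zfact _ _ _ _ (hu3 t x y z (fun h => hxt h.symm) (fun h => hyt h.symm)
        (fun h => hzt h.symm) hxy hxz hyz)
    rw [hsum, ind _ _ h1, ind _ _ h2, ind _ _ h3,
      modHelp (Fintype.card X) (rank x) (rank y) (hranklt_n x) (hranklt_n y),
      modHelp (Fintype.card X) (rank x) (rank z) (hranklt_n x) (hranklt_n z)]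
    have hxn := hranklt_n x
    have hyn := hranklt_n y
    have hzn := hranklt_n z
    split_ifs <;> first | decide | (exfalso; omega)

end Backward

/-- A vector `u ∈ 𝒰^X` is cyclic iff it satisfies the quadratic condition
for all quadruples (Lemma 2 of the paper). -/
theorem stmt3 {X : Type*} [Fintype X] [DecidableEq X] [Nonempty X]
    (u : X → X → X → ZMod 2) (hu : memU u) :
    IsCyclicVec u ↔ ∀ t x y z : X, u t x y * u t y z + u t x z * u x y z = 0 := by
  constructor
  · rintro ⟨C, rfl⟩ t x y z
    exact uC_quad C t x y z
  · exact bwd u hu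
end

section
/- Let X be a finite set and u ∈ 𝒰^X. Then u is cyclic if and only if for every 4-element subset Z of X, the restriction u_Z of u to Z³ is cyclic. -/
open Finset

set_option linter.unusedSectionVars false

def betw (a b c : ℕ) : Prop :=
  (a < b ∧ b < c) ∨ (b < c ∧ c < a) ∨ (c < a ∧ a < b)

instance betw_decidable (a b c : ℕ) : Decidable (betw a b c) := by unfold betw; infer_instance

lemma val_sub_eq {n : ℕ} [NeZero n] (x y : ZMod n) :
    (x - y).val = if y.val ≤ x.val then x.val - y.val else x.val + n - y.val := by
  have hx := ZMod.val_lt x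
  have hy := ZMod.val_lt y
  rw [sub_eq_add_neg, ZMod.val_add, ZMod.neg_val]
  split_ifs with h0 h1 h1
  · have : y.val = 0 := by simp [h0]
    rw [this]; simpa using Nat.mod_eq_of_lt hx
  · have : y.val = 0 := by simp [h0]
    omega
  · have hyne : y.val ≠ 0 := fun hc => h0 (ZMod.val_injective n (by simpa using hc))
    have : x.val + (n - y.val) = (x.val - y.val) + n := by omega
    rw [this, Nat.add_mod_right]
    exact Nat.mod_eq_of_lt (by omega)
  · have hyne : y.val ≠ 0 := fun hc => h0 (ZMod.val_injective n (by simpa using hc))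
    rw [Nat.mod_eq_of_lt (by omega)]
    omega

lemma cyc_iff_betw {n : ℕ} [NeZero n] (t a b c : ZMod n)
    (hab : a ≠ b) (hbc : b ≠ c) (hac : a ≠ c) :
    ((b - a).val < (c - a).val ↔ betw (a - t).val (b - t).val (c - t).val) := by
  have e1 : b - a = (b - t) - (a - t) := by ring
  have e2 : c - a = (c - t) - (a - t) := by ring
  have hA := ZMod.val_lt (a - t); have hB := ZMod.val_lt (b - t); have hC := ZMod.val_lt (c - t)
  have dAB : (a - t).val ≠ (b - t).val :=
    fun h => hab (sub_left_injective (ZMod.val_injective n h))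
  have dBC : (b - t).val ≠ (c - t).val :=
    fun h => hbc (sub_left_injective (ZMod.val_injective n h))
  have dAC : (a - t).val ≠ (c - t).val :=
    fun h => hac (sub_left_injective (ZMod.val_injective n h))
  rw [e1, e2, val_sub_eq (b - t) (a - t), val_sub_eq (c - t) (a - t)]
  unfold betw
  split_ifs <;> omega

section Rank
variable {α : Type*} [Fintype α] [DecidableEq α] (lt : α → α → Prop) [DecidableRel lt]

def rnk (x : α) : ℕ := (univ.filter (fun y => lt y x)).card

lemma rnk_lt_of (hirr : ∀ x, ¬ lt x x) (htr : ∀ x y z, lt x y → lt y z → lt x z)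
    (x y : α) (h : lt x y) : rnk lt x < rnk lt y := by
  apply card_lt_card
  constructor
  · intro z hz
    simp only [mem_filter, mem_univ, true_and] at hz ⊢
    exact htr _ _ _ hz h
  · intro hsub
    have hx : x ∈ univ.filter (fun z => lt z y) := by simp [h]
    have := hsub hx
    simp only [mem_filter, mem_univ, true_and] at this
    exact hirr x this

lemma rnk_lt_iff (hirr : ∀ x, ¬ lt x x) (htr : ∀ x y z, lt x y → lt y z → lt x z)
    (htot : ∀ x y, x ≠ y → lt x y ∨ lt y x) (x y : α) :
    rnk lt x < rnk lt y ↔ lt x y := by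
  refine ⟨fun h => ?_, rnk_lt_of lt hirr htr x y⟩
  by_contra hn
  rcases eq_or_ne x y with rfl | hne
  · omega
  · rcases htot x y hne with h1 | h1
    · exact hn h1
    · have := rnk_lt_of lt hirr htr y x h1; omega

lemma rnk_ne (hirr : ∀ x, ¬ lt x x) (htr : ∀ x y z, lt x y → lt y z → lt x z)
    (htot : ∀ x y, x ≠ y → lt x y ∨ lt y x) (x y : α) (h : x ≠ y) :
    rnk lt x ≠ rnk lt y := by
  rcases htot x y h with h1 | h1
  · exact Nat.ne_of_lt (rnk_lt_of lt hirr htr x y h1)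
  · exact (Nat.ne_of_lt (rnk_lt_of lt hirr htr y x h1)).symm

lemma rnk_lt_card (hirr : ∀ x, ¬ lt x x) (x : α) : rnk lt x < Fintype.card α := by
  have hsub : (univ.filter (fun y => lt y x)) ⊆ univ.erase x := by
    intro z hz
    simp only [mem_filter, mem_univ, true_and] at hz
    simp only [mem_erase, mem_univ, and_true]
    exact fun hzx => hirr x (hzx ▸ hz)
  have h2 := card_le_card hsub
  have h3 : (univ.erase x).card < univ.card := card_erase_lt_of_mem (mem_univ x)
  simpa [rnk, Finset.card_univ] using lt_of_le_of_lt h2 h3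

noncomputable def rankEquiv [Nonempty α] (hirr : ∀ x, ¬ lt x x)
    (htr : ∀ x y z, lt x y → lt y z → lt x z)
    (htot : ∀ x y, x ≠ y → lt x y ∨ lt y x) : α ≃ ZMod (Fintype.card α) :=
  haveI : NeZero (Fintype.card α) := ⟨Fintype.card_ne_zero⟩
  Equiv.ofBijective (fun x => ((rnk lt x : ℕ) : ZMod (Fintype.card α)))
    ((Fintype.bijective_iff_injective_and_card _).mpr
      ⟨fun x y h => by
        by_contra hne
        have hx := ZMod.val_cast_of_lt (rnk_lt_card lt hirr x)
        have hy := ZMod.val_cast_of_lt (rnk_lt_card lt hirr y)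
        have : rnk lt x = rnk lt y := by
          rw [← hx, ← hy]; exact congrArg ZMod.val h
        exact rnk_ne lt hirr htr htot x y hne this,
       by rw [ZMod.card]⟩)

lemma rankEquiv_val [Nonempty α] (hirr : ∀ x, ¬ lt x x)
    (htr : ∀ x y z, lt x y → lt y z → lt x z)
    (htot : ∀ x y, x ≠ y → lt x y ∨ lt y x) (x : α) :
    (rankEquiv lt hirr htr htot x).val = rnk lt x :=
  ZMod.val_cast_of_lt (rnk_lt_card lt hirr x)

lemma rankEquiv_cyc [Nonempty α] (hirr : ∀ x, ¬ lt x x)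
    (htr : ∀ x y z, lt x y → lt y z → lt x z)
    (htot : ∀ x y, x ≠ y → lt x y ∨ lt y x) (x y z : α)
    (hxy : x ≠ y) (hyz : y ≠ z) (hxz : x ≠ z) :
    ((rankEquiv lt hirr htr htot y - rankEquiv lt hirr htr htot x).val
      < (rankEquiv lt hirr htr htot z - rankEquiv lt hirr htr htot x).val
      ↔ betw (rnk lt x) (rnk lt y) (rnk lt z)) := by
  haveI : NeZero (Fintype.card α) := ⟨Fintype.card_ne_zero⟩
  set C := rankEquiv lt hirr htr htot with hCdef
  have h1 : C x ≠ C y := fun h => hxy (C.injective h)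
  have h2 : C y ≠ C z := fun h => hyz (C.injective h)
  have h3 : C x ≠ C z := fun h => hxz (C.injective h)
  have := cyc_iff_betw 0 (C x) (C y) (C z) h1 h2 h3
  simpa [sub_zero, hCdef, rankEquiv_val] using this

end Rank

-- Forward direction
theorem fwd {X : Type*} [Fintype X] [DecidableEq X] [Nonempty X]
    (C : X ≃ ZMod (Fintype.card X)) (Z : Finset X) (hZ : Z.card = 4) :
    IsCyclicVec (fun a b c : Z => uC C a.1 b.1 c.1) := by
  haveI : NeZero (Fintype.card X) := ⟨Fintype.card_ne_zero⟩
  haveI hne : Nonempty ↥Z := by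
    rw [← Fintype.card_pos_iff, Fintype.card_coe, hZ]; norm_num
  have z₀ : ↥Z := Classical.arbitrary _
  set τ := C z₀.1 with hτ
  set r : ↥Z → ℕ := fun z => (C z.1 - τ).val with hr
  have hrinj : ∀ a b : ↥Z, a ≠ b → r a ≠ r b := by
    intro a b hab h
    exact hab (Subtype.coe_injective (C.injective (sub_left_injective
      (ZMod.val_injective _ h))))
  set lt : ↥Z → ↥Z → Prop := fun a b => r a < r b with hlt
  letI : DecidableRel lt := fun a b => Nat.decLt _ _
  have hirr : ∀ a, ¬ lt a a := fun a => lt_irrefl _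
  have htr : ∀ a b c, lt a b → lt b c → lt a c := fun a b c h1 h2 => lt_trans h1 h2
  have htot : ∀ a b, a ≠ b → lt a b ∨ lt b a := fun a b h => (hrinj a b h).lt_or_gt
  refine ⟨rankEquiv lt hirr htr htot, funext fun a => funext fun b => funext fun c => ?_⟩
  show uC C a.1 b.1 c.1 = uC (rankEquiv lt hirr htr htot) a b c
  set CC := rankEquiv lt hirr htr htot with hCC
  have key : (a.1 ≠ b.1 ∧ b.1 ≠ c.1 ∧ a.1 ≠ c.1 ∧ (C b.1 - C a.1).val < (C c.1 - C a.1).val)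
      ↔ (a ≠ b ∧ b ≠ c ∧ a ≠ c ∧ (CC b - CC a).val < (CC c - CC a).val) := by
    have ed : ∀ p q : ↥Z, (p.1 ≠ q.1) ↔ p ≠ q := by
      intro p q; exact not_congr ⟨fun h => Subtype.coe_injective h, fun h => by rw [h]⟩
    by_cases hab : a = b
    · subst hab; simp
    by_cases hbc : b = c
    · subst hbc; simp [ed]
    by_cases hac : a = c
    · subst hac; simp [ed]
    have hab' : a.1 ≠ b.1 := (ed a b).mpr hab
    have hbc' : b.1 ≠ c.1 := (ed b c).mpr hbc
    have hac' : a.1 ≠ c.1 := (ed a c).mpr hac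
    have hCab : C a.1 ≠ C b.1 := fun h => hab' (C.injective h)
    have hCbc : C b.1 ≠ C c.1 := fun h => hbc' (C.injective h)
    have hCac : C a.1 ≠ C c.1 := fun h => hac' (C.injective h)
    have L : (C b.1 - C a.1).val < (C c.1 - C a.1).val ↔ betw (r a) (r b) (r c) :=
      cyc_iff_betw τ (C a.1) (C b.1) (C c.1) hCab hCbc hCac
    have R := rankEquiv_cyc lt hirr htr htot a b c hab hbc hac
    have e : ∀ p q : ↥Z, (rnk lt p < rnk lt q) ↔ r p < r q := fun p q =>
      rnk_lt_iff lt hirr htr htot p q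
    have hB : betw (rnk lt a) (rnk lt b) (rnk lt c) ↔ betw (r a) (r b) (r c) := by
      unfold betw; simp only [e]
    constructor
    · rintro ⟨-, -, -, h⟩
      exact ⟨hab, hbc, hac, R.mpr (hB.mpr (L.mp h))⟩
    · rintro ⟨-, -, -, h⟩
      exact ⟨hab', hbc', hac', L.mpr (hB.mp (R.mp h))⟩
  unfold uC
  rcases Classical.em (a ≠ b ∧ b ≠ c ∧ a ≠ c ∧ (CC b - CC a).val < (CC c - CC a).val) with h2 | h2
  · rw [if_pos (key.mpr h2), if_pos h2]
  · rw [if_neg (fun hc => h2 (key.mp hc)), if_neg h2]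

set_option maxHeartbeats 2000000 in
theorem bwd_s4 {X : Type*} [Fintype X] [DecidableEq X] [Nonempty X]
    (u : X → X → X → ZMod 2) (hu : memU u)
    (h4 : ∀ Z : Finset X, Z.card = 4 →
        IsCyclicVec (fun a b c : Z => u a.1 b.1 c.1)) :
    IsCyclicVec u := by
  classical
  obtain ⟨h0, h1, h2, h3⟩ := hu
  haveI : NeZero (Fintype.card X) := ⟨Fintype.card_ne_zero⟩
  have huxx : ∀ a b : X, u a b b = 0 := fun a b => by rw [h1]; exact h0 b a
  have huxyx : ∀ a b : X, u a b a = 0 := fun a b => by rw [h1, h1]; exact h0 a b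
  have tri : ∀ a b c : X, a ≠ b → a ≠ c → b ≠ c → u a b c + u a c b = 1 := by
    intro a b c hab hac hbc
    rw [h1 a b c, h1 a c b]
    exact h2 b c a hbc (Ne.symm hac) (Ne.symm hab)
  have z2a : ∀ a b : ZMod 2, a + b = 1 → a ≠ 1 → b = 1 := by decide
  have z2b : ∀ a : ZMod 2, a ≠ 1 → a = 0 := by decide
  have z2c : ∀ a b : ZMod 2, a + b = 1 → a = 1 ∨ b = 1 := by decide
  have z2d : ∀ a b : ZMod 2, a + b = 1 → a = 1 → b ≠ 1 := by decide
  obtain ⟨t⟩ := (inferInstance : Nonempty X)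
  set lt : X → X → Prop := fun x y => if x = t then y ≠ t else (y ≠ t ∧ u t x y = 1)
    with hltdef
  letI : DecidableRel lt := fun a b => by unfold lt; infer_instance
  have lt_ne_t : ∀ a b, lt a b → b ≠ t := by
    intro a b h
    by_cases ha : a = t
    · simpa [hltdef, ha] using h
    · exact ((by simpa [hltdef, ha] using h : b ≠ t ∧ u t a b = 1)).1
  have lt_t : ∀ b, b ≠ t → lt t b := fun b hb => by simp [hltdef, hb]
  have lt_iff : ∀ a b, a ≠ t → (lt a b ↔ (b ≠ t ∧ u t a b = 1)) := by
    intro a b ha; simp [hltdef, ha]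
  have hirr : ∀ a, ¬ lt a a := by
    intro a h
    by_cases ha : a = t
    · rw [ha] at h; exact (lt_ne_t t t h) rfl
    · have := ((lt_iff a a ha).mp h).2
      rw [huxx t a] at this
      exact absurd this (by decide)
  have htot : ∀ a b, a ≠ b → lt a b ∨ lt b a := by
    intro a b hab
    by_cases ha : a = t
    · subst ha; exact Or.inl (lt_t b (Ne.symm hab))
    by_cases hb : b = t
    · subst hb; exact Or.inr (lt_t a hab)
    rcases z2c _ _ (tri t a b (Ne.symm ha) (Ne.symm hb) hab) with h | h
    · exact Or.inl ((lt_iff a b ha).mpr ⟨hb, h⟩)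
    · exact Or.inr ((lt_iff b a hb).mpr ⟨ha, h⟩)
  have htr : ∀ x y z, lt x y → lt y z → lt x z := by
    intro x y z hxy hyz
    have hyt : y ≠ t := lt_ne_t x y hxy
    have hzt : z ≠ t := lt_ne_t y z hyz
    by_cases hx : x = t
    · subst hx; exact lt_t z hzt
    have h1xy : u t x y = 1 := ((lt_iff x y hx).mp hxy).2
    have h1yz : u t y z = 1 := ((lt_iff y z hyt).mp hyz).2
    refine (lt_iff x z hx).mpr ⟨hzt, ?_⟩
    by_contra hcon
    -- derive distinctness
    have hxyne : x ≠ y := fun h => by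
      rw [h, huxx t y] at h1xy; exact absurd h1xy (by decide)
    have hyzne : y ≠ z := fun h => by
      rw [h, huxx t z] at h1yz; exact absurd h1yz (by decide)
    have hxzne : x ≠ z := by
      intro h
      subst h
      exact z2d _ _ (tri t x y (Ne.symm hx) (Ne.symm hyt) hxyne) h1xy h1yz
    have h1zx : u t z x = 1 := z2a _ _ (tri t x z (Ne.symm hx) (Ne.symm hzt) hxzne) hcon
    -- the 4-element set
    set Z : Finset X := insert t (insert x (insert y {z})) with hZdef
    have hmt : t ∈ Z := by simp [hZdef]
    have hmx : x ∈ Z := by simp [hZdef]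
    have hmy : y ∈ Z := by simp [hZdef]
    have hmz : z ∈ Z := by simp [hZdef]
    have hcard : Z.card = 4 := by
      rw [hZdef]
      rw [card_insert_of_notMem (by simp [hx, hxyne, hxzne, hyt, hzt]; tauto),
        card_insert_of_notMem (by simp [hxyne, hxzne]),
        card_insert_of_notMem (by simp [hyzne]), card_singleton]
    obtain ⟨C', hC'⟩ := h4 Z hcard
    have ev : ∀ (a b c : X) (ha : a ∈ Z) (hb : b ∈ Z) (hc : c ∈ Z), u a b c =
        uC C' ⟨a, ha⟩ ⟨b, hb⟩ ⟨c, hc⟩ := by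
      intro a b c ha hb hc
      exact congrFun (congrFun (congrFun hC' ⟨a, ha⟩) ⟨b, hb⟩) ⟨c, hc⟩
    have ext1 : ∀ (a b : X) (ha : a ∈ Z) (hb : b ∈ Z), u t a b = 1 → a ≠ b →
        (C' ⟨a, ha⟩ - C' ⟨t, hmt⟩).val < (C' ⟨b, hb⟩ - C' ⟨t, hmt⟩).val := by
      intro a b ha hb hv hab
      have e := ev t a b hmt ha hb
      rw [hv] at e
      unfold uC at e
      split_ifs at e with hcnd
      · exact hcnd.2.2.2
      · exact absurd e (by decide)
    have i1 := ext1 x y hmx hmy h1xy hxyne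
    have i2 := ext1 y z hmy hmz h1yz hyzne
    have i3 := ext1 z x hmz hmx h1zx (Ne.symm hxzne)
    omega
  -- now build the cyclic order
  set C := rankEquiv lt hirr htr htot with hCdef
  refine ⟨C, funext fun x => funext fun y => funext fun z => ?_⟩
  by_cases hxy : x = y
  · subst hxy; rw [h0]; unfold uC; rw [if_neg (by tauto)]
  by_cases hyz : y = z
  · subst hyz; rw [huxx]; unfold uC; rw [if_neg (by tauto)]
  by_cases hxz : x = z
  · subst hxz; rw [huxyx]; unfold uC; rw [if_neg (by tauto)]
  -- all distinct
  have rt0 : rnk lt t = 0 := by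
    rw [rnk, Finset.card_eq_zero, Finset.filter_eq_empty_iff]
    intro a _
    exact fun h => (lt_ne_t a t h) rfl
  have rpos : ∀ a : X, a ≠ t → 0 < rnk lt a := by
    intro a ha
    exact Finset.card_pos.mpr ⟨t, by simp [rnk, lt_t a ha]⟩
  have rne : ∀ a b : X, a ≠ b → rnk lt a ≠ rnk lt b := fun a b h =>
    rnk_ne lt hirr htr htot a b h
  have key : ∀ a b : X, a ≠ t → b ≠ t → a ≠ b → (u t a b = 1 ↔ rnk lt a < rnk lt b) := by
    intro a b ha hb hab
    rw [rnk_lt_iff lt hirr htr htot, lt_iff a b ha]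
    tauto
  have claim : u x y z = 1 ↔ betw (rnk lt x) (rnk lt y) (rnk lt z) := by
    by_cases hx : x = t
    · subst hx
      rw [key y z (Ne.symm hxy) (Ne.symm hxz) hyz, rt0]
      have := rpos y (Ne.symm hxy); have := rpos z (Ne.symm hxz)
      have := rne y z hyz
      unfold betw; omega
    by_cases hy : y = t
    · subst hy
      rw [h1 x y z, key z x (Ne.symm hyz) (fun h => hx h) (Ne.symm hxz), rt0]
      have := rpos x hx; have := rpos z (Ne.symm hyz)
      have := rne z x (Ne.symm hxz)
      unfold betw; omega
    by_cases hz : z = t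
    · subst hz
      rw [h1 x y z, h1 y z x, key x y hx hy hxy, rt0]
      have := rpos x hx; have := rpos y hy
      have := rne x y hxy
      unfold betw; omega
    -- none equal t
    have hsum := h3 t x y z (Ne.symm hx) (Ne.symm hy) (Ne.symm hz) hxy hxz hyz
    have hrepr : u x y z = u t x y + u t x z + u t y z := by
      have : ∀ a b c d : ZMod 2, a + b + c + d = 0 → d = a + b + c := by decide
      exact this _ _ _ _ hsum
    have hA : u t x y = if rnk lt x < rnk lt y then 1 else 0 := by
      split_ifs with h
      · exact (key x y hx hy hxy).mpr h
      · exact z2b _ (fun hc => h ((key x y hx hy hxy).mp hc))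
    have hB : u t x z = if rnk lt x < rnk lt z then 1 else 0 := by
      split_ifs with h
      · exact (key x z hx hz hxz).mpr h
      · exact z2b _ (fun hc => h ((key x z hx hz hxz).mp hc))
    have hC : u t y z = if rnk lt y < rnk lt z then 1 else 0 := by
      split_ifs with h
      · exact (key y z hy hz hyz).mpr h
      · exact z2b _ (fun hc => h ((key y z hy hz hyz).mp hc))
    rw [hrepr, hA, hB, hC]
    have d1 := rne x y hxy; have d2 := rne x z hxz; have d3 := rne y z hyz
    split_ifs <;>
      first
        | exact iff_of_true (by decide) (by unfold betw; omega)
        | exact iff_of_false (by decide) (by unfold betw; omega)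
  have cycl := rankEquiv_cyc lt hirr htr htot x y z hxy hyz hxz
  rw [← hCdef] at cycl
  unfold uC
  rcases Classical.em (betw (rnk lt x) (rnk lt y) (rnk lt z)) with hb | hb
  · rw [if_pos ⟨hxy, hyz, hxz, cycl.mpr hb⟩]
    exact claim.mpr hb
  · rw [if_neg (fun hc => hb (cycl.mp hc.2.2.2))]
    exact z2b _ (fun hc => hb (claim.mp hc))


/-- A vector `u ∈ 𝒰^X` is cyclic iff its restriction to every 4-element subset of `X`
is cyclic (Lemma 3 of the paper). -/
theorem stmt4 {X : Type*} [Fintype X] [DecidableEq X] [Nonempty X]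
    (u : X → X → X → ZMod 2) (hu : memU u) :
    IsCyclicVec u ↔
      ∀ Z : Finset X, Z.card = 4 →
        IsCyclicVec (fun a b c : Z => u a.1 b.1 c.1) := by
  constructor
  · rintro ⟨C, rfl⟩ Z hZ
    exact fwd C Z hZ
  · intro h
    exact bwd_s4 u hu h
end

section
/- Let Y = {a,b,c,d,e} be a 5-element set and let u ∈ 𝒰^Y. Define α(t,x,y,z) := u(t,x,y)u(t,y,z) + u(t,x,z)u(x,y,z) ∈ GF(2). Then α(a,b,c,d) + α(a,b,c,e) + α(a,b,d,e) + α(a,c,d,e) + α(b,c,d,e) = 0. Consequently, the number of 4-element subsets Z of Y for which u_Z is not cyclic is even. -/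
open Finset

/-- The quadratic expression whose vanishing characterizes cyclicity of the restriction
to the 4-set {t,x,y,z}. -/
def alphaQ {X : Type*} (u : X → X → X → ZMod 2) (t x y z : X) : ZMod 2 :=
  u t x y * u t y z + u t x z * u x y z

lemma two_eq_zero' : (2 : ZMod 2) = 0 := rfl

lemma memU_deg {X : Type*} {u : X → X → X → ZMod 2} (hu : memU u) (p q r : X)
    (h : p = q ∨ q = r ∨ p = r) : u p q r = 0 := by
  rcases h with rfl | rfl | rfl
  · exact hu.1 _ _
  · rw [hu.2.1]; exact hu.1 _ _
  · rw [hu.2.1, hu.2.1]; exact hu.1 _ _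

lemma memU_eq {X : Type*} {u u' : X → X → X → ZMod 2} (hu : memU u) (hu' : memU u')
    {t x y z : X} (cover : ∀ w : X, w = t ∨ w = x ∨ w = y ∨ w = z)
    (htx : t ≠ x) (hty : t ≠ y) (htz : t ≠ z) (hxy : x ≠ y) (hxz : x ≠ z) (hyz : y ≠ z)
    (e1 : u t x y = u' t x y) (e2 : u t x z = u' t x z) (e3 : u t y z = u' t y z) :
    u = u' := by
  set w : X → X → X → ZMod 2 := fun p q r => u p q r + u' p q r with hw
  have wdeg : ∀ p q r, (p = q ∨ q = r ∨ p = r) → w p q r = 0 := by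
    intro p q r h
    simp only [hw, memU_deg hu p q r h, memU_deg hu' p q r h, add_zero]
  have wcyc : ∀ p q r : X, w p q r = w q r p := by
    intro p q r; simp only [hw]; rw [hu.2.1, hu'.2.1]
  have wswap : ∀ p q r : X, w p q r = w q p r := by
    intro p q r
    by_cases hpq : p = q
    · subst hpq; rfl
    by_cases hqr : q = r
    · subst hqr; rw [wdeg _ _ _ (Or.inr (Or.inl rfl)), wdeg _ _ _ (Or.inr (Or.inr rfl))]
    by_cases hpr : p = r
    · subst hpr; rw [wdeg _ _ _ (Or.inr (Or.inr rfl)), wdeg _ _ _ (Or.inr (Or.inl rfl))]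
    have h1 := hu.2.2.1 p q r hpq hqr hpr
    have h2 := hu'.2.2.1 p q r hpq hqr hpr
    simp only [hw]
    linear_combination h1 + h2 + (1 - u q p r - u' q p r) * two_eq_zero'
  have h3txy : w t x y = 0 := by
    simp only [hw]; linear_combination e1 + u' t x y * two_eq_zero'
  have h3txz : w t x z = 0 := by
    simp only [hw]; linear_combination e2 + u' t x z * two_eq_zero'
  have h3tyz : w t y z = 0 := by
    simp only [hw]; linear_combination e3 + u' t y z * two_eq_zero'
  have h3xyz : w x y z = 0 := by
    have r1 := hu.2.2.2 t x y z htx hty htz hxy hxz hyz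
    have r2 := hu'.2.2.2 t x y z htx hty htz hxy hxz hyz
    have hs : w t x y + w t x z + w t y z + w x y z = 0 := by
      simp only [hw]; linear_combination r1 + r2
    rw [h3txy, h3txz, h3tyz] at hs; linear_combination hs
  have hzero : ∀ p q r : X, w p q r = 0 := by
    intro p q r
    rcases cover p with rfl | rfl | rfl | rfl <;>
      rcases cover q with rfl | rfl | rfl | rfl <;>
        rcases cover r with rfl | rfl | rfl | rfl
    · exact wdeg _ _ _ (Or.inl rfl)
    · exact wdeg _ _ _ (Or.inl rfl)
    · exact wdeg _ _ _ (Or.inl rfl)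
    · exact wdeg _ _ _ (Or.inl rfl)
    · exact wdeg _ _ _ (Or.inr (Or.inr rfl))
    · exact wdeg _ _ _ (Or.inr (Or.inl rfl))
    · exact h3txy
    · exact h3txz
    · exact wdeg _ _ _ (Or.inr (Or.inr rfl))
    · rw [wswap, wcyc]; exact h3txy
    · exact wdeg _ _ _ (Or.inr (Or.inl rfl))
    · exact h3tyz
    · exact wdeg _ _ _ (Or.inr (Or.inr rfl))
    · rw [wswap, wcyc]; exact h3txz
    · rw [wswap, wcyc]; exact h3tyz
    · exact wdeg _ _ _ (Or.inr (Or.inl rfl))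
    · exact wdeg _ _ _ (Or.inr (Or.inl rfl))
    · exact wdeg _ _ _ (Or.inr (Or.inr rfl))
    · rw [wswap]; exact h3txy
    · rw [wswap]; exact h3txz
    · exact wdeg _ _ _ (Or.inl rfl)
    · exact wdeg _ _ _ (Or.inl rfl)
    · exact wdeg _ _ _ (Or.inl rfl)
    · exact wdeg _ _ _ (Or.inl rfl)
    · rw [wcyc, wcyc]; exact h3txy
    · exact wdeg _ _ _ (Or.inr (Or.inr rfl))
    · exact wdeg _ _ _ (Or.inr (Or.inl rfl))
    · exact h3xyz
    · rw [wcyc, wcyc]; exact h3txz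
    · exact wdeg _ _ _ (Or.inr (Or.inr rfl))
    · rw [wswap, wcyc]; exact h3xyz
    · exact wdeg _ _ _ (Or.inr (Or.inl rfl))
    · exact wdeg _ _ _ (Or.inr (Or.inl rfl))
    · rw [wcyc]; exact h3txy
    · exact wdeg _ _ _ (Or.inr (Or.inr rfl))
    · rw [wswap]; exact h3tyz
    · rw [wcyc, wswap]; exact h3txy
    · exact wdeg _ _ _ (Or.inr (Or.inl rfl))
    · exact wdeg _ _ _ (Or.inr (Or.inr rfl))
    · rw [wswap]; exact h3xyz
    · exact wdeg _ _ _ (Or.inl rfl)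
    · exact wdeg _ _ _ (Or.inl rfl)
    · exact wdeg _ _ _ (Or.inl rfl)
    · exact wdeg _ _ _ (Or.inl rfl)
    · rw [wcyc, wcyc]; exact h3tyz
    · rw [wcyc, wcyc]; exact h3xyz
    · exact wdeg _ _ _ (Or.inr (Or.inr rfl))
    · exact wdeg _ _ _ (Or.inr (Or.inl rfl))
    · exact wdeg _ _ _ (Or.inr (Or.inl rfl))
    · rw [wcyc]; exact h3txz
    · rw [wcyc]; exact h3tyz
    · exact wdeg _ _ _ (Or.inr (Or.inr rfl))
    · rw [wcyc, wswap]; exact h3txz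
    · exact wdeg _ _ _ (Or.inr (Or.inl rfl))
    · rw [wcyc]; exact h3xyz
    · exact wdeg _ _ _ (Or.inr (Or.inr rfl))
    · rw [wcyc, wswap]; exact h3tyz
    · rw [wcyc, wswap]; exact h3xyz
    · exact wdeg _ _ _ (Or.inr (Or.inl rfl))
    · exact wdeg _ _ _ (Or.inr (Or.inr rfl))
    · exact wdeg _ _ _ (Or.inl rfl)
    · exact wdeg _ _ _ (Or.inl rfl)
    · exact wdeg _ _ _ (Or.inl rfl)
    · exact wdeg _ _ _ (Or.inl rfl)
  funext p q r
  have hz := hzero p q r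
  simp only [hw] at hz
  linear_combination hz - u' p q r * two_eq_zero'




def M (v1 v2 v3 : ZMod 2) (x y z : ZMod 4) : ZMod 2 :=
  if x ≠ y ∧ y ≠ z ∧ x ≠ z then
    (if x.val + y.val + z.val = 3 then v1
     else if x.val + y.val + z.val = 4 then v2
     else if x.val + y.val + z.val = 5 then v3
     else v1 + v2 + v3)
    + (if y.val < x.val then 1 else 0) + (if z.val < x.val then 1 else 0)
    + (if z.val < y.val then 1 else 0)
  else 0

lemma Mm1 : ∀ v1 v2 v3 : ZMod 2, ∀ x y : ZMod 4, M v1 v2 v3 x x y = 0 := by decide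
lemma Mm2 : ∀ v1 v2 v3 : ZMod 2, ∀ x y z : ZMod 4, M v1 v2 v3 x y z = M v1 v2 v3 y z x := by decide
lemma Mm3 : ∀ v1 v2 v3 : ZMod 2, ∀ x y z : ZMod 4, x ≠ y ∧ y ≠ z ∧ x ≠ z →
    M v1 v2 v3 x y z + M v1 v2 v3 y x z = 1 := by decide
lemma Mm4 : ∀ v1 v2 v3 : ZMod 2, ∀ t x y z : ZMod 4, t ≠ x ∧ t ≠ y ∧ t ≠ z ∧ x ≠ y ∧ x ≠ z ∧ y ≠ z →
    M v1 v2 v3 t x y + M v1 v2 v3 t x z + M v1 v2 v3 t y z + M v1 v2 v3 x y z = 0 := by decide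

lemma M_memU (v1 v2 v3 : ZMod 2) : memU (M v1 v2 v3) :=
  ⟨Mm1 v1 v2 v3, Mm2 v1 v2 v3,
   fun x y z h1 h2 h3 => Mm3 v1 v2 v3 x y z ⟨h1, h2, h3⟩,
   fun t x y z h1 h2 h3 h4 h5 h6 => Mm4 v1 v2 v3 t x y z ⟨h1, h2, h3, h4, h5, h6⟩⟩

lemma M_vals : ∀ v1 v2 v3 : ZMod 2,
    M v1 v2 v3 0 1 2 = v1 ∧ M v1 v2 v3 0 1 3 = v2 ∧ M v1 v2 v3 0 2 3 = v3 := by decide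

lemma M_cyclic' : ∀ v1 v2 v3 : ZMod 2,
    M v1 v2 v3 0 1 2 * M v1 v2 v3 0 2 3 + M v1 v2 v3 0 1 3 * M v1 v2 v3 1 2 3 = 0 →
    ∃ C : ZMod 4 ≃ ZMod (Fintype.card (ZMod 4)), M v1 v2 v3 = uC C := by decide

lemma alpha_g' : ∀ p q r s : ZMod 4, p ≠ q ∧ p ≠ r ∧ p ≠ s ∧ q ≠ r ∧ q ≠ s ∧ r ≠ s →
    (if (q-p).val < (r-p).val then (1:ZMod 2) else 0) * (if (r-p).val < (s-p).val then (1:ZMod 2) else 0)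
  + (if (q-p).val < (s-p).val then (1:ZMod 2) else 0) * (if (r-q).val < (s-q).val then (1:ZMod 2) else 0) = 0 := by decide

lemma zmod_cast_val {n m : ℕ} (h : n = m) (x : ZMod n) :
    ((Equiv.cast (congrArg ZMod h)) x).val = x.val := by subst h; rfl

lemma zmod_cast_sub {n m : ℕ} (h : n = m) (x y : ZMod n) :
    (Equiv.cast (congrArg ZMod h)) (x - y)
      = Equiv.cast (congrArg ZMod h) x - Equiv.cast (congrArg ZMod h) y := by subst h; rfl

lemma memU_comp {X X' : Type*} {f : X → X'} (hf : Function.Injective f)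
    (u : X' → X' → X' → ZMod 2) (hu : memU u) : memU (fun p q r => u (f p) (f q) (f r)) :=
  ⟨fun x y => hu.1 _ _, fun x y z => hu.2.1 _ _ _,
   fun x y z h1 h2 h3 => hu.2.2.1 _ _ _ (hf.ne h1) (hf.ne h2) (hf.ne h3),
   fun t x y z h1 h2 h3 h4 h5 h6 =>
     hu.2.2.2 _ _ _ _ (hf.ne h1) (hf.ne h2) (hf.ne h3) (hf.ne h4) (hf.ne h5) (hf.ne h6)⟩

lemma cover_of_card4 {X : Type*} [Fintype X] [DecidableEq X] (h4 : Fintype.card X = 4)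
    {t x y z : X} (htx : t ≠ x) (hty : t ≠ y) (htz : t ≠ z)
    (hxy : x ≠ y) (hxz : x ≠ z) (hyz : y ≠ z) :
    ∀ w : X, w = t ∨ w = x ∨ w = y ∨ w = z := by
  intro w
  have hc : ({t, x, y, z} : Finset X).card = 4 := by
    rw [Finset.card_insert_of_notMem (by simp [htx, hty, htz]),
        Finset.card_insert_of_notMem (by simp [hxy, hxz]),
        Finset.card_insert_of_notMem (by simp [hyz]), Finset.card_singleton]
  have huniv : ({t, x, y, z} : Finset X) = Finset.univ :=
    Finset.eq_univ_of_card _ (by rw [hc, h4])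
  have hw : w ∈ ({t, x, y, z} : Finset X) := huniv ▸ Finset.mem_univ w
  simpa using hw

lemma uC_trans {X X' : Type*} [Fintype X] [DecidableEq X] [Fintype X'] [DecidableEq X']
    (e : X ≃ X') (h : Fintype.card X' = Fintype.card X) (C' : X' ≃ ZMod (Fintype.card X'))
    (p q r : X) :
    uC (e.trans (C'.trans (Equiv.cast (congrArg ZMod h)))) p q r = uC C' (e p) (e q) (e r) := by
  unfold uC
  have hval : ∀ a b : ZMod (Fintype.card X'),
      ((Equiv.cast (congrArg ZMod h)) a - (Equiv.cast (congrArg ZMod h)) b).val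
        = (a - b).val := by
    intro a b; rw [← zmod_cast_sub h, zmod_cast_val h]
  refine if_congr ?_ rfl rfl
  simp only [Equiv.trans_apply, hval, ne_eq, EmbeddingLike.apply_eq_iff_eq]

lemma cyclic_iff {X : Type*} [Fintype X] [DecidableEq X] (h4 : Fintype.card X = 4)
    {t x y z : X} (htx : t ≠ x) (hty : t ≠ y) (htz : t ≠ z)
    (hxy : x ≠ y) (hxz : x ≠ z) (hyz : y ≠ z)
    (u : X → X → X → ZMod 2) (hu : memU u) :
    IsCyclicVec u ↔ alphaQ u t x y z = 0 := by
  have cover := cover_of_card4 h4 htx hty htz hxy hxz hyz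
  constructor
  · rintro ⟨C, rfl⟩
    set D : X → ZMod 4 := fun w => Equiv.cast (congrArg ZMod h4) (C w) with hD
    have hDinj : Function.Injective D := by
      intro a b hab
      exact C.injective ((Equiv.cast (congrArg ZMod h4)).injective hab)
    have hval : ∀ a b : X, (C a - C b).val = (D a - D b).val := by
      intro a b; simp only [hD]; rw [← zmod_cast_sub h4, zmod_cast_val h4]
    have huc : ∀ p q r : X, p ≠ q → q ≠ r → p ≠ r →
        uC C p q r = (if (D q - D p).val < (D r - D p).val then (1:ZMod 2) else 0) := by
      intro p q r hpq hqr hpr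
      unfold uC
      simp [hpq, hqr, hpr, hval]
    unfold alphaQ
    rw [huc t x y htx hxy hty, huc t y z hty hyz htz, huc t x z htx hxz htz,
        huc x y z hxy hyz hxz]
    exact alpha_g' (D t) (D x) (D y) (D z)
      ⟨hDinj.ne htx, hDinj.ne hty, hDinj.ne htz, hDinj.ne hxy, hDinj.ne hxz, hDinj.ne hyz⟩
  · intro halpha
    set v1 := u t x y with hv1
    set v2 := u t x z with hv2
    set v3 := u t y z with hv3
    set f : X → ZMod 4 := fun w => if w = t then 0 else if w = x then 1 else if w = y then 2 else 3 with hf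
    set g : ZMod 4 → X := fun i => if i = 0 then t else if i = 1 then x else if i = 2 then y else z with hg
    have hft : f t = 0 := by simp [hf]
    have hfx : f x = 1 := by simp [hf, Ne.symm htx]
    have hfy : f y = 2 := by simp [hf, Ne.symm hty, Ne.symm hxy]
    have hfz : f z = 3 := by simp [hf, Ne.symm htz, Ne.symm hxz, Ne.symm hyz]
    have hg0 : g 0 = t := by simp [hg]
    have hg1 : g 1 = x := by
      simp only [hg]; rw [if_neg (by decide)]; simp
    have hg2 : g 2 = y := by
      simp only [hg]; rw [if_neg (by decide), if_neg (by decide)]; simp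
    have hg3 : g 3 = z := by
      simp only [hg]; rw [if_neg (by decide), if_neg (by decide), if_neg (by decide)]
    have hi4 : ∀ i : ZMod 4, i = 0 ∨ i = 1 ∨ i = 2 ∨ i = 3 := by decide
    set e : X ≃ ZMod 4 :=
      { toFun := f, invFun := g,
        left_inv := by
          intro w
          rcases cover w with rfl | rfl | rfl | rfl
          · rw [hft, hg0]
          · rw [hfx, hg1]
          · rw [hfy, hg2]
          · rw [hfz, hg3],
        right_inv := by
          intro i
          rcases hi4 i with rfl | rfl | rfl | rfl
          · rw [hg0, hft]
          · rw [hg1, hfx]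
          · rw [hg2, hfy]
          · rw [hg3, hfz] } with he
    have het : e t = 0 := hft
    have hex : e x = 1 := hfx
    have hey : e y = 2 := hfy
    have hez : e z = 3 := hfz
    have hMv := M_vals v1 v2 v3
    have hu' : memU (fun p q r => M v1 v2 v3 (e p) (e q) (e r)) :=
      memU_comp e.injective _ (M_memU v1 v2 v3)
    have hEq : u = fun p q r => M v1 v2 v3 (e p) (e q) (e r) := by
      refine memU_eq hu hu' cover htx hty htz hxy hxz hyz ?_ ?_ ?_
      · show v1 = M v1 v2 v3 (e t) (e x) (e y)
        rw [het, hex, hey, hMv.1]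
      · show v2 = M v1 v2 v3 (e t) (e x) (e z)
        rw [het, hex, hez, hMv.2.1]
      · show v3 = M v1 v2 v3 (e t) (e y) (e z)
        rw [het, hey, hez, hMv.2.2]
    have halphaM : M v1 v2 v3 0 1 2 * M v1 v2 v3 0 2 3 + M v1 v2 v3 0 1 3 * M v1 v2 v3 1 2 3 = 0 := by
      have : alphaQ u t x y z
          = M v1 v2 v3 0 1 2 * M v1 v2 v3 0 2 3 + M v1 v2 v3 0 1 3 * M v1 v2 v3 1 2 3 := by
        unfold alphaQ
        rw [hEq]
        simp only [het, hex, hey, hez]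
      rw [← this]; exact halpha
    obtain ⟨C', hC'⟩ := M_cyclic' v1 v2 v3 halphaM
    have hcard : Fintype.card (ZMod 4) = Fintype.card X := (ZMod.card 4).trans h4.symm
    refine ⟨e.trans (C'.trans (Equiv.cast (congrArg ZMod hcard))), ?_⟩
    funext p q r
    rw [uC_trans e hcard C' p q r, ← hC', hEq]

lemma zmod2_cases : ∀ v : ZMod 2, ¬ v = 0 ↔ v = 1 := by decide

lemma alpha_sum_decide : ∀ p q r s v w : ZMod 2,
    p * s + q * (p + q + s) + (p * v + r * (p + r + v)) + (q * w + r * (q + r + w))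
      + (s * w + v * (s + v + w))
      + ((p + q + s) * (q + r + w) + (p + r + v) * (s + v + w)) = 0 := by decide

lemma parity_decide : ∀ w1 w2 w3 w4 w5 : ZMod 2, w5 + w4 + w3 + w2 + w1 = 0 →
    Even ((if w1 = 1 then 1 else 0) + ((if w2 = 1 then 1 else 0) + ((if w3 = 1 then 1 else 0)
      + ((if w4 = 1 then 1 else 0) + (if w5 = 1 then 1 else 0)))) : ℕ) := by decide


/-- For `u ∈ 𝒰^Y` on a 5-set `Y = {a,b,c,d,e}`, the five quantities `α` sum to zero;
consequently the number of 4-subsets of `Y` on which `u` restricts to a non-cyclic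
vector is even. -/
theorem stmt6 {Y : Type*} [Fintype Y] [DecidableEq Y]
    (a b c d e : Y) (h5 : Fintype.card Y = 5)
    (hab : a ≠ b) (hac : a ≠ c) (had : a ≠ d) (hae : a ≠ e)
    (hbc : b ≠ c) (hbd : b ≠ d) (hbe : b ≠ e)
    (hcd : c ≠ d) (hce : c ≠ e) (hde : d ≠ e)
    (u : Y → Y → Y → ZMod 2) (hu : memU u) :
    alphaQ u a b c d + alphaQ u a b c e + alphaQ u a b d e
        + alphaQ u a c d e + alphaQ u b c d e = 0 ∧
    Even ({Z : Finset Y | Z.card = 4 ∧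
      ¬ IsCyclicVec (fun p q r : Z => u p.1 q.1 r.1)}.ncard) := by
  classical
  -- Part 1: the alpha identity
  have cond3 := hu.2.2.2
  have h1 : u b c d = u a b c + u a b d + u a c d := by
    have h := cond3 a b c d hab hac had hbc hbd hcd
    linear_combination h - (u a b c + u a b d + u a c d) * two_eq_zero'
  have h2 : u b c e = u a b c + u a b e + u a c e := by
    have h := cond3 a b c e hab hac hae hbc hbe hce
    linear_combination h - (u a b c + u a b e + u a c e) * two_eq_zero'
  have h3 : u b d e = u a b d + u a b e + u a d e := by
    have h := cond3 a b d e hab had hae hbd hbe hde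
    linear_combination h - (u a b d + u a b e + u a d e) * two_eq_zero'
  have h4 : u c d e = u a c d + u a c e + u a d e := by
    have h := cond3 a c d e hac had hae hcd hce hde
    linear_combination h - (u a c d + u a c e + u a d e) * two_eq_zero'
  have halpha : alphaQ u a b c d + alphaQ u a b c e + alphaQ u a b d e
      + alphaQ u a c d e + alphaQ u b c d e = 0 := by
    unfold alphaQ
    rw [h1, h2, h3, h4]
    generalize u a b c = p
    generalize u a b d = q
    generalize u a b e = r
    generalize u a c d = s
    generalize u a c e = v
    generalize u a d e = w
    revert p q r s v w
    exact alpha_sum_decide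
  refine ⟨halpha, ?_⟩
  -- Part 2: counting
  set S1 : Finset Y := {b, c, d, e} with hS1
  set S2 : Finset Y := {a, c, d, e} with hS2
  set S3 : Finset Y := {a, b, d, e} with hS3
  set S4 : Finset Y := {a, b, c, e} with hS4
  set S5 : Finset Y := {a, b, c, d} with hS5
  have hcard1 : S1.card = 4 := by
    rw [hS1, Finset.card_insert_of_notMem (by simp [hbc, hbd, hbe]),
        Finset.card_insert_of_notMem (by simp [hcd, hce]),
        Finset.card_insert_of_notMem (by simp [hde]), Finset.card_singleton]
  have hcard2 : S2.card = 4 := by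
    rw [hS2, Finset.card_insert_of_notMem (by simp [hac, had, hae]),
        Finset.card_insert_of_notMem (by simp [hcd, hce]),
        Finset.card_insert_of_notMem (by simp [hde]), Finset.card_singleton]
  have hcard3 : S3.card = 4 := by
    rw [hS3, Finset.card_insert_of_notMem (by simp [hab, had, hae]),
        Finset.card_insert_of_notMem (by simp [hbd, hbe]),
        Finset.card_insert_of_notMem (by simp [hde]), Finset.card_singleton]
  have hcard4 : S4.card = 4 := by
    rw [hS4, Finset.card_insert_of_notMem (by simp [hab, hac, hae]),
        Finset.card_insert_of_notMem (by simp [hbc, hbe]),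
        Finset.card_insert_of_notMem (by simp [hce]), Finset.card_singleton]
  have hcard5 : S5.card = 4 := by
    rw [hS5, Finset.card_insert_of_notMem (by simp [hab, hac, had]),
        Finset.card_insert_of_notMem (by simp [hbc, hbd]),
        Finset.card_insert_of_notMem (by simp [hcd]), Finset.card_singleton]
  have hc5 : ({a, b, c, d, e} : Finset Y).card = 5 := by
    rw [Finset.card_insert_of_notMem (by simp [hab, hac, had, hae])]
    rw [show ({b,c,d,e} : Finset Y).card = 4 from hcard1]
  have huniv : (Finset.univ : Finset Y) = {a, b, c, d, e} :=
    (Finset.eq_univ_of_card _ (by rw [hc5, h5])).symm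
  have cover5 : ∀ w : Y, w = a ∨ w = b ∨ w = c ∨ w = d ∨ w = e := by
    intro w
    have hw : w ∈ ({a, b, c, d, e} : Finset Y) := huniv ▸ Finset.mem_univ w
    simpa using hw
  -- the five diffs
  have hd1 : Finset.univ \ {a} = S1 := by
    rw [huniv, Finset.sdiff_singleton_eq_erase,
        Finset.erase_insert (by simp [hab, hac, had, hae])]
  have hd2 : Finset.univ \ {b} = S2 := by
    rw [huniv, Finset.sdiff_singleton_eq_erase,
        Finset.erase_insert_of_ne hab.symm.symm,
        Finset.erase_insert (by simp [hbc, hbd, hbe])]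
  have hd3 : Finset.univ \ {c} = S3 := by
    rw [huniv, Finset.sdiff_singleton_eq_erase,
        Finset.erase_insert_of_ne hac.symm.symm,
        Finset.erase_insert_of_ne hbc.symm.symm,
        Finset.erase_insert (by simp [hcd, hce])]
  have hd4 : Finset.univ \ {d} = S4 := by
    rw [huniv, Finset.sdiff_singleton_eq_erase,
        Finset.erase_insert_of_ne had.symm.symm,
        Finset.erase_insert_of_ne hbd.symm.symm,
        Finset.erase_insert_of_ne hcd.symm.symm,
        Finset.erase_insert (by simp [hde])]
  have hd5 : Finset.univ \ {e} = S5 := by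
    rw [huniv, Finset.sdiff_singleton_eq_erase,
        Finset.erase_insert_of_ne hae.symm.symm,
        Finset.erase_insert_of_ne hbe.symm.symm,
        Finset.erase_insert_of_ne hce.symm.symm,
        Finset.erase_insert_of_ne hde.symm.symm, Finset.erase_singleton]
    simp [hS5]
  -- distinctness of the five 4-subsets
  have ha1 : a ∉ S1 := by simp [hS1, hab, hac, had, hae]
  have hb2 : b ∉ S2 := by simp [hS2, hab.symm, hbc, hbd, hbe]
  have hc3 : c ∉ S3 := by simp [hS3, hac.symm, hbc.symm, hcd, hce]
  have hd4' : d ∉ S4 := by simp [hS4, had.symm, hbd.symm, hcd.symm, hde]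
  have ha2 : a ∈ S2 := by simp [hS2]
  have ha3 : a ∈ S3 := by simp [hS3]
  have ha4 : a ∈ S4 := by simp [hS4]
  have ha5 : a ∈ S5 := by simp [hS5]
  have hb3 : b ∈ S3 := by simp [hS3]
  have hb4 : b ∈ S4 := by simp [hS4]
  have hb5 : b ∈ S5 := by simp [hS5]
  have hc4' : c ∈ S4 := by simp [hS4]
  have hc5' : c ∈ S5 := by simp [hS5]
  have hd5' : d ∈ S5 := by simp [hS5]
  have ne12 : S1 ≠ S2 := by intro h; rw [h] at ha1; exact ha1 ha2
  have ne13 : S1 ≠ S3 := by intro h; rw [h] at ha1; exact ha1 ha3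
  have ne14 : S1 ≠ S4 := by intro h; rw [h] at ha1; exact ha1 ha4
  have ne15 : S1 ≠ S5 := by intro h; rw [h] at ha1; exact ha1 ha5
  have ne23 : S2 ≠ S3 := by intro h; rw [h] at hb2; exact hb2 hb3
  have ne24 : S2 ≠ S4 := by intro h; rw [h] at hb2; exact hb2 hb4
  have ne25 : S2 ≠ S5 := by intro h; rw [h] at hb2; exact hb2 hb5
  have ne34 : S3 ≠ S4 := by intro h; rw [h] at hc3; exact hc3 hc4'
  have ne35 : S3 ≠ S5 := by intro h; rw [h] at hc3; exact hc3 hc5'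
  have ne45 : S4 ≠ S5 := by intro h; rw [h] at hd4'; exact hd4' hd5'
  -- the iff for each subset
  have key : ∀ (S : Finset Y) (p q r s : Y) (hp : p ∈ S) (hq : q ∈ S) (hr : r ∈ S) (hs : s ∈ S),
      S.card = 4 → p ≠ q → p ≠ r → p ≠ s → q ≠ r → q ≠ s → r ≠ s →
      (¬ IsCyclicVec (fun p' q' r' : S => u p'.1 q'.1 r'.1) ↔ alphaQ u p q r s = 1) := by
    intro S p q r s hp hq hr hs hcard hpq hpr hps hqr hqs hrs
    have h4 : Fintype.card S = 4 := by rw [Fintype.card_coe]; exact hcard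
    have hiff := cyclic_iff (t := (⟨p, hp⟩ : S)) (x := (⟨q, hq⟩ : S)) (y := (⟨r, hr⟩ : S))
      (z := (⟨s, hs⟩ : S)) h4
      (by simp [Subtype.ext_iff, hpq]) (by simp [Subtype.ext_iff, hpr])
      (by simp [Subtype.ext_iff, hps]) (by simp [Subtype.ext_iff, hqr])
      (by simp [Subtype.ext_iff, hqs]) (by simp [Subtype.ext_iff, hrs])
      (fun p' q' r' : S => u p'.1 q'.1 r'.1)
      (memU_comp Subtype.val_injective u hu)
    rw [hiff]
    exact zmod2_cases _
  have hiff1 := key S1 b c d e (by simp [hS1]) (by simp [hS1]) (by simp [hS1]) (by simp [hS1])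
    hcard1 hbc hbd hbe hcd hce hde
  have hiff2 := key S2 a c d e (by simp [hS2]) (by simp [hS2]) (by simp [hS2]) (by simp [hS2])
    hcard2 hac had hae hcd hce hde
  have hiff3 := key S3 a b d e (by simp [hS3]) (by simp [hS3]) (by simp [hS3]) (by simp [hS3])
    hcard3 hab had hae hbd hbe hde
  have hiff4 := key S4 a b c e (by simp [hS4]) (by simp [hS4]) (by simp [hS4]) (by simp [hS4])
    hcard4 hab hac hae hbc hbe hce
  have hiff5 := key S5 a b c d (by simp [hS5]) (by simp [hS5]) (by simp [hS5]) (by simp [hS5])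
    hcard5 hab hac had hbc hbd hcd
  -- the set equals a finset
  set P : Finset Y → Prop := fun Z => ¬ IsCyclicVec (fun p q r : Z => u p.1 q.1 r.1) with hP
  set T : Finset (Finset Y) := ({S1, S2, S3, S4, S5} : Finset (Finset Y)).filter P with hT
  have hset : {Z : Finset Y | Z.card = 4 ∧
      ¬ IsCyclicVec (fun p q r : Z => u p.1 q.1 r.1)} = ↑T := by
    ext Z
    simp only [Set.mem_setOf_eq, hT, Finset.coe_filter, Finset.mem_insert,
      Finset.mem_singleton, hP]
    constructor
    · rintro ⟨hc4, hnc⟩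
      refine ⟨?_, hnc⟩
      have hsd : (Finset.univ \ Z).card = 1 := by
        rw [Finset.card_sdiff_of_subset (Finset.subset_univ Z), Finset.card_univ, h5, hc4]
      obtain ⟨w, hw⟩ := Finset.card_eq_one.mp hsd
      have hZ : Z = Finset.univ \ {w} := by
        rw [← hw, Finset.sdiff_sdiff_eq_self (Finset.subset_univ Z)]
      rcases cover5 w with rfl | rfl | rfl | rfl | rfl
      · exact Or.inl (by rw [hZ, hd1])
      · exact Or.inr (Or.inl (by rw [hZ, hd2]))
      · exact Or.inr (Or.inr (Or.inl (by rw [hZ, hd3])))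
      · exact Or.inr (Or.inr (Or.inr (Or.inl (by rw [hZ, hd4]))))
      · exact Or.inr (Or.inr (Or.inr (Or.inr (by rw [hZ, hd5]))))
    · rintro ⟨hmem, hnc⟩
      refine ⟨?_, hnc⟩
      rcases hmem with rfl | rfl | rfl | rfl | rfl
      exacts [hcard1, hcard2, hcard3, hcard4, hcard5]
  rw [hset, Set.ncard_coe_finset]
  -- compute the cardinality
  rw [hT, Finset.card_filter]
  rw [Finset.sum_insert (by simp [ne12, ne13, ne14, ne15]),
      Finset.sum_insert (by simp [ne23, ne24, ne25]),
      Finset.sum_insert (by simp [ne34, ne35]),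
      Finset.sum_insert (by simp [ne45]),
      Finset.sum_singleton]
  rw [if_congr hiff1 rfl rfl, if_congr hiff2 rfl rfl,
      if_congr hiff3 rfl rfl, if_congr hiff4 rfl rfl,
      if_congr hiff5 rfl rfl]
  exact parity_decide _ _ _ _ _ halpha
end

section
/- Fix a finite set X with |X| = n ≥ 3, a distinguished element ∞ ∈ X, and a linear order < on X. Let T = {(∞,a,b) : a,b ∈ X∖{∞}, a < b}. Then the restriction map u ↦ u|_T from 𝒰^X to GF(2)^T is a bijection. In particular, 𝒰^X is an affine subspace of GF(2)^{X³} of dimension (n−1 choose 2). -/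
open Finset

section Aux
set_option linter.unusedSectionVars false
variable {X : Type*} [LinearOrder X]

def gaux (inf : X) (f : {p : X × X // p.1 ≠ inf ∧ p.2 ≠ inf ∧ p.1 < p.2} → ZMod 2)
    (a b : X) : ZMod 2 :=
  if h : a ≠ inf ∧ b ≠ inf ∧ a < b then f ⟨(a, b), h⟩
  else if h : b ≠ inf ∧ a ≠ inf ∧ b < a then 1 + f ⟨(b, a), h⟩
  else 0

lemma gaux_swap (inf : X) (f : {p : X × X // p.1 ≠ inf ∧ p.2 ≠ inf ∧ p.1 < p.2} → ZMod 2)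
    {a b : X} (ha : a ≠ inf) (hb : b ≠ inf) (hab : a ≠ b) :
    gaux inf f a b + gaux inf f b a = 1 := by
  rcases hab.lt_or_gt with h | h <;>
    simp [gaux, ha, hb, h, h.not_gt, h.ne, h.ne'] <;> ring_nf <;>
      simp [show (2 : ZMod 2) = 0 from rfl]

def uaux (inf : X) (f : {p : X × X // p.1 ≠ inf ∧ p.2 ≠ inf ∧ p.1 < p.2} → ZMod 2)
    (x y z : X) : ZMod 2 :=
  if x = y ∨ y = z ∨ x = z then 0
  else if x = inf then gaux inf f y z
  else if y = inf then gaux inf f z x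
  else if z = inf then gaux inf f x y
  else gaux inf f x y + gaux inf f x z + gaux inf f y z


variable {inf : X} {f : {p : X × X // p.1 ≠ inf ∧ p.2 ≠ inf ∧ p.1 < p.2} → ZMod 2}

lemma uaux_i1 {y z : X} (hyz : y ≠ z) (hy : y ≠ inf) (hz : z ≠ inf) :
    uaux inf f inf y z = gaux inf f y z := by
  simp [uaux, hyz, Ne.symm hy, Ne.symm hz]

lemma uaux_i2 {a b : X} (hab : a ≠ b) (ha : a ≠ inf) (hb : b ≠ inf) :
    uaux inf f a inf b = gaux inf f b a := by
  simp [uaux, hab, ha, hb, Ne.symm ha, Ne.symm hb]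

lemma uaux_i3 {a b : X} (hab : a ≠ b) (ha : a ≠ inf) (hb : b ≠ inf) :
    uaux inf f a b inf = gaux inf f a b := by
  simp [uaux, hab, ha, hb]

lemma uaux_ne {x y z : X} (hxy : x ≠ y) (hyz : y ≠ z) (hxz : x ≠ z)
    (hx : x ≠ inf) (hy : y ≠ inf) (hz : z ≠ inf) :
    uaux inf f x y z = gaux inf f x y + gaux inf f x z + gaux inf f y z := by
  simp [uaux, hxy, hyz, hxz, hx, hy, hz]

lemma z2A : ∀ a a' c d : ZMod 2, a + a' = 1 → (a + c + d) + (a' + d + c) = 1 := by decide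
lemma z2B : ∀ a a' b b' c : ZMod 2, a + a' = 1 → b + b' = 1 → a + b + c = c + a' + b' := by decide
lemma z2C : ∀ a b c : ZMod 2, a + b + c + (a + b + c) = 0 := by decide
lemma z2D : ∀ a a' b b' c : ZMod 2, a + a' = 1 → b + b' = 1 → a' + b' + (a + b + c) + c = 0 := by
  decide
lemma z2E : ∀ a b b' c c' : ZMod 2, b + b' = 1 → c + c' = 1 → a + (a + b + c) + b' + c' = 0 := by
  decide
lemma z2F : ∀ a b c d e f : ZMod 2, (a + b + d) + (a + c + e) + (b + c + f) + (d + e + f) = 0 := by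
  decide
lemma z2G : ∀ a b c : ZMod 2, (a + b + c) + a + b + c = 0 := by decide

lemma memU_uaux (inf : X) (f : {p : X × X // p.1 ≠ inf ∧ p.2 ≠ inf ∧ p.1 < p.2} → ZMod 2) :
    memU (uaux inf f) := by
  refine ⟨fun x y => by simp [uaux], fun x y z => ?_, fun x y z hxy hyz hxz => ?_,
    fun t x y z htx hty htz hxy hxz hyz => ?_⟩
  · by_cases hd : x = y ∨ y = z ∨ x = z
    · have hd' : y = z ∨ z = x ∨ y = x := by tauto
      simp [uaux, hd, hd']
    · push_neg at hd
      obtain ⟨hxy, hyz, hxz⟩ := hd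
      by_cases hx : x = inf
      · subst hx
        rw [uaux_i1 hyz hxy.symm hxz.symm, uaux_i3 hyz hxy.symm hxz.symm]
      · by_cases hy : y = inf
        · subst hy
          rw [uaux_i2 hxz hx hyz.symm, uaux_i1 (Ne.symm hxz) hyz.symm hx]
        · by_cases hz : z = inf
          · subst hz
            rw [uaux_i3 hxy hx hy, uaux_i2 (Ne.symm hxy) hy hx]
          · rw [uaux_ne hxy hyz hxz hx hy hz, uaux_ne hyz (Ne.symm hxz) (Ne.symm hxy) hy hz hx]
            exact z2B _ _ _ _ _ (gaux_swap inf f hx hy hxy) (gaux_swap inf f hx hz hxz)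
  · by_cases hx : x = inf
    · subst hx
      rw [uaux_i1 hyz hxy.symm hxz.symm, uaux_i2 hyz hxy.symm hxz.symm]
      exact gaux_swap _ f hxy.symm hxz.symm hyz
    · by_cases hy : y = inf
      · subst hy
        rw [uaux_i2 hxz hx hyz.symm, uaux_i1 hxz hx hyz.symm]
        exact gaux_swap _ f hyz.symm hx (Ne.symm hxz)
      · by_cases hz : z = inf
        · subst hz
          rw [uaux_i3 hxy hx hy, uaux_i3 (Ne.symm hxy) hy hx]
          exact gaux_swap _ f hx hy hxy
        · rw [uaux_ne hxy hyz hxz hx hy hz,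
            uaux_ne (Ne.symm hxy) hxz hyz hy hx hz]
          exact z2A _ _ _ _ (gaux_swap inf f hx hy hxy)
  · by_cases ht : t = inf
    · subst ht
      rw [uaux_i1 hxy htx.symm hty.symm, uaux_i1 hxz htx.symm htz.symm,
        uaux_i1 hyz hty.symm htz.symm, uaux_ne hxy hyz hxz htx.symm hty.symm htz.symm]
      exact z2C _ _ _
    · by_cases hx : x = inf
      · subst hx
        rw [uaux_i2 hty ht hxy.symm, uaux_i2 htz ht hxz.symm,
          uaux_ne hty hyz htz ht hxy.symm hxz.symm, uaux_i1 hyz hxy.symm hxz.symm]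
        exact z2D _ _ _ _ _ (gaux_swap _ f ht hxy.symm hty) (gaux_swap _ f ht hxz.symm htz)
      · by_cases hy : y = inf
        · subst hy
          rw [uaux_i3 htx ht hx, uaux_ne htx hxz htz ht hx hyz.symm,
            uaux_i2 htz ht hyz.symm, uaux_i2 hxz hx hyz.symm]
          exact z2E _ _ _ _ _ (gaux_swap _ f ht hyz.symm htz) (gaux_swap _ f hx hyz.symm hxz)
        · by_cases hz : z = inf
          · subst hz
            rw [uaux_ne htx hxy hty ht hx hy, uaux_i3 htx ht hx, uaux_i3 hty ht hy,
              uaux_i3 hxy hx hy]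
            exact z2G _ _ _
          · rw [uaux_ne htx hxy hty ht hx hy, uaux_ne htx hxz htz ht hx hz,
              uaux_ne hty hyz htz ht hy hz, uaux_ne hxy hyz hxz hx hy hz]
            exact z2F _ _ _ _ _ _

lemma uaux_restrict (inf : X) (f : {p : X × X // p.1 ≠ inf ∧ p.2 ≠ inf ∧ p.1 < p.2} → ZMod 2)
    (p : {p : X × X // p.1 ≠ inf ∧ p.2 ≠ inf ∧ p.1 < p.2}) :
    uaux inf f inf p.1.1 p.1.2 = f p := by
  rw [uaux_i1 p.2.2.2.ne p.2.1 p.2.2.1]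
  rw [gaux, dif_pos p.2]

lemma memU.zz1 {u : X → X → X → ZMod 2} (h : memU u) (x y : X) : u x y x = 0 :=
  ((h.2.1 x y x).trans (h.2.1 y x x)).trans (h.1 x y)

lemma memU.zz2 {u : X → X → X → ZMod 2} (h : memU u) (x y : X) : u x y y = 0 :=
  (h.2.1 x y y).trans (h.1 y x)

lemma memU.swap_inf {u : X → X → X → ZMod 2} (h : memU u) {inf a b : X}
    (ha : a ≠ inf) (hb : b ≠ inf) (hab : a ≠ b) : u inf a b + u inf b a = 1 := by
  have e1 : u a b inf = u inf a b := (h.2.1 a b inf).trans (h.2.1 b inf a)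
  have e2 : u b a inf = u inf b a := (h.2.1 b a inf).trans (h.2.1 a inf b)
  rw [← e1, ← e2]
  exact h.2.2.1 a b inf hab hb ha

lemma memU_ext {inf : X} {u v : X → X → X → ZMod 2} (hu : memU u) (hv : memU v)
    (hT : ∀ p : {p : X × X // p.1 ≠ inf ∧ p.2 ≠ inf ∧ p.1 < p.2},
      u inf p.1.1 p.1.2 = v inf p.1.1 p.1.2) : u = v := by
  have key : ∀ a b, a ≠ inf → b ≠ inf → u inf a b = v inf a b := by
    intro a b ha hb
    rcases lt_trichotomy a b with hab | hab | hab
    · exact hT ⟨(a, b), ha, hb, hab⟩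
    · subst hab; rw [hu.zz2, hv.zz2]
    · have h1 := hu.swap_inf ha hb hab.ne'
      have h2 := hv.swap_inf ha hb hab.ne'
      have h3 : u inf b a = v inf b a := hT ⟨(b, a), hb, ha, hab⟩
      rw [h3] at h1
      exact add_right_cancel (h1.trans h2.symm)
  funext x y z
  by_cases hxy : x = y
  · subst hxy; rw [hu.1, hv.1]
  by_cases hyz : y = z
  · subst hyz; rw [hu.zz2, hv.zz2]
  by_cases hxz : x = z
  · subst hxz; rw [hu.zz1, hv.zz1]
  by_cases hx : x = inf
  · subst hx; exact key y z (Ne.symm hxy) (Ne.symm hxz)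
  by_cases hy : y = inf
  · subst hy
    rw [hu.2.1 x y z, hv.2.1 x y z]
    exact key z x (Ne.symm hyz) hx
  by_cases hz : z = inf
  · subst hz
    rw [(hu.2.1 x y z).trans (hu.2.1 y z x), (hv.2.1 x y z).trans (hv.2.1 y z x)]
    exact key x y hx hy
  · have h1 := hu.2.2.2 inf x y z (Ne.symm hx) (Ne.symm hy) (Ne.symm hz) hxy hxz hyz
    have h2 := hv.2.2.2 inf x y z (Ne.symm hx) (Ne.symm hy) (Ne.symm hz) hxy hxz hyz
    rw [key x y hx hy, key x z hx hz, key y z hy hz] at h1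
    exact add_left_cancel (h1.trans h2.symm)

lemma card_lt_pairs (s : Finset X) :
    (Finset.filter (fun p : X × X => p.1 < p.2) (s ×ˢ s)).card = s.card.choose 2 := by
  classical
  have himg : (Finset.filter (fun p : X × X => p.1 < p.2) (s ×ˢ s)).image Prod.swap
      = Finset.filter (fun p : X × X => p.2 < p.1) (s ×ˢ s) := by
    ext p
    simp only [Finset.mem_image, Finset.mem_filter, Finset.mem_product]
    constructor
    · rintro ⟨q, ⟨⟨h1, h2⟩, h3⟩, rfl⟩
      exact ⟨⟨h2, h1⟩, h3⟩
    · rintro ⟨⟨h1, h2⟩, h3⟩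
      exact ⟨p.swap, ⟨⟨h2, h1⟩, h3⟩, Prod.swap_swap p⟩
  have hcard2 : (Finset.filter (fun p : X × X => p.1 < p.2) (s ×ˢ s)).card
      = (Finset.filter (fun p : X × X => p.2 < p.1) (s ×ˢ s)).card := by
    rw [← himg, Finset.card_image_of_injective _ Prod.swap_injective]
  have hsplit : s.offDiag = Finset.filter (fun p : X × X => p.1 < p.2) (s ×ˢ s)
      ∪ Finset.filter (fun p : X × X => p.2 < p.1) (s ×ˢ s) := by
    ext p
    simp only [Finset.mem_offDiag, Finset.mem_union, Finset.mem_filter, Finset.mem_product]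
    constructor
    · rintro ⟨h1, h2, h3⟩
      rcases h3.lt_or_gt with h | h
      · exact Or.inl ⟨⟨h1, h2⟩, h⟩
      · exact Or.inr ⟨⟨h1, h2⟩, h⟩
    · rintro (⟨⟨h1, h2⟩, h⟩ | ⟨⟨h1, h2⟩, h⟩)
      · exact ⟨h1, h2, h.ne⟩
      · exact ⟨h1, h2, h.ne'⟩
  have hdisj : Disjoint (Finset.filter (fun p : X × X => p.1 < p.2) (s ×ˢ s))
      (Finset.filter (fun p : X × X => p.2 < p.1) (s ×ˢ s)) := by
    rw [Finset.disjoint_left]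
    intro p hp hq
    simp only [Finset.mem_filter] at hp hq
    exact absurd hq.2 hp.2.not_gt
  have hoff := Finset.offDiag_card s
  rw [hsplit, Finset.card_union_of_disjoint hdisj, ← hcard2] at hoff
  have hmul : s.card * (s.card - 1) + s.card = s.card * s.card := by
    rcases s.card with _ | n
    · simp
    · simp only [Nat.succ_sub_one]
      ring
  rw [Nat.choose_two_right]
  set a := (Finset.filter (fun p : X × X => p.1 < p.2) (s ×ˢ s)).card
  set P := s.card * s.card
  set Q := s.card * (s.card - 1)
  omega


end Aux

/-- Restriction of `𝒰^X` to the coordinates `T = {(∞,a,b) : a < b, a,b ≠ ∞}` is a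
bijection onto `GF(2)^T`; in particular `𝒰^X` is an affine space of dimension
`(n-1 choose 2)`, i.e. it has `2^((n-1).choose 2)` elements. -/
theorem stmt7 {X : Type*} [Fintype X] [LinearOrder X]
    (hn : 3 ≤ Fintype.card X) (inf : X) :
    Function.Bijective
      (fun (u : {u : X → X → X → ZMod 2 // memU u})
          (p : {p : X × X // p.1 ≠ inf ∧ p.2 ≠ inf ∧ p.1 < p.2}) =>
        u.1 inf p.1.1 p.1.2) ∧
    {u : X → X → X → ZMod 2 | memU u}.ncard = 2 ^ ((Fintype.card X - 1).choose 2) := by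
  classical
  have hbij : Function.Bijective
      (fun (u : {u : X → X → X → ZMod 2 // memU u})
          (p : {p : X × X // p.1 ≠ inf ∧ p.2 ≠ inf ∧ p.1 < p.2}) =>
        u.1 inf p.1.1 p.1.2) := by
    constructor
    · intro u v h
      exact Subtype.ext (memU_ext u.2 v.2 fun p => congrFun h p)
    · intro f
      exact ⟨⟨uaux inf f, memU_uaux inf f⟩, funext (uaux_restrict inf f)⟩
  refine ⟨hbij, ?_⟩
  have hT : Fintype.card {p : X × X // p.1 ≠ inf ∧ p.2 ≠ inf ∧ p.1 < p.2}
      = (Fintype.card X - 1).choose 2 := by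
    rw [Fintype.card_subtype]
    have hset : Finset.filter (fun p : X × X => p.1 ≠ inf ∧ p.2 ≠ inf ∧ p.1 < p.2) Finset.univ
        = Finset.filter (fun p : X × X => p.1 < p.2)
            ((Finset.univ.erase inf) ×ˢ (Finset.univ.erase inf)) := by
      ext p
      simp only [Finset.mem_filter, Finset.mem_univ, true_and, Finset.mem_product,
        Finset.mem_erase]
      tauto
    rw [hset, card_lt_pairs, Finset.card_erase_of_mem (Finset.mem_univ _), Finset.card_univ]
  have h1 : {u : X → X → X → ZMod 2 | memU u}.ncard
      = Nat.card {u : X → X → X → ZMod 2 // memU u} := rfl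
  rw [h1, Nat.card_eq_of_bijective _ hbij, Nat.card_eq_fintype_card, Fintype.card_fun, hT]
  rfl
end

section
/- Let C be a cyclic ordering of a finite set X, let Y ⊆ X be consecutive in C, and let C' be the cyclic ordering obtained from C by reversing the order of the elements of Y. Then u^{C'} = u^C + v^Y in GF(2)^{X³}. -/
open Finset

lemma modsub (n u v : ℕ) (hn : 0 < n) (hu : u < n) (hv : v < n) :
    (v + n - u) % n = if u ≤ v then v - u else v + n - u := by
  split
  · have h : v + n - u = (v - u) + n := by omega
    rw [h, Nat.add_mod_right, Nat.mod_eq_of_lt (by omega)]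
  · rw [Nat.mod_eq_of_lt (by omega)]

lemma valsub {n : ℕ} (hn : 0 < n) (u v : ZMod n) :
    (u - v).val = (u.val + n - v.val) % n := by
  haveI : NeZero n := ⟨hn.ne'⟩
  have h1 : (u.val + n - v.val) % n < n := Nat.mod_lt _ hn
  have h2 : u - v = (((u.val + n - v.val) % n : ℕ) : ZMod n) := by
    rw [ZMod.natCast_mod, Nat.cast_sub (by have := ZMod.val_lt v; omega), Nat.cast_add,
      ZMod.natCast_rightInverse u, ZMod.natCast_rightInverse v, ZMod.natCast_self]
    ring
  rw [h2, ZMod.val_cast_of_lt h1]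

set_option maxHeartbeats 2000000 in
lemma key (n k a b c : ℕ) (hn : 0 < n) (hkn : k ≤ n) (ha : a < n) (hb : b < n) (hc : c < n)
    (hab : a ≠ b) (hbc : b ≠ c) (hac : a ≠ c) :
    (((if b < k then k-1-b else b) + n - (if a < k then k-1-a else a)) % n <
      ((if c < k then k-1-c else c) + n - (if a < k then k-1-a else a)) % n) ↔
    (((b + n - a) % n < (c + n - a) % n) ↔ ¬((a<k∧b<k)∨(a<k∧c<k)∨(b<k∧c<k))) := by
  have ra : (if a < k then k-1-a else a) < n := by split <;> omega
  have rb : (if b < k then k-1-b else b) < n := by split <;> omega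
  have rc : (if c < k then k-1-c else c) < n := by split <;> omega
  rw [modsub n _ _ hn ra rb, modsub n _ _ hn ra rc, modsub n _ _ hn ha hb,
    modsub n _ _ hn ha hc]
  split_ifs <;> omega

lemma final (d1 d2 d3 P P' Q : Prop) [Decidable d1] [Decidable d2] [Decidable d3]
    [Decidable P] [Decidable P'] [Decidable Q]
    (h : P' ↔ (P ↔ ¬Q)) (h1 : d1) (h2 : d2) (h3 : d3) :
    (if d1 ∧ d2 ∧ d3 ∧ P' then (1 : ZMod 2) else 0) =
      (if d1 ∧ d2 ∧ d3 ∧ P then 1 else 0) + (if (d1 ∧ d2 ∧ d3) ∧ Q then 1 else 0) := by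
  by_cases hP : P <;> by_cases hQ : Q
  · rw [if_neg (by tauto), if_pos (by tauto), if_pos (by tauto)]; decide
  · rw [if_pos (by tauto), if_pos (by tauto), if_neg (by tauto)]; decide
  · rw [if_pos (by tauto), if_neg (by tauto), if_pos (by tauto)]; decide
  · rw [if_neg (by tauto), if_neg (by tauto), if_neg (by tauto)]; decide

/-- If `Y` is consecutive in a cyclic ordering `C` (say occupying, after rotating by `s`,
the positions `0, …, |Y|-1`) and `C'` arises from `C` by reversing `Y`, then
`u^{C'} = u^C + v^Y`. -/
theorem stmt9 {X : Type*} [Fintype X] [DecidableEq X]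
    (C C' : X ≃ ZMod (Fintype.card X)) (Y : Finset X) (s : ZMod (Fintype.card X))
    (hcons : ∀ x : X, x ∈ Y ↔ (C x - s).val < Y.card)
    (hrev : ∀ x : X, C' x =
      if x ∈ Y then s + ((Y.card : ZMod (Fintype.card X)) - 1) - (C x - s) else C x) :
    ∀ x y z : X, uC C' x y z = uC C x y z + vY Y x y z := by
  intro x y z
  have hn : 0 < Fintype.card X := Fintype.card_pos_iff.mpr ⟨x⟩
  haveI : NeZero (Fintype.card X) := ⟨hn.ne'⟩
  have hkn : Y.card ≤ Fintype.card X := Finset.card_le_univ Y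
  by_cases hxy : x = y
  · subst hxy; simp [uC, vY]
  by_cases hyz : y = z
  · subst hyz; simp [uC, vY]
  by_cases hxz : x = z
  · subst hxz; simp [uC, vY]
  have ha : (C x - s).val < Fintype.card X := ZMod.val_lt _
  have hb : (C y - s).val < Fintype.card X := ZMod.val_lt _
  have hc : (C z - s).val < Fintype.card X := ZMod.val_lt _
  have hinj : ∀ u v : X, (C u - s).val = (C v - s).val → u = v := by
    intro u v h
    have h2 := ZMod.val_injective _ h
    exact C.injective (by linear_combination h2)
  have hab : (C x - s).val ≠ (C y - s).val := fun h => hxy (hinj _ _ h)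
  have hbc : (C y - s).val ≠ (C z - s).val := fun h => hyz (hinj _ _ h)
  have hac : (C x - s).val ≠ (C z - s).val := fun h => hxz (hinj _ _ h)
  have hrval : ∀ u : X, (C' u - s).val =
      (if (C u - s).val < Y.card then Y.card - 1 - (C u - s).val else (C u - s).val) := by
    intro u
    by_cases hu : u ∈ Y
    · have h1 : (C u - s).val < Y.card := (hcons u).mp hu
      rw [if_pos h1]
      have h2 : C' u - s = ((Y.card - 1 - (C u - s).val : ℕ) : ZMod (Fintype.card X)) := by
        rw [hrev u, if_pos hu, Nat.cast_sub (by omega), Nat.cast_sub (by omega : 1 ≤ Y.card),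
          ZMod.natCast_rightInverse (C u - s)]
        push_cast
        ring
      rw [h2, ZMod.val_cast_of_lt (by omega)]
    · rw [if_neg (fun h => hu ((hcons u).mpr h)), hrev u, if_neg hu]
  have hsub : ∀ u v : X, (C u - C v).val =
      ((C u - s).val + Fintype.card X - (C v - s).val) % Fintype.card X := by
    intro u v
    rw [show C u - C v = (C u - s) - (C v - s) by ring, valsub hn]
  have hsub' : ∀ u v : X, (C' u - C' v).val =
      ((C' u - s).val + Fintype.card X - (C' v - s).val) % Fintype.card X := by
    intro u v
    rw [show C' u - C' v = (C' u - s) - (C' v - s) by ring, valsub hn]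
  have hK := key (Fintype.card X) Y.card (C x - s).val (C y - s).val (C z - s).val
    hn hkn ha hb hc hab hbc hac
  rw [uC, uC, vY]
  simp only [hsub, hsub', hrval, hcons]
  exact final _ _ _ _ _ _ hK hxy hyz hxz
end

section
/- Let C be a cyclic ordering of a finite set X and let Y ⊆ X. If the vector u^C + v^Y ∈ GF(2)^{X³} is cyclic (i.e., equals u^{C''} for some cyclic ordering C'' of X), then Y is consecutive in C, and moreover u^C + v^Y = u^{C'}, where C' arises from C by reversing Y. -/
open Finset

namespace Stmt10Aux

variable {n : ℕ} [NeZero n]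

lemma cast_val (a : ZMod n) : ((a.val : ℕ) : ZMod n) = a := ZMod.natCast_rightInverse a

/-- `rel3 a b c` : going clockwise from `a`, we meet `b` before `c`. -/
def rel3 (a b c : ZMod n) : Prop := (b - a).val < (c - a).val

lemma val_sub_comm (a b : ZMod n) (h : a ≠ b) : (a - b).val + (b - a).val = n := by
  have h0 : a - b ≠ 0 := sub_ne_zero.mpr h
  have h1 : b - a = -(a - b) := by ring
  have h2 : (a - b).val < n := ZMod.val_lt _
  have h3 : (a - b).val ≠ 0 := fun hh => h0 ((ZMod.val_eq_zero _).mp hh)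
  rw [h1, ZMod.neg_val, if_neg h0]
  omega

lemma val_ne_zero_of_ne {a b : ZMod n} (h : a ≠ b) : (b - a).val ≠ 0 := by
  intro hh
  exact h (sub_eq_zero.mp ((ZMod.val_eq_zero _).mp hh)).symm

lemma sum3_iff (a b c : ZMod n) (hab : a ≠ b) (hbc : b ≠ c) (hac : a ≠ c) :
    rel3 a b c ↔ (b-a).val + (c-b).val + (a-c).val = n := by
  have h1 : (b - a) + (c - b) = c - a := by ring
  have h2 : ((b-a) + (c-b)).val = ((b-a).val + (c-b).val) % n := ZMod.val_add _ _
  rw [h1] at h2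
  have hx : (b-a).val < n := ZMod.val_lt _
  have hy : (c-b).val < n := ZMod.val_lt _
  have hz : (c-a).val < n := ZMod.val_lt _
  have hm : (c-a).val + (a-c).val = n := val_sub_comm c a (Ne.symm hac)
  have hy0 : (c-b).val ≠ 0 := val_ne_zero_of_ne hbc
  have hx0 : (b-a).val ≠ 0 := val_ne_zero_of_ne hab
  unfold rel3
  rcases lt_or_ge ((b-a).val + (c-b).val) n with h | h
  · rw [Nat.mod_eq_of_lt h] at h2; omega
  · rw [Nat.mod_eq_sub_mod h, Nat.mod_eq_of_lt (by omega)] at h2; omega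

lemma sum3_or (a b c : ZMod n) (hab : a ≠ b) (hbc : b ≠ c) (hac : a ≠ c) :
    (b-a).val + (c-b).val + (a-c).val = n ∨ (b-a).val + (c-b).val + (a-c).val = 2*n := by
  have h1 : (b - a) + (c - b) = c - a := by ring
  have h2 : ((b-a) + (c-b)).val = ((b-a).val + (c-b).val) % n := ZMod.val_add _ _
  rw [h1] at h2
  have hx : (b-a).val < n := ZMod.val_lt _
  have hy : (c-b).val < n := ZMod.val_lt _
  have hz : (c-a).val < n := ZMod.val_lt _
  have hm : (c-a).val + (a-c).val = n := val_sub_comm c a (Ne.symm hac)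
  rcases lt_or_ge ((b-a).val + (c-b).val) n with h | h
  · rw [Nat.mod_eq_of_lt h] at h2; omega
  · rw [Nat.mod_eq_sub_mod h, Nat.mod_eq_of_lt (by omega)] at h2; omega

lemma rel3_cycle (a b c : ZMod n) (hab : a ≠ b) (hbc : b ≠ c) (hac : a ≠ c) :
    rel3 a b c ↔ rel3 b c a := by
  rw [sum3_iff a b c hab hbc hac, sum3_iff b c a hbc (Ne.symm hac) (Ne.symm hab)]
  omega

lemma rel3_flip (a b c : ZMod n) (hab : a ≠ b) (hbc : b ≠ c) (hac : a ≠ c) :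
    rel3 a c b ↔ ¬ rel3 a b c := by
  rw [sum3_iff a b c hab hbc hac, sum3_iff a c b hac (Ne.symm hbc) hab]
  have o1 := sum3_or a b c hab hbc hac
  have o2 := sum3_or a c b hac (Ne.symm hbc) hab
  have e1 := val_sub_comm a b hab
  have e2 := val_sub_comm b c hbc
  have e3 := val_sub_comm a c hac
  have hn : n ≠ 0 := NeZero.ne n
  omega

variable (s : ZMod n) (k : ℕ)

/-- reflection of the arc `[s, s+k)`. -/
def garc (p : ZMod n) : ZMod n := s + ((k : ZMod n) - 1) - (p - s)

lemma garc_val (hk : k ≤ n) (p : ZMod n) (hp : (p - s).val < k) :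
    (garc s k p - s).val = k - 1 - (p - s).val := by
  have hk1 : 1 ≤ k := by omega
  have hv : ((p - s).val : ZMod n) = p - s := cast_val _
  have h1 : ((k - 1 - (p-s).val : ℕ) : ZMod n) = (k : ZMod n) - 1 - (p - s) := by
    rw [Nat.cast_sub (by omega : (p-s).val ≤ k - 1), Nat.cast_sub hk1, Nat.cast_one, hv]
  have h2 : garc s k p - s = ((k - 1 - (p-s).val : ℕ) : ZMod n) := by
    rw [h1]; unfold garc; ring
  rw [h2, ZMod.val_cast_of_lt (by omega : k - 1 - (p-s).val < n)]

lemma garc_inj {p q : ZMod n} (h : garc s k p = garc s k q) : p = q := by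
  have h2 : garc s k p - garc s k q = q - p := by unfold garc; ring
  rw [h, sub_self] at h2
  exact (sub_eq_zero.mp h2.symm).symm

lemma garc_garc (p : ZMod n) : garc s k (garc s k p) = p := by unfold garc; ring

lemma val_sub_outside (hk : k ≤ n) {p w : ZMod n} (hp : (p - s).val < k)
    (hw : k ≤ (w - s).val) : (p - w).val = (p - s).val + (n - (w - s).val) := by
  have hws : w ≠ s := by
    intro h; subst h; rw [sub_self] at hw; simp [ZMod.val_zero] at hw; omega
  have hc := val_sub_comm s w (Ne.symm hws)
  have hlt : (w - s).val < n := ZMod.val_lt _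
  have h2 : p - w = (p - s) + (s - w) := by ring
  rw [h2, ZMod.val_add, Nat.mod_eq_of_lt (by omega)]
  omega

lemma arc_ne_nonarc {p w : ZMod n} (hp : (p - s).val < k) (hw : k ≤ (w - s).val) : p ≠ w := by
  intro h; subst h; omega

lemma rel3_const_base (hk : k ≤ n) {w1 w2 p q : ZMod n}
    (hw1 : k ≤ (w1 - s).val) (hw2 : k ≤ (w2 - s).val) (hw12 : w1 ≠ w2)
    (hp : (p - s).val < k) (hq : (q - s).val < k) :
    (rel3 w1 w2 p ↔ rel3 w1 w2 q) := by
  have c1 : (p - w1).val = (p - s).val + (n - (w1 - s).val) := val_sub_outside s k hk hp hw1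
  have c2 : (q - w1).val = (q - s).val + (n - (w1 - s).val) := val_sub_outside s k hk hq hw1
  have hw1lt : (w1 - s).val < n := ZMod.val_lt _
  have hclaim : (w2 - w1).val < n - (w1 - s).val ∨ n - (w1 - s).val + k ≤ (w2 - w1).val := by
    by_contra hcon
    push_neg at hcon
    obtain ⟨h1, h2⟩ := hcon
    set d := (w2 - w1).val with hd
    have e0 : w2 - s = ((d : ℕ) : ZMod n) + (((w1 - s).val : ℕ) : ZMod n) := by
      rw [cast_val, cast_val]; ring
    have e1 : w2 - s = ((d + (w1 - s).val : ℕ) : ZMod n) := by rw [Nat.cast_add, e0]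
    have e2 : (d + (w1 - s).val : ℕ) = (d - (n - (w1 - s).val)) + n := by omega
    have e3 : w2 - s = ((d - (n - (w1 - s).val) : ℕ) : ZMod n) := by
      rw [e1, e2, Nat.cast_add, ZMod.natCast_self, add_zero]
    have e4 : (w2 - s).val = d - (n - (w1 - s).val) := by
      rw [e3, ZMod.val_cast_of_lt (by omega)]
    omega
  unfold rel3
  rw [c1, c2]
  rcases hclaim with h | h <;> constructor <;> intro <;> omega

lemma rel3_two_flip (hk : k ≤ n) {w p q : ZMod n}
    (hw : k ≤ (w - s).val) (hp : (p - s).val < k) (hq : (q - s).val < k) (hpq : p ≠ q) :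
    (rel3 w (garc s k p) (garc s k q) ↔ ¬ rel3 w p q) := by
  have hgp := garc_val s k hk p hp
  have hgq := garc_val s k hk q hq
  have hgp' : (garc s k p - s).val < k := by omega
  have hgq' : (garc s k q - s).val < k := by omega
  have h1 := val_sub_outside s k hk hgp' hw
  have h2 := val_sub_outside s k hk hgq' hw
  have h3 := val_sub_outside s k hk hp hw
  have h4 := val_sub_outside s k hk hq hw
  have hne : (p - s).val ≠ (q - s).val := by
    intro h
    apply hpq
    have := congrArg (Nat.cast : ℕ → ZMod n) h
    rw [cast_val, cast_val] at this
    exact sub_left_inj.mp this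
  unfold rel3
  rw [h1, h2, h3, h4, hgp, hgq]
  omega

lemma rel3_three_flip (hk : k ≤ n) {a b c : ZMod n} (hab : a ≠ b) (hbc : b ≠ c) (hac : a ≠ c)
    (ha : (a - s).val < k) (hb : (b - s).val < k) (hc : (c - s).val < k) :
    (rel3 (garc s k a) (garc s k b) (garc s k c) ↔ ¬ rel3 a b c) := by
  have gab : garc s k a ≠ garc s k b := fun h => hab (garc_inj s k h)
  have gbc : garc s k b ≠ garc s k c := fun h => hbc (garc_inj s k h)
  have gac : garc s k a ≠ garc s k c := fun h => hac (garc_inj s k h)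
  have e1 : garc s k b - garc s k a = a - b := by unfold garc; ring
  have e2 : garc s k c - garc s k b = b - c := by unfold garc; ring
  have e3 : garc s k a - garc s k c = c - a := by unfold garc; ring
  rw [sum3_iff _ _ _ gab gbc gac, ← rel3_flip a b c hab hbc hac,
    sum3_iff a c b hac (Ne.symm hbc) hab, e1, e2, e3]
  omega


set_option maxHeartbeats 1000000 in
lemma key_iff (hk : k ≤ n) {a b c : ZMod n} (hab : a ≠ b) (hbc : b ≠ c) (hac : a ≠ c) :
    rel3 (if (a-s).val < k then garc s k a else a)
         (if (b-s).val < k then garc s k b else b)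
         (if (c-s).val < k then garc s k c else c) ↔
    ((((a-s).val < k ∧ (b-s).val < k) ∨ ((a-s).val < k ∧ (c-s).val < k) ∨
      ((b-s).val < k ∧ (c-s).val < k)) ↔ ¬ rel3 a b c) := by
  have gin : ∀ p : ZMod n, (p-s).val < k → (garc s k p - s).val < k := fun p hp => by
    have := garc_val s k hk p hp; omega
  have gne : ∀ p q : ZMod n, p ≠ q → garc s k p ≠ garc s k q :=
    fun p q h hh => h (garc_inj s k hh)
  by_cases ha : (a-s).val < k
  · by_cases hb : (b-s).val < k
    · by_cases hc : (c-s).val < k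
      · -- TTT
        rw [if_pos ha, if_pos hb, if_pos hc]
        have hRR := rel3_three_flip s k hk hab hbc hac ha hb hc
        tauto
      · -- TTF
        rw [if_pos ha, if_pos hb, if_neg hc]
        have hc' := not_lt.mp hc
        have gab := gne a b hab
        have gbc' : garc s k b ≠ c := arc_ne_nonarc s k (gin b hb) hc'
        have gac' : garc s k a ≠ c := arc_ne_nonarc s k (gin a ha) hc'
        have i1 : rel3 (garc s k a) (garc s k b) c ↔ rel3 c (garc s k a) (garc s k b) :=
          (rel3_cycle _ _ _ gab gbc' gac').trans
            (rel3_cycle _ _ _ gbc' (Ne.symm gac') (Ne.symm gab))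
        have i2 : rel3 c (garc s k a) (garc s k b) ↔ ¬ rel3 c a b :=
          rel3_two_flip s k hk hc' ha hb hab
        have i3 : rel3 c a b ↔ rel3 a b c :=
          rel3_cycle c a b (Ne.symm hac) hab (Ne.symm hbc)
        have hRR := i1.trans (i2.trans (not_congr i3))
        tauto
    · by_cases hc : (c-s).val < k
      · -- TFT
        rw [if_pos ha, if_neg hb, if_pos hc]
        have hb' := not_lt.mp hb
        have i1 : rel3 (garc s k a) b (garc s k c) ↔ rel3 b (garc s k c) (garc s k a) :=
          rel3_cycle _ _ _ (arc_ne_nonarc s k (gin a ha) hb')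
            (Ne.symm (arc_ne_nonarc s k (gin c hc) hb')) (gne a c hac)
        have i2 : rel3 b (garc s k c) (garc s k a) ↔ ¬ rel3 b c a :=
          rel3_two_flip s k hk hb' hc ha (Ne.symm hac)
        have hRR := i1.trans (i2.trans (not_congr (rel3_cycle a b c hab hbc hac).symm))
        tauto
      · -- TFF
        rw [if_pos ha, if_neg hb, if_neg hc]
        have hb' := not_lt.mp hb
        have hc' := not_lt.mp hc
        have i1 : rel3 (garc s k a) b c ↔ rel3 b c (garc s k a) :=
          rel3_cycle _ _ _ (arc_ne_nonarc s k (gin a ha) hb') hbc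
            (arc_ne_nonarc s k (gin a ha) hc')
        have i2 : rel3 b c (garc s k a) ↔ rel3 b c a :=
          rel3_const_base s k hk hb' hc' hbc (gin a ha) ha
        have i3 : rel3 b c a ↔ rel3 a b c := (rel3_cycle a b c hab hbc hac).symm
        have hRR := i1.trans (i2.trans i3)
        tauto
  · have ha' := not_lt.mp ha
    by_cases hb : (b-s).val < k
    · by_cases hc : (c-s).val < k
      · -- FTT
        rw [if_neg ha, if_pos hb, if_pos hc]
        have hRR : rel3 a (garc s k b) (garc s k c) ↔ ¬ rel3 a b c :=
          rel3_two_flip s k hk ha' hb hc hbc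
        tauto
      · -- FTF
        rw [if_neg ha, if_pos hb, if_neg hc]
        have hc' := not_lt.mp hc
        have i1 : rel3 a (garc s k b) c ↔ rel3 (garc s k b) c a :=
          rel3_cycle _ _ _ (Ne.symm (arc_ne_nonarc s k (gin b hb) ha'))
            (arc_ne_nonarc s k (gin b hb) hc') hac
        have i2 : rel3 (garc s k b) c a ↔ rel3 c a (garc s k b) :=
          rel3_cycle _ _ _ (arc_ne_nonarc s k (gin b hb) hc')
            (Ne.symm hac) (arc_ne_nonarc s k (gin b hb) ha')
        have i3 : rel3 c a (garc s k b) ↔ rel3 c a b :=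
          rel3_const_base s k hk hc' ha' (Ne.symm hac) (gin b hb) hb
        have i4 : rel3 c a b ↔ rel3 a b c :=
          rel3_cycle c a b (Ne.symm hac) hab (Ne.symm hbc)
        have hRR := i1.trans (i2.trans (i3.trans i4))
        tauto
    · have hb' := not_lt.mp hb
      by_cases hc : (c-s).val < k
      · -- FFT
        rw [if_neg ha, if_neg hb, if_pos hc]
        have hRR : rel3 a b (garc s k c) ↔ rel3 a b c :=
          rel3_const_base s k hk ha' hb' hab (gin c hc) hc
        tauto
      · -- FFF
        rw [if_neg ha, if_neg hb, if_neg hc]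
        tauto

end Stmt10Aux

set_option maxHeartbeats 1000000 in
/-- If `u^C + v^Y` is cyclic, then `Y` is consecutive in `C`, and `u^C + v^Y = u^{C'}`
where `C'` arises from `C` by reversing `Y` (part of the proof of Lemma 4). -/
theorem stmt10 {X : Type*} [Fintype X] [DecidableEq X]
    (C : X ≃ ZMod (Fintype.card X)) (Y : Finset X)
    (hcyc : IsCyclicVec (fun x y z => uC C x y z + vY Y x y z)) :
    ∃ s : ZMod (Fintype.card X),
      (∀ x : X, x ∈ Y ↔ (C x - s).val < Y.card) ∧
      ∃ C' : X ≃ ZMod (Fintype.card X),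
        (∀ x : X, C' x =
          if x ∈ Y then s + ((Y.card : ZMod (Fintype.card X)) - 1) - (C x - s) else C x) ∧
        (fun x y z => uC C x y z + vY Y x y z) = uC C' := by
  classical
  obtain ⟨C2, hC2⟩ := hcyc
  have hn0 : Fintype.card X ≠ 0 := by
    intro h
    exact (Fintype.card_eq_zero_iff.mp h).false (C.symm 0)
  haveI : NeZero (Fintype.card X) := ⟨hn0⟩
  obtain ⟨s, hY⟩ : ∃ s : ZMod (Fintype.card X), ∀ x : X, x ∈ Y ↔ (C x - s).val < Y.card := by
    by_cases hYe : Y = ∅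
    · exact ⟨0, by simp [hYe]⟩
    by_cases hYu : Y = Finset.univ
    · exact ⟨0, fun x => by simp [hYu, Finset.card_univ, ZMod.val_lt]⟩
    have extract : ∀ p q r : X, uC C2 p q r = 1 → (C2 q - C2 p).val < (C2 r - C2 p).val := by
      intro p q r h
      unfold uC at h
      split_ifs at h with hcond
      · exact hcond.2.2.2
      · exact absurd h (by decide)
    have happ : ∀ p q r : X, uC C p q r + vY Y p q r = uC C2 p q r := fun p q r =>
      congrFun (congrFun (congrFun hC2 p) q) r
    have utrans : ∀ d a b c : X, d ≠ a → d ≠ b → d ≠ c → a ≠ b → a ≠ c → b ≠ c →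
        uC C d a b + vY Y d a b = 1 → uC C d b c + vY Y d b c = 1 →
        uC C d a c + vY Y d a c = 1 := by
      intro d a b c hda hdb hdc hab hac hbc h1 h2
      rw [happ] at h1 h2 ⊢
      have r1 := extract _ _ _ h1
      have r2 := extract _ _ _ h2
      unfold uC
      rw [if_pos ⟨hda, hac, hdc, lt_trans r1 r2⟩]
    obtain ⟨y₀, hy₀⟩ := Finset.nonempty_iff_ne_empty.mpr hYe
    obtain ⟨x₁, hx₁⟩ : ∃ x, x ∉ Y := by
      by_contra hcon
      push_neg at hcon
      exact hYu (Finset.eq_univ_iff_forall.mpr hcon)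
    have hwy : C x₁ ≠ C y₀ := fun h => hx₁ (by rw [C.injective h]; exact hy₀)
    have hPex : ∃ t : ℕ, C.symm (C x₁ + ((t + 1 : ℕ) : ZMod (Fintype.card X))) ∈ Y := by
      refine ⟨(C y₀ - C x₁).val - 1, ?_⟩
      have h1 : (C y₀ - C x₁).val ≠ 0 := Stmt10Aux.val_ne_zero_of_ne hwy
      have h2 : ((C y₀ - C x₁).val - 1 + 1 : ℕ) = (C y₀ - C x₁).val := by omega
      rw [h2, Stmt10Aux.cast_val]
      have h3 : C x₁ + (C y₀ - C x₁) = C y₀ := by ring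
      rw [h3, Equiv.symm_apply_apply]
      exact hy₀
    set t₀ := Nat.find hPex with ht₀
    have hspec := Nat.find_spec hPex
    set s := C x₁ + ((t₀ + 1 : ℕ) : ZMod (Fintype.card X)) with hs
    have hsY : C.symm s ∈ Y := hspec
    have hs1 : C.symm (s - 1) ∉ Y := by
      rcases Nat.eq_zero_or_pos t₀ with h0 | hpos
      · have he : s - 1 = C x₁ := by rw [hs, h0]; push_cast; ring
        rw [he, Equiv.symm_apply_apply]
        exact hx₁
      · have hmin := Nat.find_min hPex (show t₀ - 1 < t₀ by omega)
        have he : s - 1 = C x₁ + ((t₀ - 1 + 1 : ℕ) : ZMod (Fintype.card X)) := by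
          have h3 : t₀ - 1 + 1 = t₀ := by omega
          rw [hs, h3]; push_cast; ring
        rw [he]
        exact hmin
    set T : Finset ℕ := (Finset.range (Fintype.card X)).filter
      (fun t => C.symm (s + (t : ZMod (Fintype.card X))) ∈ Y) with hT
    have hmemT : ∀ t : ℕ, t ∈ T ↔
        (t < Fintype.card X ∧ C.symm (s + (t : ZMod (Fintype.card X))) ∈ Y) := by
      intro t
      rw [hT, Finset.mem_filter, Finset.mem_range]
    have hTcard : T.card = Y.card := by
      refine Finset.card_bij (fun t _ => C.symm (s + (t : ZMod (Fintype.card X)))) ?_ ?_ ?_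
      · intro t ht
        exact ((hmemT t).mp ht).2
      · intro t1 h1 t2 h2 he
        have e1 : s + ((t1:ℕ) : ZMod (Fintype.card X)) = s + ((t2:ℕ) : ZMod (Fintype.card X)) :=
          C.symm.injective he
        have e2 : ((t1:ℕ) : ZMod (Fintype.card X)) = ((t2:ℕ) : ZMod (Fintype.card X)) :=
          add_left_cancel e1
        have e3 := congrArg ZMod.val e2
        rwa [ZMod.val_cast_of_lt ((hmemT _).mp h1).1,
          ZMod.val_cast_of_lt ((hmemT _).mp h2).1] at e3
      · intro y hy
        refine ⟨(C y - s).val, (hmemT _).mpr ⟨ZMod.val_lt _, ?_⟩, ?_⟩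
        · rw [Stmt10Aux.cast_val]
          have h3 : s + (C y - s) = C y := by ring
          rw [h3, Equiv.symm_apply_apply]
          exact hy
        · show C.symm (s + (((C y - s).val : ℕ) : ZMod (Fintype.card X))) = y
          rw [Stmt10Aux.cast_val]
          have h3 : s + (C y - s) = C y := by ring
          rw [h3, Equiv.symm_apply_apply]
    have hdc : ∀ t1 t2 : ℕ, t1 ≤ t2 → t2 ∈ T → t1 ∈ T := by
      intro t1 t2 h12 ht2
      obtain ⟨ht2n, hct2⟩ := (hmemT t2).mp ht2
      have hn2 : t2 ≠ Fintype.card X - 1 := by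
        intro h
        apply hs1
        have he : s + ((t2:ℕ) : ZMod (Fintype.card X)) = s - 1 := by
          rw [h]
          have hcast : ((Fintype.card X - 1 : ℕ) : ZMod (Fintype.card X)) = -1 := by
            rw [Nat.cast_sub (by omega : 1 ≤ Fintype.card X), Nat.cast_one, ZMod.natCast_self]
            ring
          rw [hcast]
          ring
        rw [← he]
        exact hct2
      rcases eq_or_lt_of_le h12 with rfl | hlt
      · exact ht2
      rcases Nat.eq_zero_or_pos t1 with rfl | ht1pos
      · refine (hmemT 0).mpr ⟨by omega, ?_⟩
        simpa using hsY
      by_contra ht1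
      have hct1 : C.symm (s + ((t1:ℕ) : ZMod (Fintype.card X))) ∉ Y := by
        intro h
        exact ht1 ((hmemT t1).mpr ⟨by omega, h⟩)
      have hnn4 : t2 ≤ Fintype.card X - 2 := by omega
      set d := C.symm (s - 1) with hd
      set a := C.symm s with ha
      set b := C.symm (s + ((t1:ℕ) : ZMod (Fintype.card X))) with hb
      set c := C.symm (s + ((t2:ℕ) : ZMod (Fintype.card X))) with hc
      have hCd : C d = s - 1 := C.apply_symm_apply _
      have hCa : C a = s := C.apply_symm_apply _
      have hCb : C b = s + ((t1:ℕ) : ZMod (Fintype.card X)) := C.apply_symm_apply _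
      have hCc : C c = s + ((t2:ℕ) : ZMod (Fintype.card X)) := C.apply_symm_apply _
      have hne : ∀ (u v : X) (m : ℕ), 0 < m → m < Fintype.card X →
          C v - C u = ((m : ℕ) : ZMod (Fintype.card X)) → u ≠ v := by
        intro u v m hm0 hmn he h
        rw [h, sub_self] at he
        have h2 := congrArg ZMod.val he
        rw [ZMod.val_zero, ZMod.val_cast_of_lt hmn] at h2
        omega
      have eda : C a - C d = ((1 : ℕ) : ZMod (Fintype.card X)) := by
        rw [hCa, hCd]; push_cast; ring
      have edb : C b - C d = ((t1 + 1 : ℕ) : ZMod (Fintype.card X)) := by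
        rw [hCb, hCd]; push_cast; ring
      have edc : C c - C d = ((t2 + 1 : ℕ) : ZMod (Fintype.card X)) := by
        rw [hCc, hCd]; push_cast; ring
      have eab : C b - C a = ((t1 : ℕ) : ZMod (Fintype.card X)) := by
        rw [hCb, hCa]; push_cast; ring
      have eac : C c - C a = ((t2 : ℕ) : ZMod (Fintype.card X)) := by
        rw [hCc, hCa]; push_cast; ring
      have ebc : C c - C b = ((t2 - t1 : ℕ) : ZMod (Fintype.card X)) := by
        rw [hCc, hCb, Nat.cast_sub (le_of_lt hlt)]; ring
      have vda : (C a - C d).val = 1 := by rw [eda, ZMod.val_cast_of_lt (by omega)]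
      have vdb : (C b - C d).val = t1 + 1 := by rw [edb, ZMod.val_cast_of_lt (by omega)]
      have vdc : (C c - C d).val = t2 + 1 := by rw [edc, ZMod.val_cast_of_lt (by omega)]
      have hda : d ≠ a := hne d a 1 (by omega) (by omega) eda
      have hdb : d ≠ b := hne d b (t1+1) (by omega) (by omega) edb
      have hdcx : d ≠ c := hne d c (t2+1) (by omega) (by omega) edc
      have hab : a ≠ b := hne a b t1 (by omega) (by omega) eab
      have hac : a ≠ c := hne a c t2 (by omega) (by omega) eac
      have hbcx : b ≠ c := hne b c (t2 - t1) (by omega) (by omega) ebc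
      have u1 : uC C d a b + vY Y d a b = 1 := by
        have e1 : uC C d a b = 1 := by
          unfold uC
          rw [if_pos ⟨hda, hab, hdb, by rw [vda, vdb]; omega⟩]
        have e2 : vY Y d a b = 0 := by
          unfold vY
          rw [if_neg]
          rintro ⟨-, ⟨h,-⟩|⟨h,-⟩|⟨-,h⟩⟩
          · exact hs1 h
          · exact hs1 h
          · exact hct1 h
        rw [e1, e2]
        decide
      have u2 : uC C d b c + vY Y d b c = 1 := by
        have e1 : uC C d b c = 1 := by
          unfold uC
          rw [if_pos ⟨hdb, hbcx, hdcx, by rw [vdb, vdc]; omega⟩]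
        have e2 : vY Y d b c = 0 := by
          unfold vY
          rw [if_neg]
          rintro ⟨-, ⟨h,-⟩|⟨h,-⟩|⟨h,-⟩⟩
          · exact hs1 h
          · exact hs1 h
          · exact hct1 h
        rw [e1, e2]
        decide
      have u3 := utrans d a b c hda hdb hdcx hab hac hbcx u1 u2
      have e1 : uC C d a c = 1 := by
        unfold uC
        rw [if_pos ⟨hda, hac, hdcx, by rw [vda, vdc]; omega⟩]
      have e2 : vY Y d a c = 1 := by
        unfold vY
        rw [if_pos ⟨⟨hda, hac, hdcx⟩, Or.inr (Or.inr ⟨hsY, hct2⟩)⟩]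
      rw [e1, e2] at u3
      exact absurd u3 (by decide)
    have hinit : ∀ m : ℕ, m ∈ T ↔ m < T.card := by
      intro m
      constructor
      · intro hm
        have hsub : Finset.range (m+1) ⊆ T := by
          intro t ht
          exact hdc t m (Nat.lt_succ_iff.mp (Finset.mem_range.mp ht)) hm
        have hcard := Finset.card_le_card hsub
        rw [Finset.card_range] at hcard
        omega
      · intro hm
        by_contra hmT
        have hsub : T ⊆ Finset.range m := by
          intro t ht
          rw [Finset.mem_range]
          by_contra htm
          exact hmT (hdc m t (by omega) ht)
        have hcard := Finset.card_le_card hsub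
        rw [Finset.card_range] at hcard
        omega
    refine ⟨s, fun x => ?_⟩
    have hx : C.symm (s + (((C x - s).val : ℕ) : ZMod (Fintype.card X))) = x := by
      rw [Stmt10Aux.cast_val]
      have h3 : s + (C x - s) = C x := by ring
      rw [h3, Equiv.symm_apply_apply]
    rw [← hTcard, ← hinit ((C x - s).val), hmemT]
    constructor
    · intro h
      exact ⟨ZMod.val_lt _, by rw [hx]; exact h⟩
    · rintro ⟨-, h⟩
      rwa [hx] at h

  set k := Y.card with hkdef
  have hkn : k ≤ Fintype.card X := Finset.card_le_univ Y
  have hinv : Function.Involutive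
      (fun p : ZMod (Fintype.card X) => if (p - s).val < k then Stmt10Aux.garc s k p else p) := by
    intro p
    dsimp only
    by_cases hp : (p - s).val < k
    · have hga := Stmt10Aux.garc_val s k hkn p hp
      have hga' : (Stmt10Aux.garc s k p - s).val < k := by omega
      rw [if_pos hp, if_pos hga', Stmt10Aux.garc_garc]
    · rw [if_neg hp, if_neg hp]
  set C' : X ≃ ZMod (Fintype.card X) := C.trans (Function.Involutive.toPerm _ hinv) with hC'
  have hC'app : ∀ x, C' x =
      if (C x - s).val < k then Stmt10Aux.garc s k (C x) else C x := fun x => rfl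
  refine ⟨s, hY, C', fun x => ?_, ?_⟩
  · rw [hC'app]
    by_cases hx : x ∈ Y
    · rw [if_pos hx, if_pos ((hY x).mp hx)]
      rfl
    · rw [if_neg hx, if_neg (fun h => hx ((hY x).mpr h))]
  · funext x y z
    show uC C x y z + vY Y x y z = uC C' x y z
    by_cases hxy : x = y
    · subst hxy; simp [uC, vY]
    by_cases hyz : y = z
    · subst hyz; simp [uC, vY]
    by_cases hxz : x = z
    · subst hxz; simp [uC, vY]
    have hab : C x ≠ C y := fun h => hxy (C.injective h)
    have hbc : C y ≠ C z := fun h => hyz (C.injective h)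
    have hac : C x ≠ C z := fun h => hxz (C.injective h)
    have hu1 : uC C x y z = if Stmt10Aux.rel3 (C x) (C y) (C z) then 1 else 0 := by
      simp [uC, Stmt10Aux.rel3, hxy, hyz, hxz]
      split_ifs with h <;> simp only [h, ↓reduceIte]
    have hu2 : uC C' x y z = if Stmt10Aux.rel3 (C' x) (C' y) (C' z) then 1 else 0 := by
      simp [uC, Stmt10Aux.rel3, hxy, hyz, hxz]
      split_ifs with h <;> simp only [h, ↓reduceIte]
    have hv : vY Y x y z =
        if ((x ∈ Y ∧ y ∈ Y) ∨ (x ∈ Y ∧ z ∈ Y) ∨ (y ∈ Y ∧ z ∈ Y)) then 1 else 0 := by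
      simp [vY, hxy, hyz, hxz]
    rw [hu1, hu2, hv]
    have hmem : ∀ w : X, (w ∈ Y) ↔ (C w - s).val < k := fun w => hY w
    have key : Stmt10Aux.rel3 (C' x) (C' y) (C' z) ↔
        (((x ∈ Y ∧ y ∈ Y) ∨ (x ∈ Y ∧ z ∈ Y) ∨ (y ∈ Y ∧ z ∈ Y)) ↔
          ¬ Stmt10Aux.rel3 (C x) (C y) (C z)) := by
      rw [hC'app x, hC'app y, hC'app z]
      have hk := Stmt10Aux.key_iff s k hkn hab hbc hac
      rw [hk]
      constructor
      · intro h
        constructor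
        · intro hM
          apply h.mp
          rcases hM with ⟨h1,h2⟩|⟨h1,h2⟩|⟨h1,h2⟩
          · exact Or.inl ⟨(hmem _).mp h1, (hmem _).mp h2⟩
          · exact Or.inr (Or.inl ⟨(hmem _).mp h1, (hmem _).mp h2⟩)
          · exact Or.inr (Or.inr ⟨(hmem _).mp h1, (hmem _).mp h2⟩)
        · intro hR; apply h.mpr at hR
          rcases hR with ⟨h1,h2⟩|⟨h1,h2⟩|⟨h1,h2⟩
          · exact Or.inl ⟨(hmem _).mpr h1, (hmem _).mpr h2⟩
          · exact Or.inr (Or.inl ⟨(hmem _).mpr h1, (hmem _).mpr h2⟩)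
          · exact Or.inr (Or.inr ⟨(hmem _).mpr h1, (hmem _).mpr h2⟩)
      · intro h
        constructor
        · intro hM; apply h.mp
          rcases hM with ⟨h1,h2⟩|⟨h1,h2⟩|⟨h1,h2⟩
          · exact Or.inl ⟨(hmem _).mpr h1, (hmem _).mpr h2⟩
          · exact Or.inr (Or.inl ⟨(hmem _).mpr h1, (hmem _).mpr h2⟩)
          · exact Or.inr (Or.inr ⟨(hmem _).mpr h1, (hmem _).mpr h2⟩)
        · intro hR; apply h.mpr at hR
          rcases hR with ⟨h1,h2⟩|⟨h1,h2⟩|⟨h1,h2⟩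
          · exact Or.inl ⟨(hmem _).mp h1, (hmem _).mp h2⟩
          · exact Or.inr (Or.inl ⟨(hmem _).mp h1, (hmem _).mp h2⟩)
          · exact Or.inr (Or.inr ⟨(hmem _).mp h1, (hmem _).mp h2⟩)
    by_cases hM : ((x ∈ Y ∧ y ∈ Y) ∨ (x ∈ Y ∧ z ∈ Y) ∨ (y ∈ Y ∧ z ∈ Y))
    · by_cases hR : Stmt10Aux.rel3 (C x) (C y) (C z)
      · have hR' : ¬ Stmt10Aux.rel3 (C' x) (C' y) (C' z) := by
          rw [key]; intro h; exact (h.mp hM) hR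
        rw [if_pos hR, if_pos hM, if_neg hR']; decide
      · have hR' : Stmt10Aux.rel3 (C' x) (C' y) (C' z) := key.mpr (iff_of_true hM hR)
        rw [if_neg hR, if_pos hM, if_pos hR']; decide
    · by_cases hR : Stmt10Aux.rel3 (C x) (C y) (C z)
      · have hR' : Stmt10Aux.rel3 (C' x) (C' y) (C' z) :=
          key.mpr (iff_of_false hM (not_not_intro hR))
        rw [if_pos hR, if_neg hM, if_pos hR']; decide
      · have hR' : ¬ Stmt10Aux.rel3 (C' x) (C' y) (C' z) := by
          rw [key]; intro h; exact hM (h.mpr hR)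
        rw [if_neg hR, if_neg hM, if_neg hR']; decide
end

section
/- Let X be a finite set, C a cyclic ordering of X, and let S, T ⊆ X with 2 ≤ |S|,|T| ≤ |X|−2. Suppose that all four vectors u^C, u^C + v^S, u^C + v^T, and u^C + v^S + v^T in GF(2)^{X³} are cyclic. Then S and T do not cross, i.e., S ⊆ T, or T ⊆ S, or S ∩ T = ∅, or S ∪ T = X. -/
open Finset

/-- For any cyclic vector `u^C` and distinct `a,b,c,d`, the triple of values
`(u(a,b,c), u(a,b,d), u(a,c,d))` is never `(1,0,1)` nor `(0,1,0)`, by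
transitivity of comparison of positions measured from `a`. -/
lemma uC_not_bad {X : Type*} [Fintype X] [DecidableEq X] (C : X ≃ ZMod (Fintype.card X))
    {a b c d : X} (hab : a ≠ b) (hac : a ≠ c) (had : a ≠ d) (hbc : b ≠ c)
    (hbd : b ≠ d) (hcd : c ≠ d) :
    ¬ ((uC C a b c = 1 ∧ uC C a b d = 0 ∧ uC C a c d = 1) ∨
       (uC C a b c = 0 ∧ uC C a b d = 1 ∧ uC C a c d = 0)) := by
  have e1 : uC C a b c = if (C b - C a).val < (C c - C a).val then 1 else 0 := by
    simp [uC, hab, hbc, hac]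
  have e2 : uC C a b d = if (C b - C a).val < (C d - C a).val then 1 else 0 := by
    simp [uC, hab, hbd, had]
  have e3 : uC C a c d = if (C c - C a).val < (C d - C a).val then 1 else 0 := by
    simp [uC, hac, hcd, had]
  rw [e1, e2, e3]
  rintro (⟨h1, h2, h3⟩ | ⟨h1, h2, h3⟩) <;> split_ifs at h1 h2 h3 <;>
    first
      | exact absurd h1 (by decide)
      | exact absurd h2 (by decide)
      | exact absurd h3 (by decide)
      | omega

/-- Cross-freeness: if `u^C`, `u^C + v^S`, `u^C + v^T` and `u^C + v^S + v^T` are all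
cyclic, then `S` and `T` do not cross. -/
theorem stmt11 {X : Type*} [Fintype X] [DecidableEq X]
    (C : X ≃ ZMod (Fintype.card X)) (S T : Finset X)
    (hS1 : 2 ≤ S.card) (hS2 : S.card ≤ Fintype.card X - 2)
    (hT1 : 2 ≤ T.card) (hT2 : T.card ≤ Fintype.card X - 2)
    (h0 : IsCyclicVec (uC C))
    (h1 : IsCyclicVec (fun x y z => uC C x y z + vY S x y z))
    (h2 : IsCyclicVec (fun x y z => uC C x y z + vY T x y z))
    (h3 : IsCyclicVec (fun x y z => uC C x y z + vY S x y z + vY T x y z)) :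
    S ⊆ T ∨ T ⊆ S ∨ S ∩ T = ∅ ∨ S ∪ T = Finset.univ := by
  by_contra hcon
  push_neg at hcon
  obtain ⟨hST, hTS, hI, hU⟩ := hcon
  -- witnesses: a ∈ S ∩ T, b ∈ S \ T, c ∉ S ∪ T, d ∈ T \ S
  obtain ⟨b, hbS, hbT⟩ := Finset.not_subset.mp hST
  obtain ⟨d, hdT, hdS⟩ := Finset.not_subset.mp hTS
  obtain ⟨a, haI⟩ := hI
  obtain ⟨haS, haT⟩ := Finset.mem_inter.mp haI
  have hc : ∃ c, c ∉ S ∪ T := by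
    by_contra h
    push_neg at h
    exact hU (Finset.eq_univ_iff_forall.mpr h)
  obtain ⟨c, hc⟩ := hc
  have hcS : c ∉ S := fun h => hc (Finset.mem_union_left _ h)
  have hcT : c ∉ T := fun h => hc (Finset.mem_union_right _ h)
  -- the four points are pairwise distinct
  have hab : a ≠ b := fun h => hbT (h ▸ haT)
  have hac : a ≠ c := fun h => hcS (h ▸ haS)
  have had : a ≠ d := fun h => hdS (h ▸ haS)
  have hbc : b ≠ c := fun h => hcS (h ▸ hbS)
  have hbd : b ≠ d := fun h => hdS (h ▸ hbS)
  have hcd : c ≠ d := fun h => hcT (h.symm ▸ hdT)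
  -- values of vY S on the three triples
  have vS1 : vY S a b c = 1 := if_pos ⟨⟨hab, hbc, hac⟩, Or.inl ⟨haS, hbS⟩⟩
  have vS2 : vY S a b d = 1 := if_pos ⟨⟨hab, hbd, had⟩, Or.inl ⟨haS, hbS⟩⟩
  have vS3 : vY S a c d = 0 := by
    refine if_neg ?_
    rintro ⟨-, (⟨-, h⟩ | ⟨-, h⟩ | ⟨h, -⟩)⟩
    exacts [hcS h, hdS h, hcS h]
  have vT1 : vY T a b c = 0 := by
    refine if_neg ?_
    rintro ⟨-, (⟨-, h⟩ | ⟨-, h⟩ | ⟨h, -⟩)⟩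
    exacts [hbT h, hcT h, hbT h]
  have vT2 : vY T a b d = 1 := if_pos ⟨⟨hab, hbd, had⟩, Or.inr (Or.inl ⟨haT, hdT⟩)⟩
  have vT3 : vY T a c d = 1 := if_pos ⟨⟨hac, hcd, had⟩, Or.inr (Or.inl ⟨haT, hdT⟩)⟩
  -- the four "not-bad" constraints
  obtain ⟨C1, hC1⟩ := h1
  obtain ⟨C2, hC2⟩ := h2
  obtain ⟨C3, hC3⟩ := h3
  have K0 := uC_not_bad C hab hac had hbc hbd hcd
  have K1 := uC_not_bad C1 hab hac had hbc hbd hcd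
  have K2 := uC_not_bad C2 hab hac had hbc hbd hcd
  have K3 := uC_not_bad C3 hab hac had hbc hbd hcd
  have e11 := congrFun (congrFun (congrFun hC1 a) b) c
  have e12 := congrFun (congrFun (congrFun hC1 a) b) d
  have e13 := congrFun (congrFun (congrFun hC1 a) c) d
  have e21 := congrFun (congrFun (congrFun hC2 a) b) c
  have e22 := congrFun (congrFun (congrFun hC2 a) b) d
  have e23 := congrFun (congrFun (congrFun hC2 a) c) d
  have e31 := congrFun (congrFun (congrFun hC3 a) b) c
  have e32 := congrFun (congrFun (congrFun hC3 a) b) d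
  have e33 := congrFun (congrFun (congrFun hC3 a) c) d
  simp only [vS1, vS2, vS3, vT1, vT2, vT3] at e11 e12 e13 e21 e22 e23 e31 e32 e33
  rw [← e11, ← e12, ← e13] at K1
  rw [← e21, ← e22, ← e23] at K2
  rw [← e31, ← e32, ← e33] at K3
  have key : ∀ x y z : ZMod 2,
      ¬ ((x = 1 ∧ y = 0 ∧ z = 1) ∨ (x = 0 ∧ y = 1 ∧ z = 0)) →
      ¬ ((x + 1 = 1 ∧ y + 1 = 0 ∧ z + 0 = 1) ∨ (x + 1 = 0 ∧ y + 1 = 1 ∧ z + 0 = 0)) →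
      ¬ ((x + 0 = 1 ∧ y + 1 = 0 ∧ z + 1 = 1) ∨ (x + 0 = 0 ∧ y + 1 = 1 ∧ z + 1 = 0)) →
      ¬ ((x + 1 + 0 = 1 ∧ y + 1 + 1 = 0 ∧ z + 0 + 1 = 1) ∨
         (x + 1 + 0 = 0 ∧ y + 1 + 1 = 1 ∧ z + 0 + 1 = 0)) → False := by
    have two : ∀ t : ZMod 2, t = 0 ∨ t = 1 := by decide
    intro x y z
    rcases two x with rfl | rfl <;> rcases two y with rfl | rfl <;>
      rcases two z with rfl | rfl <;> decide
  exact key _ _ _ K0 K1 K2 K3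
end
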